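/- arXiv:2004.01070 — 4 statements merged into one kernel-verified Lean document; each statement's English description precedes it below -/
import Mathlib

section
/- Let 0 < ε ≤ 1 and let (u,n,v) be a classical solution of the reduced Klein–Gordon–Zakharov system (KGZSv) with sup_{t≥0} ‖u(t)‖_{H¹(ℝ)} ≤ ε. Let δ > 0, set λ(t) = t (log t)^{1+δ} for t ≥ 2, and let μ : [2,∞) → (0,∞) be a C¹ nondecreasing function with μ(t) ≥ λ(t) for all t ≥ 2. Then lim_{t→∞} ∫_{A(t)} ( (∂ₓu(t,x))² + u(t,x)² + (∂ₜu(t,x))² + n(t,x)² + v(t,x)² ) dx = 0, where A(t) = { x ∈ ℝ : μ(t) + λ(t)/4 ≤ |x| ≤ μ(t) + 3λ(t)/4 }. -/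
open MeasureTheory Filter Real Set

noncomputable section

/-- Partial derivative in the space variable `x` (real-valued). -/
def pdR (f : ℝ → ℝ → ℝ) : ℝ → ℝ → ℝ := fun t x => deriv (fun y => f t y) x

/-- Partial derivative in the time variable `t` (real-valued). -/
def pdtR (f : ℝ → ℝ → ℝ) : ℝ → ℝ → ℝ := fun t x => deriv (fun s => f s x) t

/-- `f` and all its derivatives are Schwartz in `x`, locally uniformly in `t`. -/
def SchwartzLocR (f : ℝ → ℝ → ℝ) : Prop :=
  ∀ j k l : ℕ, ∀ T : ℝ, ∃ C : ℝ, ∀ t x : ℝ, |t| ≤ T →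
    |x| ^ k * |pdR^[l] (pdtR^[j] f) t x| ≤ C

/-- Classical solution of the reduced Klein–Gordon–Zakharov system (KGZSv):
`uₜₜ - u_xx + u = -n u`, `nₜ + v_x = 0`, `vₜ + (n + u²)_x = 0`. -/
structure IsKGZSolution (u n v : ℝ → ℝ → ℝ) : Prop where
  smooth_u : ContDiff ℝ (⊤ : ℕ∞) fun p : ℝ × ℝ => u p.1 p.2
  smooth_n : ContDiff ℝ (⊤ : ℕ∞) fun p : ℝ × ℝ => n p.1 p.2
  smooth_v : ContDiff ℝ (⊤ : ℕ∞) fun p : ℝ × ℝ => v p.1 p.2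
  schwartz_u : SchwartzLocR u
  schwartz_n : SchwartzLocR n
  schwartz_v : SchwartzLocR v
  eq_u : ∀ t x : ℝ, pdtR (pdtR u) t x - pdR (pdR u) t x + u t x = -(n t x * u t x)
  eq_n : ∀ t x : ℝ, pdtR n t x + pdR v t x = 0
  eq_v : ∀ t x : ℝ, pdtR v t x + pdR (fun s y => n s y + (u s y) ^ 2) t x = 0

def Sm (f : ℝ → ℝ → ℝ) : Prop := ContDiff ℝ (⊤ : ℕ∞) fun p : ℝ × ℝ => f p.1 p.2

namespace Sm

variable {f : ℝ → ℝ → ℝ}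

lemma hasDerivAt_t (hf : Sm f) (t x : ℝ) :
    HasDerivAt (fun s => f s x) (fderiv ℝ (fun p : ℝ × ℝ => f p.1 p.2) (t, x) (1, 0)) t := by
  have h1 : HasFDerivAt (fun p : ℝ × ℝ => f p.1 p.2)
      (fderiv ℝ (fun p : ℝ × ℝ => f p.1 p.2) (t, x)) (t, x) :=
    (hf.differentiable (by simp) (t, x)).hasFDerivAt
  have h2 : HasDerivAt (fun s : ℝ => (s, x)) ((1 : ℝ), (0 : ℝ)) t := by
    simpa using ((hasDerivAt_id t).prodMk (hasDerivAt_const t x))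
  simpa [Function.comp_def] using h1.comp_hasDerivAt t h2

lemma hasDerivAt_x (hf : Sm f) (t x : ℝ) :
    HasDerivAt (fun y => f t y) (fderiv ℝ (fun p : ℝ × ℝ => f p.1 p.2) (t, x) (0, 1)) x := by
  have h1 : HasFDerivAt (fun p : ℝ × ℝ => f p.1 p.2)
      (fderiv ℝ (fun p : ℝ × ℝ => f p.1 p.2) (t, x)) (t, x) :=
    (hf.differentiable (by simp) (t, x)).hasFDerivAt
  have h2 : HasDerivAt (fun y : ℝ => (t, y)) ((0 : ℝ), (1 : ℝ)) x := by
    simpa using ((hasDerivAt_const x t).prodMk (hasDerivAt_id x))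
  simpa [Function.comp_def] using h1.comp_hasDerivAt x h2

lemma pdtR_eq (hf : Sm f) (t x : ℝ) :
    pdtR f t x = fderiv ℝ (fun p : ℝ × ℝ => f p.1 p.2) (t, x) (1, 0) :=
  (hf.hasDerivAt_t t x).deriv

lemma pdR_eq (hf : Sm f) (t x : ℝ) :
    pdR f t x = fderiv ℝ (fun p : ℝ × ℝ => f p.1 p.2) (t, x) (0, 1) :=
  (hf.hasDerivAt_x t x).deriv

lemma deriv_t (hf : Sm f) (t x : ℝ) :
    HasDerivAt (fun s => f s x) (pdtR f t x) t := by
  rw [hf.pdtR_eq]; exact hf.hasDerivAt_t t x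

lemma deriv_x (hf : Sm f) (t x : ℝ) :
    HasDerivAt (fun y => f t y) (pdR f t x) x := by
  rw [hf.pdR_eq]; exact hf.hasDerivAt_x t x

lemma fderiv_apply_sm (hf : Sm f) (w : ℝ × ℝ) :
    ContDiff ℝ (⊤ : ℕ∞) (fun p : ℝ × ℝ => fderiv ℝ (fun q : ℝ × ℝ => f q.1 q.2) p w) := by
  exact (ContinuousLinearMap.apply ℝ ℝ w).contDiff.comp (hf.fderiv_right (by simp))

lemma smooth_pdt (hf : Sm f) : Sm (_root_.pdtR f) := by
  have : (fun p : ℝ × ℝ => _root_.pdtR f p.1 p.2)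
      = fun p : ℝ × ℝ => fderiv ℝ (fun q : ℝ × ℝ => f q.1 q.2) p (1, 0) := by
    funext p; exact hf.pdtR_eq p.1 p.2
  rw [Sm, this]; exact hf.fderiv_apply_sm (1, 0)

lemma smooth_pdx (hf : Sm f) : Sm (_root_.pdR f) := by
  have : (fun p : ℝ × ℝ => _root_.pdR f p.1 p.2)
      = fun p : ℝ × ℝ => fderiv ℝ (fun q : ℝ × ℝ => f q.1 q.2) p (0, 1) := by
    funext p; exact hf.pdR_eq p.1 p.2
  rw [Sm, this]; exact hf.fderiv_apply_sm (0, 1)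

lemma cont (hf : Sm f) : Continuous (fun p : ℝ × ℝ => f p.1 p.2) := hf.continuous

/-- Clairaut. -/
lemma clairaut (hf : Sm f) (t x : ℝ) : _root_.pdR (_root_.pdtR f) t x = _root_.pdtR (_root_.pdR f) t x := by
  set F := fun p : ℝ × ℝ => f p.1 p.2 with hF
  set F' := fderiv ℝ F with hF'
  have hdF : ∀ᶠ y in nhds (t, x), HasFDerivAt F (F' y) y :=
    Filter.Eventually.of_forall fun y => (hf.differentiable (by simp) y).hasFDerivAt
  have hdF' : HasFDerivAt F' (fderiv ℝ F' (t, x)) (t, x) :=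
    ((hf.fderiv_right (m := (⊤ : ℕ∞)) (by simp)).differentiable (by simp) (t, x)).hasFDerivAt
  have hsym := second_derivative_symmetric_of_eventually_of_real hdF hdF'
  -- pdR (pdtR f) t x = fderiv F' (t,x) (0,1) (1,0)
  have h1 : _root_.pdR (_root_.pdtR f) t x = fderiv ℝ F' (t, x) (0, 1) (1, 0) := by
    have hc : HasDerivAt (fun y => _root_.pdtR f t y)
        (fderiv ℝ F' (t, x) (0, 1) (1, 0)) x := by
      have hcomp : HasDerivAt (fun y : ℝ => F' (t, y) (1, 0))
          ((ContinuousLinearMap.apply ℝ ℝ ((1:ℝ), (0:ℝ))).comp (fderiv ℝ F' (t, x)) (0, 1)) x := by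
        have h2 : HasDerivAt (fun y : ℝ => (t, y)) ((0 : ℝ), (1 : ℝ)) x := by
          simpa using ((hasDerivAt_const x t).prodMk (hasDerivAt_id x))
        exact (((ContinuousLinearMap.apply ℝ ℝ ((1:ℝ),(0:ℝ))).hasFDerivAt.comp (t, x)
          hdF').comp_hasDerivAt x h2)
      have : (fun y : ℝ => F' (t, y) (1, 0)) = fun y => _root_.pdtR f t y := by
        funext y; exact (hf.pdtR_eq t y).symm
      rw [this] at hcomp
      simpa using hcomp
    exact hc.deriv
  have h2 : _root_.pdtR (_root_.pdR f) t x = fderiv ℝ F' (t, x) (1, 0) (0, 1) := by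
    have hc : HasDerivAt (fun s => _root_.pdR f s x)
        (fderiv ℝ F' (t, x) (1, 0) (0, 1)) t := by
      have hcomp : HasDerivAt (fun s : ℝ => F' (s, x) (0, 1))
          ((ContinuousLinearMap.apply ℝ ℝ ((0:ℝ), (1:ℝ))).comp (fderiv ℝ F' (t, x)) (1, 0)) t := by
        have h2 : HasDerivAt (fun s : ℝ => (s, x)) ((1 : ℝ), (0 : ℝ)) t := by
          simpa using ((hasDerivAt_id t).prodMk (hasDerivAt_const t x))
        exact (((ContinuousLinearMap.apply ℝ ℝ ((0:ℝ),(1:ℝ))).hasFDerivAt.comp (t, x)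
          hdF').comp_hasDerivAt t h2)
      have : (fun s : ℝ => F' (s, x) (0, 1)) = fun s => _root_.pdR f s x := by
        funext s; exact (hf.pdR_eq s x).symm
      rw [this] at hcomp
      simpa using hcomp
    exact hc.deriv
  rw [h1, h2, hsym]

end Sm

/-- Bounded by `C/(1+x²)` locally uniformly in `t`. -/
def Bdd (g : ℝ → ℝ → ℝ) : Prop :=
  ∀ T : ℝ, ∃ C : ℝ, 0 ≤ C ∧ ∀ t x : ℝ, |t| ≤ T → (1 + x ^ 2) ^ 2 * |g t x| ≤ C

namespace Bdd

variable {g h : ℝ → ℝ → ℝ}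

lemma abs_le (hg : Bdd g) (T : ℝ) :
    ∃ C : ℝ, 0 ≤ C ∧ ∀ t x : ℝ, |t| ≤ T → |g t x| ≤ C := by
  obtain ⟨C, hC0, hC⟩ := hg T
  refine ⟨C, hC0, fun t x ht => ?_⟩
  have h1 : (1 : ℝ) ≤ (1 + x ^ 2) ^ 2 := by nlinarith [sq_nonneg x, sq_nonneg (x^2)]
  nlinarith [hC t x ht, abs_nonneg (g t x)]

lemma add (hg : Bdd g) (hh : Bdd h) : Bdd (fun t x => g t x + h t x) := by
  intro T
  obtain ⟨C, hC0, hC⟩ := hg T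
  obtain ⟨D, hD0, hD⟩ := hh T
  refine ⟨C + D, by linarith, fun t x ht => ?_⟩
  have h1 : (1 + x ^ 2) ^ 2 * |g t x + h t x| ≤ (1 + x ^ 2) ^ 2 * (|g t x| + |h t x|) := by
    have h2 := abs_add_le (g t x) (h t x)
    have h3 : (0:ℝ) ≤ (1 + x ^ 2) ^ 2 := by positivity
    nlinarith
  nlinarith [hC t x ht, hD t x ht]

lemma mul (hg : Bdd g) (hh : Bdd h) : Bdd (fun t x => g t x * h t x) := by
  intro T
  obtain ⟨C, hC0, hC⟩ := hg T
  obtain ⟨D, hD0, hD⟩ := (hh.abs_le T)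
  refine ⟨C * D, by positivity, fun t x ht => ?_⟩
  have h1 : (1 + x ^ 2) ^ 2 * |g t x * h t x| = ((1 + x ^ 2) ^ 2 * |g t x|) * |h t x| := by
    rw [abs_mul]; ring
  rw [h1]
  have h2 : (1 + x ^ 2) ^ 2 * |g t x| ≤ C := hC t x ht
  have h3 : |h t x| ≤ D := hD t x ht
  exact mul_le_mul h2 h3 (abs_nonneg _) hC0

lemma neg (hg : Bdd g) : Bdd (fun t x => -(g t x)) := by
  intro T
  obtain ⟨C, hC0, hC⟩ := hg T
  exact ⟨C, hC0, fun t x ht => by simpa using hC t x ht⟩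

lemma smul (c : ℝ) (hg : Bdd g) : Bdd (fun t x => c * g t x) := by
  intro T
  obtain ⟨C, hC0, hC⟩ := hg T
  refine ⟨|c| * C, by positivity, fun t x ht => ?_⟩
  rw [abs_mul]
  have := hC t x ht
  have h1 : (1 + x^2) ^ 2 * (|c| * |g t x|) = |c| * ((1 + x^2) ^ 2 * |g t x|) := by ring
  rw [h1]
  exact mul_le_mul_of_nonneg_left this (abs_nonneg c)

lemma sub (hg : Bdd g) (hh : Bdd h) : Bdd (fun t x => g t x - h t x) := by
  have := hg.add hh.neg
  simpa [sub_eq_add_neg] using this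

/-- integrability of a continuous slice of a `Bdd` function. -/
lemma integrable_slice (hg : Bdd g) (t : ℝ) (hc : Continuous (fun x => g t x)) :
    Integrable (fun x => g t x) := by
  obtain ⟨C, hC0, hC⟩ := hg |t|
  refine (integrable_inv_one_add_sq.const_mul C).mono (hc.aestronglyMeasurable) ?_
  refine Filter.Eventually.of_forall fun x => ?_
  have h1 : (0:ℝ) < 1 + x ^ 2 := by positivity
  have h2 := hC t x le_rfl
  rw [Real.norm_eq_abs, Real.norm_eq_abs]
  have h3 : |g t x| ≤ C / (1 + x ^ 2) := by
    rw [le_div_iff₀ h1]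
    have h6 : (1 + x ^ 2) ≤ (1 + x ^ 2) ^ 2 := by nlinarith [sq_nonneg x, sq_nonneg (x^2)]
    nlinarith [abs_nonneg (g t x)]
  have h4 : C * (1 + x ^ 2)⁻¹ = C / (1 + x^2) := by ring
  have h5 : |C * (1 + x ^ 2)⁻¹| = C * (1 + x^2)⁻¹ := by
    rw [abs_of_nonneg]; positivity
  rw [h5, h4]; exact h3

end Bdd

section CoV

lemma setIntegral_shift (f : ℝ → ℝ) (c : ℝ) :
    ∫ y in Ioi (0:ℝ), f (c + y) = ∫ x in Ioi c, f x := by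
  have h := (measurePreserving_add_right (volume : Measure ℝ) c).setIntegral_preimage_emb
    (MeasurableEquiv.addRight c).measurableEmbedding f (Ioi c)
  have hpre : (fun y : ℝ => y + c) ⁻¹' Ioi c = Ioi 0 := by
    ext y; simp [Set.mem_preimage]
  rw [show (∫ y in Ioi (0:ℝ), f (c + y)) = ∫ y in Ioi (0:ℝ), f (y + c) by
    congr 1; funext y; rw [add_comm]]
  rw [← hpre]
  exact h

lemma setIntegral_negshift (f : ℝ → ℝ) (c : ℝ) :
    ∫ y in Ioi (0:ℝ), f (-c - y) = ∫ x in Iic (-c), f x := by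
  have hmp : MeasurePreserving (fun y : ℝ => -(y + c)) volume volume :=
    (Measure.measurePreserving_neg volume).comp (measurePreserving_add_right volume c)
  have hemb : MeasurableEmbedding (fun y : ℝ => -(y + c)) :=
    (MeasurableEquiv.neg ℝ).measurableEmbedding.comp
      (MeasurableEquiv.addRight c).measurableEmbedding
  have h := hmp.setIntegral_preimage_emb hemb f (Iio (-c))
  have hpre : (fun y : ℝ => -(y + c)) ⁻¹' Iio (-c) = Ioi 0 := by
    ext y
    simp only [Set.mem_preimage, Set.mem_Iio, Set.mem_Ioi]
    constructor <;> intro hy <;> linarith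
  rw [hpre] at h
  have h2 : (∫ y in Ioi (0:ℝ), f (-c - y)) = ∫ y in Ioi (0:ℝ), f (-(y + c)) := by
    congr 1; funext y; ring_nf
  rw [h2, h]
  exact setIntegral_congr_set Iio_ae_eq_Iic

end CoV

lemma SchwartzLocR.bdd {f : ℝ → ℝ → ℝ} (hf : SchwartzLocR f) (j l : ℕ) :
    Bdd (pdR^[l] (pdtR^[j] f)) := by
  intro T
  obtain ⟨C0, h0⟩ := hf j 0 l T
  obtain ⟨C2, h2⟩ := hf j 2 l T
  obtain ⟨C4, h4⟩ := hf j 4 l T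
  refine ⟨|C0| + 2 * |C2| + |C4|, by positivity, fun t x ht => ?_⟩
  have e0 := h0 t x ht
  have e2 := h2 t x ht
  have e4 := h4 t x ht
  have hx2 : |x| ^ 2 = x ^ 2 := sq_abs x
  have hx4 : |x| ^ 4 = x ^ 4 := by
    rw [show (4:ℕ) = 2 * 2 from rfl, pow_mul, sq_abs, ← pow_mul]
  rw [pow_zero, one_mul] at e0
  rw [hx2] at e2
  rw [hx4] at e4
  have hg := abs_nonneg (pdR^[l] (pdtR^[j] f) t x)
  have l0 : |pdR^[l] (pdtR^[j] f) t x| ≤ |C0| := le_trans e0 (le_abs_self C0)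
  have l2 : x ^ 2 * |pdR^[l] (pdtR^[j] f) t x| ≤ |C2| := le_trans e2 (le_abs_self C2)
  have l4 : x ^ 4 * |pdR^[l] (pdtR^[j] f) t x| ≤ |C4| := le_trans e4 (le_abs_self C4)
  nlinarith [sq_nonneg x, sq_nonneg (x^2)]

namespace Sm

variable {f : ℝ → ℝ → ℝ}

lemma cont_slice_x (hf : Sm f) (t : ℝ) : Continuous (fun x => f t x) :=
  hf.cont.comp (continuous_const.prodMk continuous_id)

end Sm

namespace Bdd

variable {g : ℝ → ℝ → ℝ}

lemma congr' {h : ℝ → ℝ → ℝ} (hg : Bdd g) (he : ∀ t x, g t x = h t x) : Bdd h := by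
  intro T; obtain ⟨C, hC0, hC⟩ := hg T
  exact ⟨C, hC0, fun t x ht => by rw [← he t x]; exact hC t x ht⟩

/-- Composite bound: if `y ≤ |z|`, `0 ≤ y`, `|t| ≤ T` then `|g t z| ≤ C (1+y²)⁻¹`. -/
lemma comp_bound (hg : Bdd g) (T : ℝ) :
    ∃ C : ℝ, 0 ≤ C ∧ ∀ t z y : ℝ, |t| ≤ T → 0 ≤ y → y ≤ |z| →
      |g t z| ≤ C * (1 + y ^ 2)⁻¹ := by
  obtain ⟨C, hC0, hC⟩ := hg T
  refine ⟨C, hC0, fun t z y ht hy hyz => ?_⟩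
  have h1 : (0:ℝ) < 1 + y ^ 2 := by positivity
  have h2 : (1 + y ^ 2) ≤ (1 + z ^ 2) ^ 2 := by
    have : y ^ 2 ≤ z ^ 2 := by
      have := sq_abs z
      nlinarith [abs_nonneg z]
    nlinarith [sq_nonneg z, sq_nonneg (z^2)]
  have h3 := hC t z ht
  have h4 : (1 + y ^ 2) * |g t z| ≤ C :=
    le_trans (mul_le_mul_of_nonneg_right h2 (abs_nonneg _)) h3
  rw [show C * (1 + y ^ 2)⁻¹ = C / (1 + y ^ 2) by ring, le_div_iff₀ h1]
  nlinarith

end Bdd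

lemma integrableOn_of_bound {φ : ℝ → ℝ} {s : Set ℝ} (hs : MeasurableSet s) (hc : Continuous φ)
    {C : ℝ} (hC0 : 0 ≤ C) (hb : ∀ y ∈ s, |φ y| ≤ C * (1 + y ^ 2)⁻¹) : IntegrableOn φ s := by
  refine Integrable.mono ((integrable_inv_one_add_sq.const_mul C).restrict)
    hc.aestronglyMeasurable.restrict ?_
  rw [ae_restrict_iff' hs]
  refine Filter.Eventually.of_forall fun y hy => ?_
  have h1 : ‖C * (1 + y ^ 2)⁻¹‖ = C * (1 + y ^ 2)⁻¹ := by
    rw [Real.norm_eq_abs, abs_of_nonneg]; positivity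
  rw [Real.norm_eq_abs, h1]
  exact hb y hy

lemma tendsto_inv_one_add_sq_atTop : Tendsto (fun y : ℝ => (1 + y ^ 2)⁻¹) atTop (nhds 0) := by
  apply tendsto_inv_atTop_zero.comp
  exact tendsto_atTop_add_const_left _ 1 (tendsto_pow_atTop two_ne_zero)

lemma tendsto_inv_one_add_sq_atBot : Tendsto (fun y : ℝ => (1 + y ^ 2)⁻¹) atBot (nhds 0) := by
  apply tendsto_inv_atTop_zero.comp
  apply tendsto_atTop_add_const_left
  have h : (fun y : ℝ => y ^ 2) = (fun z : ℝ => z ^ 2) ∘ fun y : ℝ => |y| := by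
    funext y; simp [sq_abs]
  rw [h]
  exact (tendsto_pow_atTop two_ne_zero).comp tendsto_abs_atBot_atTop

lemma tendsto_zero_of_bound_atTop {φ : ℝ → ℝ} {C : ℝ}
    (hb : ∀ᶠ y in atTop, |φ y| ≤ C * (1 + y ^ 2)⁻¹) : Tendsto φ atTop (nhds 0) := by
  refine squeeze_zero_norm' (by simpa [Real.norm_eq_abs] using hb) ?_
  simpa using tendsto_inv_one_add_sq_atTop.const_mul C

lemma tendsto_zero_of_bound_atBot {φ : ℝ → ℝ} {C : ℝ}
    (hb : ∀ᶠ y in atBot, |φ y| ≤ C * (1 + y ^ 2)⁻¹) : Tendsto φ atBot (nhds 0) := by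
  refine squeeze_zero_norm' (by simpa [Real.norm_eq_abs] using hb) ?_
  simpa using tendsto_inv_one_add_sq_atBot.const_mul C

namespace Sm

variable {g : ℝ → ℝ → ℝ}

lemma cone_deriv (hg : Sm g) (c σ y t : ℝ) :
    HasDerivAt (fun s => g s (c + σ * s + y))
      (pdtR g t (c + σ * t + y) + σ * pdR g t (c + σ * t + y)) t := by
  have hcurve : HasDerivAt (fun s : ℝ => (s, c + σ * s + y)) ((1 : ℝ), σ) t := by
    have h0 := (hasDerivAt_id t).prodMk ((((hasDerivAt_id t).const_mul σ).const_add c).add_const y)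
    simpa using h0
  have h := ((hg.differentiable (by simp) (t, c + σ * t + y)).hasFDerivAt).comp_hasDerivAt t hcurve
  have hv : ((1:ℝ), σ) = ((1:ℝ), (0:ℝ)) + σ • ((0:ℝ), (1:ℝ)) := by
    simp [Prod.ext_iff]
  rw [hv] at h
  simp only [_root_.map_add, _root_.map_smul, smul_eq_mul] at h
  rw [hg.pdtR_eq, hg.pdR_eq]
  simpa [smul_eq_mul, Function.comp_def] using h

lemma cone_deriv_neg (hg : Sm g) (c σ y t : ℝ) :
    HasDerivAt (fun s => g s (-(c + σ * s) - y))
      (pdtR g t (-(c + σ * t) - y) - σ * pdR g t (-(c + σ * t) - y)) t := by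
  have hcurve : HasDerivAt (fun s : ℝ => (s, -(c + σ * s) - y)) ((1 : ℝ), -σ) t := by
    refine (hasDerivAt_id t).prodMk ?_
    have h1 : HasDerivAt (fun s : ℝ => -(c + σ * s) - y) (-σ) t := by
      have := ((((hasDerivAt_id t).const_mul σ).const_add c).neg).add_const (-y)
      simpa [sub_eq_add_neg] using this
    exact h1
  have h := ((hg.differentiable (by simp) (t, -(c + σ * t) - y)).hasFDerivAt).comp_hasDerivAt t hcurve
  have hv : ((1:ℝ), -σ) = ((1:ℝ), (0:ℝ)) + (-σ) • ((0:ℝ), (1:ℝ)) := by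
    simp [Prod.ext_iff]
  rw [hv] at h
  simp only [_root_.map_add, _root_.map_smul, smul_eq_mul] at h
  rw [hg.pdtR_eq, hg.pdR_eq]
  have h2 : pdtR g t (-(c + σ * t) - y) = fderiv ℝ (fun p : ℝ × ℝ => g p.1 p.2) (t, -(c + σ * t) - y) (1, 0) := hg.pdtR_eq _ _
  simpa [smul_eq_mul, sub_eq_add_neg, neg_mul, Function.comp_def] using h

lemma shift_deriv_x (hg : Sm g) (t a y : ℝ) :
    HasDerivAt (fun y => g t (a + y)) (pdR g t (a + y)) y := by
  have h := (hg.deriv_x t (a + y)).comp y ((hasDerivAt_id y).const_add a)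
  simpa [Function.comp_def] using h

lemma negshift_deriv_x (hg : Sm g) (t a y : ℝ) :
    HasDerivAt (fun y => g t (-a - y)) (-(pdR g t (-a - y))) y := by
  have h1 : HasDerivAt (fun y : ℝ => -a - y) (-1) y := by
    have := ((hasDerivAt_id y).neg).const_add (-a)
    simpa [sub_eq_add_neg] using this
  have h := (hg.deriv_x t (-a - y)).comp y h1
  simpa [Function.comp_def] using h

end Sm

section KGZ

variable {u n v : ℝ → ℝ → ℝ}

def EE (u n v : ℝ → ℝ → ℝ) : ℝ → ℝ → ℝ := fun t x =>
  (pdtR u t x) ^ 2 + (pdR u t x) ^ 2 + (u t x) ^ 2 + (n t x) ^ 2 / 2 + (v t x) ^ 2 / 2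
    + n t x * (u t x) ^ 2

def QQ (u n v : ℝ → ℝ → ℝ) : ℝ → ℝ → ℝ := fun t x =>
  2 * pdtR u t x * pdR u t x - v t x * (n t x + (u t x) ^ 2)

def ee (u n v : ℝ → ℝ → ℝ) : ℝ → ℝ → ℝ := fun t x =>
  (pdR u t x) ^ 2 + (u t x) ^ 2 + (pdtR u t x) ^ 2 + (n t x) ^ 2 + (v t x) ^ 2

def EEt (u n v : ℝ → ℝ → ℝ) : ℝ → ℝ → ℝ := fun t x =>
  2 * pdtR u t x * pdtR (pdtR u) t x + 2 * pdR u t x * pdR (pdtR u) t x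
    + 2 * u t x * pdtR u t x + n t x * pdtR n t x + v t x * pdtR v t x
    + pdtR n t x * (u t x) ^ 2 + 2 * n t x * u t x * pdtR u t x

def EEx (u n v : ℝ → ℝ → ℝ) : ℝ → ℝ → ℝ := fun t x =>
  2 * pdtR u t x * pdR (pdtR u) t x + 2 * pdR u t x * pdR (pdR u) t x
    + 2 * u t x * pdR u t x + n t x * pdR n t x + v t x * pdR v t x
    + pdR n t x * (u t x) ^ 2 + 2 * n t x * u t x * pdR u t x

def QQx (u n v : ℝ → ℝ → ℝ) : ℝ → ℝ → ℝ := fun t x =>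
  2 * pdR (pdtR u) t x * pdR u t x + 2 * pdtR u t x * pdR (pdR u) t x
    - pdR v t x * (n t x + (u t x) ^ 2) - v t x * (pdR n t x + 2 * u t x * pdR u t x)

variable (hsol : IsKGZSolution u n v)
include hsol

lemma smu : Sm u := hsol.smooth_u
lemma smn : Sm n := hsol.smooth_n
lemma smv : Sm v := hsol.smooth_v

lemma hE_t (t x : ℝ) : HasDerivAt (fun s => EE u n v s x) (EEt u n v t x) t := by
  have su := smu hsol; have sn := smn hsol; have sv := smv hsol
  have h1 := (su.smooth_pdt.deriv_t t x).fun_pow 2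
  have h2 := (su.smooth_pdx.deriv_t t x).fun_pow 2
  have h3 := (su.deriv_t t x).fun_pow 2
  have h4 := ((sn.deriv_t t x).fun_pow 2).div_const 2
  have h5 := ((sv.deriv_t t x).fun_pow 2).div_const 2
  have h6 := (sn.deriv_t t x).fun_mul ((su.deriv_t t x).fun_pow 2)
  have h := ((((h1.fun_add h2).fun_add h3).fun_add h4).fun_add h5).fun_add h6
  have hcl : pdtR (pdR u) t x = pdR (pdtR u) t x := (su.clairaut t x).symm
  refine h.congr_deriv ?_
  simp only [EEt]
  rw [hcl]
  ring

lemma hE_x (t x : ℝ) : HasDerivAt (fun y => EE u n v t y) (EEx u n v t x) x := by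
  have su := smu hsol; have sn := smn hsol; have sv := smv hsol
  have h1 := (su.smooth_pdt.deriv_x t x).pow 2
  have h2 := (su.smooth_pdx.deriv_x t x).pow 2
  have h3 := (su.deriv_x t x).pow 2
  have h4 := ((sn.deriv_x t x).fun_pow 2).div_const 2
  have h5 := ((sv.deriv_x t x).fun_pow 2).div_const 2
  have h6 := (sn.deriv_x t x).fun_mul ((su.deriv_x t x).fun_pow 2)
  have h := ((((h1.fun_add h2).fun_add h3).fun_add h4).fun_add h5).fun_add h6
  refine h.congr_deriv ?_
  simp only [EEx]
  ring

lemma hQ_x (t x : ℝ) : HasDerivAt (fun y => QQ u n v t y) (QQx u n v t x) x := by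
  have su := smu hsol; have sn := smn hsol; have sv := smv hsol
  have h1 := ((su.smooth_pdt.deriv_x t x).const_mul 2).fun_mul (su.smooth_pdx.deriv_x t x)
  have h2 := (sv.deriv_x t x).fun_mul ((sn.deriv_x t x).fun_add ((su.deriv_x t x).fun_pow 2))
  have h := h1.fun_sub h2
  refine h.congr_deriv ?_
  simp only [QQx]
  ring

lemma pdtR_EE (t x : ℝ) : pdtR (EE u n v) t x = EEt u n v t x := (hE_t hsol t x).deriv

lemma pdR_EE (t x : ℝ) : pdR (EE u n v) t x = EEx u n v t x := (hE_x hsol t x).deriv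

lemma sm_EE : Sm (EE u n v) := by
  have su := smu hsol; have sn := smn hsol; have sv := smv hsol
  have cu : ContDiff ℝ (⊤ : ℕ∞) fun p : ℝ × ℝ => u p.1 p.2 := su
  have cut : ContDiff ℝ (⊤ : ℕ∞) fun p : ℝ × ℝ => pdtR u p.1 p.2 := su.smooth_pdt
  have cux : ContDiff ℝ (⊤ : ℕ∞) fun p : ℝ × ℝ => pdR u p.1 p.2 := su.smooth_pdx
  have cn : ContDiff ℝ (⊤ : ℕ∞) fun p : ℝ × ℝ => n p.1 p.2 := sn
  have cv : ContDiff ℝ (⊤ : ℕ∞) fun p : ℝ × ℝ => v p.1 p.2 := sv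
  show ContDiff ℝ (⊤ : ℕ∞) fun p : ℝ × ℝ => EE u n v p.1 p.2
  simp only [EE]
  exact (((((cut.pow 2).add (cux.pow 2)).add (cu.pow 2)).add ((cn.pow 2).div_const 2)).add
    ((cv.pow 2).div_const 2)).add (cn.mul (cu.pow 2))

lemma pdR_nu2 (t x : ℝ) :
    pdR (fun s y => n s y + (u s y) ^ 2) t x = pdR n t x + 2 * u t x * pdR u t x := by
  have su := smu hsol; have sn := smn hsol
  have h := (sn.deriv_x t x).add ((su.deriv_x t x).pow 2)
  have h2 := h.deriv
  norm_num at h2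
  simp only [pdR]
  exact h2

lemma utt_eq (t x : ℝ) :
    pdtR (pdtR u) t x = pdR (pdR u) t x - u t x - n t x * u t x := by
  have := hsol.eq_u t x; linarith

lemma nt_eq (t x : ℝ) : pdtR n t x = -pdR v t x := by
  have := hsol.eq_n t x; linarith

lemma vt_eq (t x : ℝ) : pdtR v t x = -(pdR n t x + 2 * u t x * pdR u t x) := by
  have h := hsol.eq_v t x
  rw [pdR_nu2 hsol] at h
  linarith

lemma EEt_eq_QQx (t x : ℝ) : EEt u n v t x = QQx u n v t x := by
  simp only [EEt, QQx]
  rw [utt_eq hsol, nt_eq hsol, vt_eq hsol]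
  ring

end KGZ

section KGZ2

variable {u n v : ℝ → ℝ → ℝ}
variable (hsol : IsKGZSolution u n v)
include hsol

lemma bdd_u : Bdd u := by simpa using hsol.schwartz_u.bdd 0 0
lemma bdd_ut : Bdd (pdtR u) := by simpa using hsol.schwartz_u.bdd 1 0
lemma bdd_ux : Bdd (pdR u) := by simpa using hsol.schwartz_u.bdd 0 1
lemma bdd_utt : Bdd (pdtR (pdtR u)) := by simpa using hsol.schwartz_u.bdd 2 0
lemma bdd_uxx : Bdd (pdR (pdR u)) := by simpa using hsol.schwartz_u.bdd 0 2
lemma bdd_utx : Bdd (pdR (pdtR u)) := by simpa using hsol.schwartz_u.bdd 1 1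
lemma bdd_n : Bdd n := by simpa using hsol.schwartz_n.bdd 0 0
lemma bdd_nt : Bdd (pdtR n) := by simpa using hsol.schwartz_n.bdd 1 0
lemma bdd_nx : Bdd (pdR n) := by simpa using hsol.schwartz_n.bdd 0 1
lemma bdd_v : Bdd v := by simpa using hsol.schwartz_v.bdd 0 0
lemma bdd_vt : Bdd (pdtR v) := by simpa using hsol.schwartz_v.bdd 1 0
lemma bdd_vx : Bdd (pdR v) := by simpa using hsol.schwartz_v.bdd 0 1

lemma bdd_EE : Bdd (EE u n v) := by
  have h := ((((((bdd_ut hsol).mul (bdd_ut hsol)).add ((bdd_ux hsol).mul (bdd_ux hsol))).add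
    ((bdd_u hsol).mul (bdd_u hsol))).add
    (Bdd.smul (1/2) ((bdd_n hsol).mul (bdd_n hsol)))).add
    (Bdd.smul (1/2) ((bdd_v hsol).mul (bdd_v hsol)))).add
    ((bdd_n hsol).mul ((bdd_u hsol).mul (bdd_u hsol)))
  exact h.congr' fun t x => by simp only [EE]; ring

lemma bdd_QQ : Bdd (QQ u n v) := by
  have h := (Bdd.smul 2 ((bdd_ut hsol).mul (bdd_ux hsol))).sub
    (((bdd_v hsol).mul (bdd_n hsol)).add ((bdd_v hsol).mul ((bdd_u hsol).mul (bdd_u hsol))))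
  exact h.congr' fun t x => by simp only [QQ]; ring

lemma bdd_ee : Bdd (ee u n v) := by
  have h := (((((bdd_ux hsol).mul (bdd_ux hsol)).add ((bdd_u hsol).mul (bdd_u hsol))).add
    ((bdd_ut hsol).mul (bdd_ut hsol))).add ((bdd_n hsol).mul (bdd_n hsol))).add
    ((bdd_v hsol).mul (bdd_v hsol))
  exact h.congr' fun t x => by simp only [ee]; ring

lemma bdd_EEt : Bdd (EEt u n v) := by
  have h := ((((((Bdd.smul 2 ((bdd_ut hsol).mul (bdd_utt hsol))).add
    (Bdd.smul 2 ((bdd_ux hsol).mul (bdd_utx hsol)))).add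
    (Bdd.smul 2 ((bdd_u hsol).mul (bdd_ut hsol)))).add
    ((bdd_n hsol).mul (bdd_nt hsol))).add ((bdd_v hsol).mul (bdd_vt hsol))).add
    ((bdd_nt hsol).mul ((bdd_u hsol).mul (bdd_u hsol)))).add
    (Bdd.smul 2 ((bdd_n hsol).mul ((bdd_u hsol).mul (bdd_ut hsol))))
  exact h.congr' fun t x => by simp only [EEt]; ring

lemma bdd_EEx : Bdd (EEx u n v) := by
  have h := ((((((Bdd.smul 2 ((bdd_ut hsol).mul (bdd_utx hsol))).add
    (Bdd.smul 2 ((bdd_ux hsol).mul (bdd_uxx hsol)))).add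
    (Bdd.smul 2 ((bdd_u hsol).mul (bdd_ux hsol)))).add
    ((bdd_n hsol).mul (bdd_nx hsol))).add ((bdd_v hsol).mul (bdd_vx hsol))).add
    ((bdd_nx hsol).mul ((bdd_u hsol).mul (bdd_u hsol)))).add
    (Bdd.smul 2 ((bdd_n hsol).mul ((bdd_u hsol).mul (bdd_ux hsol))))
  exact h.congr' fun t x => by simp only [EEx]; ring

end KGZ2

section Coercive

variable {u n v : ℝ → ℝ → ℝ} {t x : ℝ}

lemma EE_nonneg (husq : (u t x) ^ 2 ≤ 1 / 2) : 0 ≤ EE u n v t x := by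
  simp only [EE]
  nlinarith [sq_nonneg (n t x + 2 * (u t x) ^ 2), sq_nonneg (u t x), sq_nonneg (n t x),
    sq_nonneg (pdtR u t x), sq_nonneg (pdR u t x), sq_nonneg (v t x), sq_nonneg ((u t x)^2)]

lemma ee_le_4EE (husq : (u t x) ^ 2 ≤ 1 / 2) : ee u n v t x ≤ 4 * EE u n v t x := by
  simp only [EE, ee]
  nlinarith [sq_nonneg (n t x + 2 * (u t x) ^ 2), sq_nonneg (u t x), sq_nonneg (n t x),
    sq_nonneg (pdtR u t x), sq_nonneg (pdR u t x), sq_nonneg (v t x), sq_nonneg ((u t x)^2)]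

lemma QQ_le_8EE (husq : (u t x) ^ 2 ≤ 1 / 2) : |QQ u n v t x| ≤ 8 * EE u n v t x := by
  rw [abs_le]
  constructor <;>
  · simp only [EE, QQ]
    nlinarith [sq_nonneg (n t x + 2 * (u t x) ^ 2), sq_nonneg (u t x), sq_nonneg (n t x),
      sq_nonneg (pdtR u t x + pdR u t x), sq_nonneg (pdtR u t x - pdR u t x),
      sq_nonneg (v t x + n t x), sq_nonneg (v t x - n t x),
      sq_nonneg (v t x + (u t x)^2), sq_nonneg (v t x - (u t x)^2),
      sq_nonneg (pdtR u t x), sq_nonneg (pdR u t x), sq_nonneg (v t x), sq_nonneg ((u t x)^2)]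

end Coercive

section Usq

variable {u n v : ℝ → ℝ → ℝ}
variable (hsol : IsKGZSolution u n v)
include hsol

lemma usq_le {ε : ℝ} (hε1 : ε ≤ 1)
    (hsmall : ∀ t ≥ (0:ℝ), Real.sqrt (∫ x : ℝ, ((pdR u t x) ^ 2 + (u t x) ^ 2)) ≤ ε)
    {t : ℝ} (ht : 0 ≤ t) (x : ℝ) : (u t x) ^ 2 ≤ 1 / 2 := by
  have su : Sm u := smu hsol
  set φ : ℝ → ℝ := fun y => (u t y) ^ 2 with hφ
  set φ' : ℝ → ℝ := fun y => 2 * (u t y * pdR u t y) with hφ'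
  have hφd : ∀ y : ℝ, HasDerivAt φ (φ' y) y := by
    intro y
    have h := (su.deriv_x t y).fun_pow 2
    simpa [φ, φ', mul_assoc] using h
  have cφ' : Continuous φ' :=
    continuous_const.mul ((su.cont_slice_x t).mul (su.smooth_pdx.cont_slice_x t))
  -- uniform decay bound for u^2
  obtain ⟨Cu, hCu0, hCu⟩ := (((bdd_u hsol).mul (bdd_u hsol))).comp_bound |t|
  have husq_bound : ∀ y : ℝ, |φ y| ≤ Cu * (1 + y ^ 2)⁻¹ := by
    intro y
    have h := hCu t y |y| le_rfl (abs_nonneg y) le_rfl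
    have h2 : |φ y| = |u t y * u t y| := by show |u t y ^ 2| = _; rw [pow_two]
    rw [h2]
    have h3 : (1 + |y| ^ 2)⁻¹ = (1 + y ^ 2)⁻¹ := by rw [sq_abs]
    rw [h3] at h
    exact h
  have hbot : Tendsto φ atBot (nhds 0) :=
    tendsto_zero_of_bound_atBot (Filter.Eventually.of_forall husq_bound)
  have htop : Tendsto φ atTop (nhds 0) :=
    tendsto_zero_of_bound_atTop (Filter.Eventually.of_forall husq_bound)
  -- integrability of φ'
  have hφ'int : Integrable φ' := ((Bdd.smul 2 ((bdd_u hsol).mul (bdd_ux hsol)))).integrable_slice t cφ'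
  -- ψ : the H¹ density
  set ψ : ℝ → ℝ := fun y => (pdR u t y) ^ 2 + (u t y) ^ 2 with hψ
  have cψ : Continuous ψ := ((su.smooth_pdx.cont_slice_x t).pow 2).add ((su.cont_slice_x t).pow 2)
  obtain ⟨Cψ, hCψ0, hCψ⟩ :=
    (((bdd_ux hsol).mul (bdd_ux hsol)).add ((bdd_u hsol).mul (bdd_u hsol))).comp_bound |t|
  have hψint : Integrable ψ := by
    rw [← integrableOn_univ]
    refine integrableOn_of_bound MeasurableSet.univ cψ hCψ0 fun y _ => ?_
    have h := hCψ t y |y| le_rfl (abs_nonneg y) le_rfl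
    have h3 : (1 + |y| ^ 2)⁻¹ = (1 + y ^ 2)⁻¹ := by rw [sq_abs]
    rw [h3] at h
    have h2 : |ψ y| = |pdR u t y * pdR u t y + u t y * u t y| := by
      show |pdR u t y ^ 2 + u t y ^ 2| = _; congr 1; ring
    rw [h2]
    exact h
  have habs : ∀ y : ℝ, |φ' y| ≤ ψ y := by
    intro y
    rw [abs_le]
    constructor <;> [skip; skip] <;> · simp only [φ', ψ]; nlinarith [sq_nonneg (u t y + pdR u t y), sq_nonneg (u t y - pdR u t y)]
  -- FTC on both half-lines
  have hIic : ∫ y in Iic x, φ' y = φ x - 0 :=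
    integral_Iic_of_hasDerivAt_of_tendsto' (fun y _ => hφd y) hφ'int.integrableOn hbot
  have hIoi : ∫ y in Ioi x, φ' y = 0 - φ x :=
    integral_Ioi_of_hasDerivAt_of_tendsto' (fun y _ => hφd y) hφ'int.integrableOn htop
  have hm1 : ∫ y in Iic x, φ' y ≤ ∫ y in Iic x, ψ y := by
    refine setIntegral_mono hφ'int.integrableOn hψint.integrableOn fun y => ?_
    exact le_trans (le_abs_self _) (habs y)
  have hm2 : ∫ y in Ioi x, (-φ') y ≤ ∫ y in Ioi x, ψ y := by
    refine setIntegral_mono hφ'int.neg.integrableOn hψint.integrableOn fun y => ?_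
    exact le_trans (neg_le_abs _) (habs y)
  have hsplit : (∫ y in Iic x, ψ y) + ∫ y in Ioi x, ψ y = ∫ y, ψ y :=
    intervalIntegral.integral_Iic_add_Ioi hψint.integrableOn hψint.integrableOn
  have hneg : ∫ y in Ioi x, (-φ') y = -∫ y in Ioi x, φ' y := by
    simp [integral_neg]
  have hI0 : 0 ≤ ∫ y, ψ y := integral_nonneg fun y => by positivity
  have hsq := hsmall t ht
  have hIε : ∫ y, ψ y ≤ ε ^ 2 := by
    have h := Real.sq_sqrt hI0
    nlinarith [Real.sqrt_nonneg (∫ y, ψ y)]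
  have h2φ : 2 * φ x ≤ ∫ y, ψ y := by
    have := hm1
    rw [hIic] at this
    rw [hneg, hIoi] at hm2
    linarith
  have : φ x ≤ 1 / 2 := by
    nlinarith [Real.sqrt_nonneg (∫ y, ψ y), hsq, hε1, hIε, h2φ]
  exact this

end Usq

lemma Bdd.comp_bound2 {g : ℝ → ℝ → ℝ} (hg : Bdd g) (T : ℝ) :
    ∃ C : ℝ, 0 ≤ C ∧ ∀ t z a y : ℝ, |t| ≤ T → 0 ≤ y → 0 ≤ a → a ≤ |z| → y ≤ |z| →
      |g t z| ≤ C * (1 + a ^ 2)⁻¹ * (1 + y ^ 2)⁻¹ := by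
  obtain ⟨C, hC0, hC⟩ := hg T
  refine ⟨C, hC0, fun t z a y ht hy ha haz hyz => ?_⟩
  have h1 : (0:ℝ) < 1 + y ^ 2 := by positivity
  have h1a : (0:ℝ) < 1 + a ^ 2 := by positivity
  have hz2y : y ^ 2 ≤ z ^ 2 := by have := sq_abs z; nlinarith [abs_nonneg z]
  have hz2a : a ^ 2 ≤ z ^ 2 := by have := sq_abs z; nlinarith [abs_nonneg z]
  have h2 : (1 + a ^ 2) * (1 + y ^ 2) ≤ (1 + z ^ 2) ^ 2 := by nlinarith [sq_nonneg z]
  have h3 := hC t z ht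
  have h4 : (1 + a ^ 2) * (1 + y ^ 2) * |g t z| ≤ C :=
    le_trans (mul_le_mul_of_nonneg_right h2 (abs_nonneg _)) h3
  rw [show C * (1 + a ^ 2)⁻¹ * (1 + y ^ 2)⁻¹ = C / ((1 + a ^ 2) * (1 + y ^ 2)) by
    field_simp, le_div_iff₀ (by positivity)]
  nlinarith

section Gsec

variable {u n v : ℝ → ℝ → ℝ}

def Wfun (u n v : ℝ → ℝ → ℝ) (b : ℝ) : ℝ → ℝ → ℝ := fun t y =>
  EE u n v t (b + 8 * t + y) + EE u n v t (-(b + 8 * t) - y)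

def Wd (u n v : ℝ → ℝ → ℝ) (b : ℝ) : ℝ → ℝ → ℝ := fun t y =>
  (EEt u n v t (b + 8 * t + y) + 8 * EEx u n v t (b + 8 * t + y))
    + (EEt u n v t (-(b + 8 * t) - y) - 8 * EEx u n v t (-(b + 8 * t) - y))

def Gfun (u n v : ℝ → ℝ → ℝ) (b : ℝ) : ℝ → ℝ := fun t =>
  ∫ y in Ioi (0:ℝ), Wfun u n v b t y

variable (hsol : IsKGZSolution u n v)
include hsol

lemma hW_t (b t y : ℝ) :
    HasDerivAt (fun s => Wfun u n v b s y) (Wd u n v b t y) t := by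
  have h1 := (sm_EE hsol).cone_deriv b 8 y t
  have h2 := (sm_EE hsol).cone_deriv_neg b 8 y t
  have h := h1.add h2
  rw [pdtR_EE hsol, pdR_EE hsol, pdtR_EE hsol, pdR_EE hsol] at h
  exact h

lemma cont_EE_slice (t : ℝ) : Continuous (fun x => EE u n v t x) :=
  (sm_EE hsol).cont_slice_x t

lemma cont_EEt_slice (t : ℝ) : Continuous (fun x => EEt u n v t x) := by
  have he : (fun x => EEt u n v t x) = fun x => pdtR (EE u n v) t x := by
    funext x; rw [pdtR_EE hsol]
  rw [he]
  exact (sm_EE hsol).smooth_pdt.cont_slice_x t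

lemma cont_EEx_slice (t : ℝ) : Continuous (fun x => EEx u n v t x) := by
  have he : (fun x => EEx u n v t x) = fun x => pdR (EE u n v) t x := by
    funext x; rw [pdR_EE hsol]
  rw [he]
  exact (sm_EE hsol).smooth_pdx.cont_slice_x t

lemma cont_QQ_slice (t : ℝ) : Continuous (fun x => QQ u n v t x) := by
  have su : Sm u := smu hsol; have sn : Sm n := smn hsol; have sv : Sm v := smv hsol
  exact ((continuous_const.mul (su.smooth_pdt.cont_slice_x t)).mul
    (su.smooth_pdx.cont_slice_x t)).sub ((sv.cont_slice_x t).mul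
      ((sn.cont_slice_x t).add ((su.cont_slice_x t).pow 2)))

lemma cont_W_slice (b t : ℝ) : Continuous (fun y => Wfun u n v b t y) := by
  have h1 : Continuous (fun y : ℝ => b + 8 * t + y) := continuous_const.add continuous_id
  have h2 : Continuous (fun y : ℝ => -(b + 8 * t) - y) := continuous_const.sub continuous_id
  exact ((cont_EE_slice hsol t).comp h1).add ((cont_EE_slice hsol t).comp h2)

lemma cont_Wd_slice (b t : ℝ) : Continuous (fun y => Wd u n v b t y) := by
  have h1 : Continuous (fun y : ℝ => b + 8 * t + y) := continuous_const.add continuous_id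
  have h2 : Continuous (fun y : ℝ => -(b + 8 * t) - y) := continuous_const.sub continuous_id
  exact (((cont_EEt_slice hsol t).comp h1).add
    (continuous_const.mul ((cont_EEx_slice hsol t).comp h1))).add
    (((cont_EEt_slice hsol t).comp h2).sub
      (continuous_const.mul ((cont_EEx_slice hsol t).comp h2)))

end Gsec

def Bnd (u n v : ℝ → ℝ → ℝ) (b : ℝ) : ℝ → ℝ := fun t =>
  (QQ u n v t (b + 8 * t) + 8 * EE u n v t (b + 8 * t))
    + (8 * EE u n v t (-(b + 8 * t)) - QQ u n v t (-(b + 8 * t)))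

section Gsec2

variable {u n v : ℝ → ℝ → ℝ}
variable (hsol : IsKGZSolution u n v)
include hsol

lemma sm_QQ : Sm (QQ u n v) := by
  have su : Sm u := smu hsol; have sn : Sm n := smn hsol; have sv : Sm v := smv hsol
  have cu : ContDiff ℝ (⊤ : ℕ∞) fun p : ℝ × ℝ => u p.1 p.2 := su
  have cut : ContDiff ℝ (⊤ : ℕ∞) fun p : ℝ × ℝ => pdtR u p.1 p.2 := su.smooth_pdt
  have cux : ContDiff ℝ (⊤ : ℕ∞) fun p : ℝ × ℝ => pdR u p.1 p.2 := su.smooth_pdx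
  have cn : ContDiff ℝ (⊤ : ℕ∞) fun p : ℝ × ℝ => n p.1 p.2 := sn
  have cv : ContDiff ℝ (⊤ : ℕ∞) fun p : ℝ × ℝ => v p.1 p.2 := sv
  show ContDiff ℝ (⊤ : ℕ∞) fun p : ℝ × ℝ => QQ u n v p.1 p.2
  simp only [QQ]
  exact ((contDiff_const.mul cut).mul cux).sub (cv.mul (cn.add (cu.pow 2)))

lemma pdR_QQ (t x : ℝ) : pdR (QQ u n v) t x = QQx u n v t x := (hQ_x hsol t x).deriv

lemma intWd (b t : ℝ) (ha : 0 ≤ b + 8 * t) :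
    ∫ y in Ioi (0:ℝ), Wd u n v b t y = 0 - Bnd u n v b t := by
  set a := b + 8 * t with hadef
  set Φ : ℝ → ℝ := fun y => (QQ u n v t (a + y) + 8 * EE u n v t (a + y))
    + (8 * EE u n v t (-a - y) - QQ u n v t (-a - y)) with hΦ
  have sQ : Sm (QQ u n v) := sm_QQ hsol
  have sE : Sm (EE u n v) := sm_EE hsol
  have hΦd : ∀ y : ℝ, HasDerivAt Φ (Wd u n v b t y) y := by
    intro y
    have h1 := sQ.shift_deriv_x t a y
    have h2 := sE.shift_deriv_x t a y
    have h3 := sE.negshift_deriv_x t a y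
    have h4 := sQ.negshift_deriv_x t a y
    have h := (h1.fun_add (h2.const_mul 8)).fun_add ((h3.const_mul 8).fun_sub h4)
    rw [pdR_QQ hsol, pdR_QQ hsol, pdR_EE hsol, pdR_EE hsol] at h
    refine h.congr_deriv ?_
    simp only [Wd, ← hadef]
    rw [← EEt_eq_QQx hsol, ← EEt_eq_QQx hsol]
    ring
  obtain ⟨C1, hC10, hC1⟩ :=
    ((bdd_QQ hsol).add (Bdd.smul 8 (bdd_EE hsol))).comp_bound |t|
  obtain ⟨C2, hC20, hC2⟩ :=
    ((Bdd.smul 8 (bdd_EE hsol)).sub (bdd_QQ hsol)).comp_bound |t|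
  have habs1 : ∀ y : ℝ, 0 ≤ y → y ≤ |a + y| := fun y hy => by
    rw [abs_of_nonneg (by linarith)]; linarith
  have habs2 : ∀ y : ℝ, 0 ≤ y → y ≤ |-a - y| := fun y hy => by
    rw [abs_of_nonpos (by linarith), neg_sub, sub_neg_eq_add]; linarith
  have hΦbound : ∀ y : ℝ, 0 ≤ y → |Φ y| ≤ (C1 + C2) * (1 + y ^ 2)⁻¹ := by
    intro y hy
    have b1 := hC1 t (a + y) y le_rfl hy (habs1 y hy)
    have b2 := hC2 t (-a - y) y le_rfl hy (habs2 y hy)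
    calc |Φ y| ≤ |QQ u n v t (a + y) + 8 * EE u n v t (a + y)|
        + |8 * EE u n v t (-a - y) - QQ u n v t (-a - y)| := abs_add_le _ _
    _ ≤ C1 * (1 + y ^ 2)⁻¹ + C2 * (1 + y ^ 2)⁻¹ := add_le_add b1 b2
    _ = (C1 + C2) * (1 + y ^ 2)⁻¹ := by ring
  have hΦtend : Tendsto Φ atTop (nhds 0) := by
    apply tendsto_zero_of_bound_atTop
    filter_upwards [eventually_ge_atTop (0:ℝ)] with y hy
    exact hΦbound y hy
  obtain ⟨D1, hD10, hD1⟩ :=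
    ((bdd_EEt hsol).add (Bdd.smul 8 (bdd_EEx hsol))).comp_bound |t|
  obtain ⟨D2, hD20, hD2⟩ :=
    ((bdd_EEt hsol).sub (Bdd.smul 8 (bdd_EEx hsol))).comp_bound |t|
  have hWdint : IntegrableOn (fun y => Wd u n v b t y) (Ioi (0:ℝ)) := by
    refine integrableOn_of_bound measurableSet_Ioi (cont_Wd_slice hsol b t)
      (by positivity : (0:ℝ) ≤ D1 + D2) fun y hy => ?_
    have hy0 : (0:ℝ) ≤ y := le_of_lt hy
    have b1 := hD1 t (a + y) y le_rfl hy0 (habs1 y hy0)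
    have b2 := hD2 t (-a - y) y le_rfl hy0 (habs2 y hy0)
    calc |Wd u n v b t y| ≤ |EEt u n v t (a + y) + 8 * EEx u n v t (a + y)|
        + |EEt u n v t (-a - y) - 8 * EEx u n v t (-a - y)| := by
          simp only [Wd, ← hadef]; exact abs_add_le _ _
    _ ≤ D1 * (1 + y ^ 2)⁻¹ + D2 * (1 + y ^ 2)⁻¹ := add_le_add b1 b2
    _ = (D1 + D2) * (1 + y ^ 2)⁻¹ := by ring
  have h := integral_Ioi_of_hasDerivAt_of_tendsto' (fun y _ => hΦd y) hWdint hΦtend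
  rw [h]
  congr 1
  simp only [Φ, Bnd, ← hadef]
  norm_num

end Gsec2

section Gsec3

variable {u n v : ℝ → ℝ → ℝ}
variable (hsol : IsKGZSolution u n v)
include hsol

lemma hG (b t₀ : ℝ) (hb : ∀ t ∈ Metric.ball t₀ 1, 0 ≤ b + 8 * t) :
    HasDerivAt (Gfun u n v b) (∫ y in Ioi (0:ℝ), Wd u n v b t₀ y) t₀ := by
  obtain ⟨D1, hD10, hD1⟩ :=
    ((bdd_EEt hsol).add (Bdd.smul 8 (bdd_EEx hsol))).comp_bound (|t₀| + 1)
  obtain ⟨D2, hD20, hD2⟩ :=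
    ((bdd_EEt hsol).sub (Bdd.smul 8 (bdd_EEx hsol))).comp_bound (|t₀| + 1)
  obtain ⟨CE, hCE0, hCE⟩ := (bdd_EE hsol).comp_bound |t₀|
  have habs1 : ∀ a y : ℝ, 0 ≤ a → 0 ≤ y → y ≤ |a + y| := fun a y ha hy => by
    rw [abs_of_nonneg (by linarith)]; linarith
  have habs2 : ∀ a y : ℝ, 0 ≤ a → 0 ≤ y → y ≤ |-(a) - y| := fun a y ha hy => by
    rw [abs_of_nonpos (by linarith), neg_sub, sub_neg_eq_add]; linarith
  have key := hasDerivAt_integral_of_dominated_loc_of_deriv_le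
    (μ := (volume : Measure ℝ).restrict (Ioi 0))
    (F := fun t y => Wfun u n v b t y) (F' := fun t y => Wd u n v b t y)
    (x₀ := t₀) (bound := fun y => (D1 + D2) * (1 + y ^ 2)⁻¹) (s := Metric.ball t₀ 1) (Metric.ball_mem_nhds t₀ one_pos)
    (Filter.Eventually.of_forall fun t =>
      (cont_W_slice hsol b t).aestronglyMeasurable.restrict)
    ?hint
    ((cont_Wd_slice hsol b t₀).aestronglyMeasurable.restrict)
    ?hbound
    ((integrable_inv_one_add_sq.const_mul (D1 + D2)).restrict)
    (Filter.Eventually.of_forall fun y t _ => hW_t hsol b t y)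
  · exact key.2
  case hint =>
    have ha0 : 0 ≤ b + 8 * t₀ := hb t₀ (Metric.mem_ball_self one_pos)
    refine integrableOn_of_bound measurableSet_Ioi (cont_W_slice hsol b t₀)
      (by positivity : (0:ℝ) ≤ CE + CE) fun y hy => ?_
    have hy0 : (0:ℝ) ≤ y := le_of_lt hy
    have b1 := hCE t₀ (b + 8 * t₀ + y) y le_rfl hy0 (habs1 _ y ha0 hy0)
    have b2 := hCE t₀ (-(b + 8 * t₀) - y) y le_rfl hy0 (habs2 _ y ha0 hy0)
    calc |Wfun u n v b t₀ y| ≤ |EE u n v t₀ (b + 8 * t₀ + y)|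
        + |EE u n v t₀ (-(b + 8 * t₀) - y)| := abs_add_le _ _
    _ ≤ CE * (1 + y ^ 2)⁻¹ + CE * (1 + y ^ 2)⁻¹ := add_le_add b1 b2
    _ = (CE + CE) * (1 + y ^ 2)⁻¹ := by ring
  case hbound =>
    rw [ae_restrict_iff' measurableSet_Ioi]
    refine Filter.Eventually.of_forall fun y hy t htb => ?_
    have hy0 : (0:ℝ) ≤ y := le_of_lt hy
    have ht : |t| ≤ |t₀| + 1 := by
      have := Metric.mem_ball.1 htb
      rw [Real.dist_eq] at this
      have h1 := abs_sub_abs_le_abs_sub t t₀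
      linarith
    have ha0 : 0 ≤ b + 8 * t := hb t htb
    have b1 := hD1 t (b + 8 * t + y) y ht hy0 (habs1 _ y ha0 hy0)
    have b2 := hD2 t (-(b + 8 * t) - y) y ht hy0 (habs2 _ y ha0 hy0)
    rw [Real.norm_eq_abs]
    calc |Wd u n v b t y| ≤ |EEt u n v t (b + 8 * t + y) + 8 * EEx u n v t (b + 8 * t + y)|
        + |EEt u n v t (-(b + 8 * t) - y) - 8 * EEx u n v t (-(b + 8 * t) - y)| := abs_add_le _ _
    _ ≤ D1 * (1 + y ^ 2)⁻¹ + D2 * (1 + y ^ 2)⁻¹ := add_le_add b1 b2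
    _ = (D1 + D2) * (1 + y ^ 2)⁻¹ := by ring

end Gsec3

section Gsec4

variable {u n v : ℝ → ℝ → ℝ}
variable (hsol : IsKGZSolution u n v)
include hsol

lemma G_antitone {ε : ℝ} (hε1 : ε ≤ 1)
    (hsmall : ∀ t ≥ (0:ℝ), Real.sqrt (∫ x : ℝ, ((pdR u t x) ^ 2 + (u t x) ^ 2)) ≤ ε)
    (b : ℝ) (hb : 0 ≤ b) : AntitoneOn (Gfun u n v b) (Ici (2:ℝ)) := by
  have hball : ∀ t₀ ∈ Ici (2:ℝ), ∀ t ∈ Metric.ball t₀ 1, 0 ≤ b + 8 * t := by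
    intro t₀ ht₀ t htb
    have h1 := Metric.mem_ball.1 htb
    rw [Real.dist_eq, abs_sub_lt_iff] at h1
    have ht₀2 : (2:ℝ) ≤ t₀ := ht₀
    linarith [h1.1, h1.2]
  apply antitoneOn_of_deriv_nonpos (convex_Ici 2)
  · intro t ht
    exact (hG hsol b t (hball t ht)).continuousAt.continuousWithinAt
  · rw [interior_Ici]
    intro t ht
    exact (hG hsol b t (hball t (Ioi_subset_Ici_self ht))).differentiableAt.differentiableWithinAt
  · rw [interior_Ici]
    intro t ht
    have ht2 : (2:ℝ) < t := ht
    have hd := hG hsol b t (hball t (Ioi_subset_Ici_self ht))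
    rw [hd.deriv, intWd hsol b t (by linarith)]
    have ht0 : (0:ℝ) ≤ t := by linarith
    have h1 := QQ_le_8EE (u := u) (n := n) (v := v)
      (usq_le hsol hε1 hsmall ht0 (b + 8 * t))
    have h2 := QQ_le_8EE (u := u) (n := n) (v := v)
      (usq_le hsol hε1 hsmall ht0 (-(b + 8 * t)))
    rw [abs_le] at h1 h2
    simp only [Bnd]
    linarith [h1.1, h1.2, h2.1, h2.2]

lemma G_at2 (b : ℝ) (hb : 0 ≤ b) {CE : ℝ} (hCE0 : 0 ≤ CE)
    (hCE : ∀ t z a y : ℝ, |t| ≤ 2 → 0 ≤ y → 0 ≤ a → a ≤ |z| → y ≤ |z| →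
      |EE u n v t z| ≤ CE * (1 + a ^ 2)⁻¹ * (1 + y ^ 2)⁻¹) :
    Gfun u n v b 2 ≤ 2 * CE * (1 + (b + 16) ^ 2)⁻¹ * π := by
  set a : ℝ := b + 16 with hadef
  have ha0 : (0:ℝ) ≤ a := by simp only [hadef]; linarith
  have habs1 : ∀ y : ℝ, 0 ≤ y → y ≤ |a + y| ∧ a ≤ |a + y| := fun y hy => by
    rw [abs_of_nonneg (by linarith)]; constructor <;> linarith
  have habs2 : ∀ y : ℝ, 0 ≤ y → y ≤ |-a - y| ∧ a ≤ |-a - y| := fun y hy => by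
    rw [abs_of_nonpos (by linarith), neg_sub, sub_neg_eq_add]; constructor <;> linarith
  have hW8 : b + 8 * 2 = a := by simp only [hadef]; ring
  have hintW : IntegrableOn (fun y => Wfun u n v b 2 y) (Ioi (0:ℝ)) := by
    refine integrableOn_of_bound measurableSet_Ioi (cont_W_slice hsol b 2)
      (by positivity : (0:ℝ) ≤ 2 * CE * (1 + a ^ 2)⁻¹) fun y hy => ?_
    have hy0 : (0:ℝ) ≤ y := le_of_lt hy
    have b1 := hCE 2 (a + y) a y (by norm_num) hy0 ha0 (habs1 y hy0).2 (habs1 y hy0).1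
    have b2 := hCE 2 (-a - y) a y (by norm_num) hy0 ha0 (habs2 y hy0).2 (habs2 y hy0).1
    calc |Wfun u n v b 2 y| ≤ |EE u n v 2 (b + 8 * 2 + y)| + |EE u n v 2 (-(b + 8 * 2) - y)| :=
        abs_add_le _ _
    _ = |EE u n v 2 (a + y)| + |EE u n v 2 (-a - y)| := by rw [hW8]
    _ ≤ CE * (1 + a ^ 2)⁻¹ * (1 + y ^ 2)⁻¹ + CE * (1 + a ^ 2)⁻¹ * (1 + y ^ 2)⁻¹ :=
        add_le_add b1 b2
    _ = 2 * CE * (1 + a ^ 2)⁻¹ * (1 + y ^ 2)⁻¹ := by ring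
  have hmono : Gfun u n v b 2 ≤ ∫ y in Ioi (0:ℝ), 2 * CE * (1 + a ^ 2)⁻¹ * (1 + y ^ 2)⁻¹ := by
    refine setIntegral_mono_on hintW
      ((integrable_inv_one_add_sq.const_mul (2 * CE * (1 + a ^ 2)⁻¹)).integrableOn)
      measurableSet_Ioi fun y hy => ?_
    have hy0 : (0:ℝ) ≤ y := le_of_lt hy
    have b1 := hCE 2 (a + y) a y (by norm_num) hy0 ha0 (habs1 y hy0).2 (habs1 y hy0).1
    have b2 := hCE 2 (-a - y) a y (by norm_num) hy0 ha0 (habs2 y hy0).2 (habs2 y hy0).1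
    calc Wfun u n v b 2 y ≤ |Wfun u n v b 2 y| := le_abs_self _
    _ ≤ |EE u n v 2 (a + y)| + |EE u n v 2 (-a - y)| := by
        rw [show Wfun u n v b 2 y = EE u n v 2 (a + y) + EE u n v 2 (-a - y) by
          simp only [Wfun, hW8]]
        exact abs_add_le _ _
    _ ≤ 2 * CE * (1 + a ^ 2)⁻¹ * (1 + y ^ 2)⁻¹ := by
        have := add_le_add b1 b2; linarith
  have hval : ∫ y in Ioi (0:ℝ), 2 * CE * (1 + a ^ 2)⁻¹ * (1 + y ^ 2)⁻¹
      ≤ 2 * CE * (1 + a ^ 2)⁻¹ * π := by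
    rw [MeasureTheory.integral_const_mul]
    have h1 : ∫ y in Ioi (0:ℝ), (1 + y ^ 2)⁻¹ ≤ π := by
      rw [← integral_univ_inv_one_add_sq]
      exact setIntegral_le_integral integrable_inv_one_add_sq
        (Filter.Eventually.of_forall fun y => by positivity)
    have h2 : (0:ℝ) ≤ 2 * CE * (1 + a ^ 2)⁻¹ := by positivity
    exact mul_le_mul_of_nonneg_left h1 h2
  exact le_trans hmono hval

lemma ext_eq_G (b t : ℝ) (ha : 0 < b + 8 * t) :
    ∫ x in (Iic (-(b + 8 * t)) ∪ Ici (b + 8 * t)), EE u n v t x = Gfun u n v b t := by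
  set a : ℝ := b + 8 * t with hadef
  have hEEint : Integrable (fun x => EE u n v t x) :=
    (bdd_EE hsol).integrable_slice t (cont_EE_slice hsol t)
  have hdisj : Disjoint (Iic (-a)) (Ici a) := by
    rw [Set.disjoint_left]
    intro x hx1 hx2
    simp only [mem_Iic] at hx1
    simp only [mem_Ici] at hx2
    linarith
  rw [setIntegral_union hdisj measurableSet_Ici hEEint.integrableOn hEEint.integrableOn]
  have h1 : ∫ x in Ici a, EE u n v t x = ∫ y in Ioi (0:ℝ), EE u n v t (a + y) := by
    rw [← setIntegral_congr_set Ioi_ae_eq_Ici, ← setIntegral_shift (fun x => EE u n v t x) a]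
  have h2 : ∫ x in Iic (-a), EE u n v t x = ∫ y in Ioi (0:ℝ), EE u n v t (-a - y) := by
    rw [← setIntegral_negshift (fun x => EE u n v t x) a]
  obtain ⟨CE, hCE0, hCE⟩ := (bdd_EE hsol).comp_bound |t|
  have ha0 : (0:ℝ) ≤ a := le_of_lt ha
  have habs1 : ∀ y : ℝ, 0 ≤ y → y ≤ |a + y| := fun y hy => by
    rw [abs_of_nonneg (by linarith)]; linarith
  have habs2 : ∀ y : ℝ, 0 ≤ y → y ≤ |-a - y| := fun y hy => by
    rw [abs_of_nonpos (by linarith), neg_sub, sub_neg_eq_add]; linarith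
  have hi1 : IntegrableOn (fun y => EE u n v t (a + y)) (Ioi (0:ℝ)) := by
    refine integrableOn_of_bound measurableSet_Ioi
      ((cont_EE_slice hsol t).comp (continuous_const.add continuous_id)) hCE0 fun y hy => ?_
    exact hCE t (a + y) y le_rfl (le_of_lt hy) (habs1 y (le_of_lt hy))
  have hi2 : IntegrableOn (fun y => EE u n v t (-a - y)) (Ioi (0:ℝ)) := by
    refine integrableOn_of_bound measurableSet_Ioi
      ((cont_EE_slice hsol t).comp (continuous_const.sub continuous_id)) hCE0 fun y hy => ?_
    exact hCE t (-a - y) y le_rfl (le_of_lt hy) (habs2 y (le_of_lt hy))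
  rw [h1, h2, Gfun]
  rw [show (fun y => Wfun u n v b t y) = fun y => EE u n v t (a + y) + EE u n v t (-a - y) by
    funext y; simp only [Wfun, ← hadef]]
  rw [integral_add hi1 hi2]
  ring

end Gsec4

section Final

variable {u n v : ℝ → ℝ → ℝ}
variable (hsol : IsKGZSolution u n v)
include hsol

lemma cont_ee_slice (t : ℝ) : Continuous (fun x => ee u n v t x) := by
  have su : Sm u := smu hsol; have sn : Sm n := smn hsol; have sv : Sm v := smv hsol
  exact ((((su.smooth_pdx.cont_slice_x t).pow 2).add ((su.cont_slice_x t).pow 2)).add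
    ((su.smooth_pdt.cont_slice_x t).pow 2)).add ((sn.cont_slice_x t).pow 2) |>.add
    ((sv.cont_slice_x t).pow 2)

end Final

/-- decay of the full local energy quantities in far field regions
`μ(t) + λ(t)/4 ≤ |x| ≤ μ(t) + 3λ(t)/4`, `λ(t) = t (log t)^{1+δ}`, for solutions
of the Klein–Gordon–Zakharov system with `sup_{t≥0} ‖u(t)‖_{H¹} ≤ ε ≤ 1`. -/
theorem kgz_decay_far_field
    (ε : ℝ) (hε0 : 0 < ε) (hε1 : ε ≤ 1)
    (u n v : ℝ → ℝ → ℝ)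
    (hsol : IsKGZSolution u n v)
    (hsmall : ∀ t ≥ (0:ℝ),
      Real.sqrt (∫ x : ℝ, ((pdR u t x) ^ 2 + (u t x) ^ 2)) ≤ ε)
    (δ : ℝ) (hδ : 0 < δ) (μ : ℝ → ℝ)
    (hμC1 : ContDiff ℝ 1 μ)
    (hμpos : ∀ t ≥ (2:ℝ), 0 < μ t)
    (hμmono : MonotoneOn μ (Ici (2:ℝ)))
    (hμlam : ∀ t ≥ (2:ℝ), t * Real.log t ^ (1 + δ) ≤ μ t) :
    Filter.Tendsto (fun t =>
        ∫ x in {x : ℝ | μ t + (t * Real.log t ^ (1 + δ)) / 4 ≤ |x| ∧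
            |x| ≤ μ t + 3 * (t * Real.log t ^ (1 + δ)) / 4},
          ((pdR u t x) ^ 2 + (u t x) ^ 2 + (pdtR u t x) ^ 2
            + (n t x) ^ 2 + (v t x) ^ 2))
      Filter.atTop (nhds 0) := by

  show Filter.Tendsto (fun t =>
      ∫ x in {x : ℝ | μ t + (t * Real.log t ^ (1 + δ)) / 4 ≤ |x| ∧
          |x| ≤ μ t + 3 * (t * Real.log t ^ (1 + δ)) / 4}, ee u n v t x)
    Filter.atTop (nhds 0)
  rw [Metric.tendsto_atTop]
  intro η hη
  obtain ⟨CE, hCE0, hCE⟩ := (bdd_EE hsol).comp_bound2 2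
  set b : ℝ := 8 * CE * π / η with hbdef
  have hpi := Real.pi_pos
  have hb0 : 0 ≤ b := by
    rw [hbdef]; positivity
  have hG2 := G_at2 hsol b hb0 hCE0 hCE
  have hS : (0:ℝ) < 1 + (b + 16) ^ 2 := by positivity
  have hkey : 8 * CE * π = b * η := by
    rw [hbdef]; field_simp
  have hG2η : 4 * Gfun u n v b 2 < η := by
    have h4 : 4 * Gfun u n v b 2 ≤ 8 * CE * π * (1 + (b + 16) ^ 2)⁻¹ := by nlinarith
    have h5 : 8 * CE * π * (1 + (b + 16) ^ 2)⁻¹ < η := by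
      rw [hkey, show b * η * (1 + (b + 16) ^ 2)⁻¹ = b * η / (1 + (b + 16) ^ 2) by ring,
        div_lt_iff₀ hS]
      nlinarith [mul_nonneg hη.le (sq_nonneg b), mul_nonneg hη.le hb0, hη]
    linarith
  have hanti := G_antitone hsol hε1 hsmall b hb0
  refine ⟨max (Real.exp 9) (max b 2), fun t ht => ?_⟩
  have hte : Real.exp 9 ≤ t := le_trans (le_max_left _ _) ht
  have htb : b ≤ t := le_trans (le_trans (le_max_left _ _) (le_max_right _ _)) ht
  have ht2 : (2:ℝ) ≤ t := le_trans (le_trans (le_max_right _ _) (le_max_right _ _)) ht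
  have ht0 : (0:ℝ) ≤ t := by linarith
  have htpos : (0:ℝ) < t := by linarith
  set lam : ℝ := t * Real.log t ^ (1 + δ) with hlamdef
  set a : ℝ := b + 8 * t with hadef
  have ha : (0:ℝ) < a := by rw [hadef]; linarith
  have hlog : (9:ℝ) ≤ Real.log t := by
    rw [Real.le_log_iff_exp_le htpos]; exact hte
  have hrp : (9:ℝ) ≤ Real.log t ^ (1 + δ) := by
    have h1 : Real.log t ^ (1:ℝ) ≤ Real.log t ^ (1 + δ) :=
      Real.rpow_le_rpow_of_exponent_le (by linarith) (by linarith)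
    rw [Real.rpow_one] at h1
    linarith
  have hlam0 : 0 ≤ lam := by
    rw [hlamdef]
    exact mul_nonneg ht0 (Real.rpow_nonneg (by linarith) _)
  have hmu : 9 * t ≤ μ t := by
    have h1 := hμlam t ht2
    have h2 : 9 * t ≤ t * Real.log t ^ (1 + δ) := by
      nlinarith
    linarith
  -- the annulus is inside the exterior region
  set Aset : Set ℝ := {x : ℝ | μ t + lam / 4 ≤ |x| ∧ |x| ≤ μ t + 3 * lam / 4} with hAdef
  have hsub : Aset ⊆ Iic (-a) ∪ Ici a := by
    intro x hx
    obtain ⟨hx1, _⟩ := hx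
    have hxa : a ≤ |x| := by
      rw [hadef]
      have : b + 8 * t ≤ 9 * t := by linarith
      linarith
    rcases le_abs.1 hxa with h | h
    · right; exact h
    · left; simp only [mem_Iic]; linarith
  have husq : ∀ x : ℝ, (u t x) ^ 2 ≤ 1 / 2 := usq_le hsol hε1 hsmall ht0
  have hee_int : Integrable (fun x => ee u n v t x) :=
    (bdd_ee hsol).integrable_slice t (cont_ee_slice hsol t)
  have hEE_int : Integrable (fun x => EE u n v t x) :=
    (bdd_EE hsol).integrable_slice t (cont_EE_slice hsol t)
  have h4E_int : Integrable (fun x => 4 * EE u n v t x) := by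
    simpa using hEE_int.const_mul 4
  have hI0 : 0 ≤ ∫ x in Aset, ee u n v t x :=
    integral_nonneg fun x => by simp only [ee]; positivity
  have h1 : ∫ x in Aset, ee u n v t x ≤ ∫ x in Aset, 4 * EE u n v t x :=
    setIntegral_mono hee_int.integrableOn h4E_int.integrableOn
      fun x => ee_le_4EE (husq x)
  have h2 : ∫ x in Aset, 4 * EE u n v t x
      ≤ ∫ x in (Iic (-a) ∪ Ici a), 4 * EE u n v t x := by
    refine setIntegral_mono_set h4E_int.integrableOn
      (Filter.Eventually.of_forall fun x => by
        simp only [Pi.zero_apply]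
        have := EE_nonneg (u := u) (n := n) (v := v) (husq x); linarith) ?_
    exact Filter.Eventually.of_forall fun x hx => hsub hx
  have h3 : ∫ x in (Iic (-a) ∪ Ici a), 4 * EE u n v t x
      = 4 * ∫ x in (Iic (-a) ∪ Ici a), EE u n v t x :=
    MeasureTheory.integral_const_mul 4 _
  have h4 : ∫ x in (Iic (-a) ∪ Ici a), EE u n v t x = Gfun u n v b t := by
    rw [hadef] at *
    exact ext_eq_G hsol b t ha
  have h5 : Gfun u n v b t ≤ Gfun u n v b 2 :=
    hanti (by simp) (by simp only [mem_Ici]; exact ht2) ht2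
  have hfin : ∫ x in Aset, ee u n v t x < η := by
    calc ∫ x in Aset, ee u n v t x ≤ 4 * Gfun u n v b t := by
          rw [← h4, ← h3]; linarith
    _ ≤ 4 * Gfun u n v b 2 := by linarith
    _ < η := hG2η
  rw [Real.dist_eq, sub_zero, abs_of_nonneg hI0]
  exact hfin
end
end

section
/- Let (u,n,v) be a classical solution of the reduced Zakharov system (ZSb). Then there exists a constant K > 0, depending only on the initial energy E_s(0) and the initial mass M_s(0), such that for all t ≥ 0: ∫_ℝ ( |∂ₓu(t,x)|² + |u(t,x)|² + v(t,x)² + n(t,x)² ) dx ≤ K. -/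
open MeasureTheory Filter Real Set

noncomputable section

/-- Partial derivative in the space variable `x` (complex-valued). -/
def pdC (f : ℝ → ℝ → ℂ) : ℝ → ℝ → ℂ := fun t x => deriv (fun y => f t y) x

/-- Partial derivative in the time variable `t` (complex-valued). -/
def pdtC (f : ℝ → ℝ → ℂ) : ℝ → ℝ → ℂ := fun t x => deriv (fun s => f s x) t

/-- `f` and all its derivatives are Schwartz in `x`, locally uniformly in `t`. -/
def SchwartzLocC (f : ℝ → ℝ → ℂ) : Prop :=
  ∀ j k l : ℕ, ∀ T : ℝ, ∃ C : ℝ, ∀ t x : ℝ, |t| ≤ T →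
    |x| ^ k * ‖pdC^[l] (pdtC^[j] f) t x‖ ≤ C

/-- Classical solution of the reduced Zakharov system (ZSb):
`i uₜ + u_xx = n u`, `nₜ + v_x = 0`, `vₜ + (n + |u|²)_x = 0`. -/
structure IsZakharovSolution (u : ℝ → ℝ → ℂ) (n v : ℝ → ℝ → ℝ) : Prop where
  smooth_u : ContDiff ℝ (⊤ : ℕ∞) fun p : ℝ × ℝ => u p.1 p.2
  smooth_n : ContDiff ℝ (⊤ : ℕ∞) fun p : ℝ × ℝ => n p.1 p.2
  smooth_v : ContDiff ℝ (⊤ : ℕ∞) fun p : ℝ × ℝ => v p.1 p.2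
  schwartz_u : SchwartzLocC u
  schwartz_n : SchwartzLocR n
  schwartz_v : SchwartzLocR v
  eq_u : ∀ t x : ℝ, Complex.I * pdtC u t x + pdC (pdC u) t x = (n t x : ℂ) * u t x
  eq_n : ∀ t x : ℝ, pdtR n t x + pdR v t x = 0
  eq_v : ∀ t x : ℝ, pdtR v t x + pdR (fun s y => n s y + ‖u s y‖ ^ 2) t x = 0


namespace ZakharovAux

open Topology Complex

lemma hasDerivAt_sliceX {E : Type*} [NormedAddCommGroup E] [NormedSpace ℝ E]
    {F : ℝ × ℝ → E} (hF : Differentiable ℝ F) (t x : ℝ) :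
    HasDerivAt (fun y => F (t, y)) (fderiv ℝ F (t, x) (0, 1)) x :=
  (hF (t, x)).hasFDerivAt.comp_hasDerivAt x ((hasDerivAt_const x t).prodMk (hasDerivAt_id x))

lemma hasDerivAt_sliceT {E : Type*} [NormedAddCommGroup E] [NormedSpace ℝ E]
    {F : ℝ × ℝ → E} (hF : Differentiable ℝ F) (t x : ℝ) :
    HasDerivAt (fun s => F (s, x)) (fderiv ℝ F (t, x) (1, 0)) t :=
  (hF (t, x)).hasFDerivAt.comp_hasDerivAt t ((hasDerivAt_id t).prodMk (hasDerivAt_const t x))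

lemma contDiff_fderiv_apply {E : Type*} [NormedAddCommGroup E] [NormedSpace ℝ E]
    {F : ℝ × ℝ → E} (hF : ContDiff ℝ (⊤ : ℕ∞) F) (w : ℝ × ℝ) :
    ContDiff ℝ (⊤ : ℕ∞) (fun p => fderiv ℝ F p w) :=
  (hF.fderiv_right (by simp)).clm_apply contDiff_const

-- pdC
lemma hasDerivAt_pdC {u : ℝ → ℝ → ℂ} (hu : ContDiff ℝ (⊤ : ℕ∞) fun p : ℝ × ℝ => u p.1 p.2)
    (t x : ℝ) : HasDerivAt (fun y => u t y) (pdC u t x) x := by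
  have h := hasDerivAt_sliceX (hu.differentiable (by simp)) t x
  exact h.differentiableAt.hasDerivAt

lemma contDiff_pdC {u : ℝ → ℝ → ℂ} (hu : ContDiff ℝ (⊤ : ℕ∞) fun p : ℝ × ℝ => u p.1 p.2) :
    ContDiff ℝ (⊤ : ℕ∞) fun p : ℝ × ℝ => pdC u p.1 p.2 := by
  have h : (fun p : ℝ × ℝ => pdC u p.1 p.2)
      = fun p : ℝ × ℝ => fderiv ℝ (fun q : ℝ × ℝ => u q.1 q.2) p (0, 1) := by
    funext p
    exact (hasDerivAt_sliceX (hu.differentiable (by simp)) p.1 p.2).deriv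
  rw [h]; exact contDiff_fderiv_apply hu _

lemma hasDerivAt_pdtC {u : ℝ → ℝ → ℂ} (hu : ContDiff ℝ (⊤ : ℕ∞) fun p : ℝ × ℝ => u p.1 p.2)
    (t x : ℝ) : HasDerivAt (fun s => u s x) (pdtC u t x) t := by
  have h := hasDerivAt_sliceT (hu.differentiable (by simp)) t x
  exact h.differentiableAt.hasDerivAt

lemma contDiff_pdtC {u : ℝ → ℝ → ℂ} (hu : ContDiff ℝ (⊤ : ℕ∞) fun p : ℝ × ℝ => u p.1 p.2) :
    ContDiff ℝ (⊤ : ℕ∞) fun p : ℝ × ℝ => pdtC u p.1 p.2 := by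
  have h : (fun p : ℝ × ℝ => pdtC u p.1 p.2)
      = fun p : ℝ × ℝ => fderiv ℝ (fun q : ℝ × ℝ => u q.1 q.2) p (1, 0) := by
    funext p
    exact (hasDerivAt_sliceT (hu.differentiable (by simp)) p.1 p.2).deriv
  rw [h]; exact contDiff_fderiv_apply hu _

-- pdR
lemma hasDerivAt_pdR {u : ℝ → ℝ → ℝ} (hu : ContDiff ℝ (⊤ : ℕ∞) fun p : ℝ × ℝ => u p.1 p.2)
    (t x : ℝ) : HasDerivAt (fun y => u t y) (pdR u t x) x := by
  have h := hasDerivAt_sliceX (hu.differentiable (by simp)) t x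
  exact h.differentiableAt.hasDerivAt

lemma contDiff_pdR {u : ℝ → ℝ → ℝ} (hu : ContDiff ℝ (⊤ : ℕ∞) fun p : ℝ × ℝ => u p.1 p.2) :
    ContDiff ℝ (⊤ : ℕ∞) fun p : ℝ × ℝ => pdR u p.1 p.2 := by
  have h : (fun p : ℝ × ℝ => pdR u p.1 p.2)
      = fun p : ℝ × ℝ => fderiv ℝ (fun q : ℝ × ℝ => u q.1 q.2) p (0, 1) := by
    funext p
    exact (hasDerivAt_sliceX (hu.differentiable (by simp)) p.1 p.2).deriv
  rw [h]; exact contDiff_fderiv_apply hu _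

lemma hasDerivAt_pdtR {u : ℝ → ℝ → ℝ} (hu : ContDiff ℝ (⊤ : ℕ∞) fun p : ℝ × ℝ => u p.1 p.2)
    (t x : ℝ) : HasDerivAt (fun s => u s x) (pdtR u t x) t := by
  have h := hasDerivAt_sliceT (hu.differentiable (by simp)) t x
  exact h.differentiableAt.hasDerivAt

lemma contDiff_pdtR {u : ℝ → ℝ → ℝ} (hu : ContDiff ℝ (⊤ : ℕ∞) fun p : ℝ × ℝ => u p.1 p.2) :
    ContDiff ℝ (⊤ : ℕ∞) fun p : ℝ × ℝ => pdtR u p.1 p.2 := by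
  have h : (fun p : ℝ × ℝ => pdtR u p.1 p.2)
      = fun p : ℝ × ℝ => fderiv ℝ (fun q : ℝ × ℝ => u q.1 q.2) p (1, 0) := by
    funext p
    exact (hasDerivAt_sliceT (hu.differentiable (by simp)) p.1 p.2).deriv
  rw [h]; exact contDiff_fderiv_apply hu _

-- Clairaut for u
lemma pd_swap {u : ℝ → ℝ → ℂ} (hu : ContDiff ℝ (⊤ : ℕ∞) fun p : ℝ × ℝ => u p.1 p.2)
    (t x : ℝ) : pdtC (pdC u) t x = pdC (pdtC u) t x := by
  set U : ℝ × ℝ → ℂ := fun p => u p.1 p.2 with hU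
  set G : ℝ × ℝ → (ℝ × ℝ) →L[ℝ] ℂ := fderiv ℝ U with hG
  have hGs : ContDiff ℝ (⊤ : ℕ∞) G := hu.fderiv_right (by simp)
  have hGd : Differentiable ℝ G := hGs.differentiable (by simp)
  have hUd : Differentiable ℝ U := hu.differentiable (by simp)
  have hsym := second_derivative_symmetric (f := U) (f' := G) (f'' := fderiv ℝ G (t, x))
    (fun y => (hUd y).hasFDerivAt) ((hGd (t, x)).hasFDerivAt)
  -- pdtC (pdC u) t x = fderiv G (t,x) (1,0) (0,1)
  have h1 : pdtC (pdC u) t x = (fderiv ℝ G (t, x) (1, 0)) (0, 1) := by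
    have hx : ∀ s y : ℝ, pdC u s y = G (s, y) (0, 1) := fun s y =>
      (hasDerivAt_sliceX hUd s y).deriv
    have hder : HasDerivAt (fun s => pdC u s x) ((fderiv ℝ G (t, x) (1, 0)) (0, 1)) t := by
      have h2 : HasDerivAt (fun s => G (s, x)) (fderiv ℝ G (t, x) (1, 0)) t :=
        hasDerivAt_sliceT hGd t x
      have h3 := (ContinuousLinearMap.apply ℝ ℂ ((0:ℝ), (1:ℝ))).hasFDerivAt.comp_hasDerivAt t h2
      simp only [Function.comp_def] at h3
      have : (fun s => ContinuousLinearMap.apply ℝ ℂ ((0:ℝ), (1:ℝ)) (G (s, x)))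
          = fun s => pdC u s x := by funext s; simp [ContinuousLinearMap.apply, hx]
      rw [this] at h3
      exact h3
    exact hder.deriv
  have h2 : pdC (pdtC u) t x = (fderiv ℝ G (t, x) (0, 1)) (1, 0) := by
    have hx : ∀ s y : ℝ, pdtC u s y = G (s, y) (1, 0) := fun s y =>
      (hasDerivAt_sliceT hUd s y).deriv
    have hder : HasDerivAt (fun y => pdtC u t y) ((fderiv ℝ G (t, x) (0, 1)) (1, 0)) x := by
      have h2 : HasDerivAt (fun y => G (t, y)) (fderiv ℝ G (t, x) (0, 1)) x :=
        hasDerivAt_sliceX hGd t x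
      have h3 := (ContinuousLinearMap.apply ℝ ℂ ((1:ℝ), (0:ℝ))).hasFDerivAt.comp_hasDerivAt x h2
      simp only [Function.comp_def] at h3
      have : (fun y => ContinuousLinearMap.apply ℝ ℂ ((1:ℝ), (0:ℝ)) (G (t, y)))
          = fun y => pdtC u t y := by funext y; simp [ContinuousLinearMap.apply, hx]
      rw [this] at h3
      exact h3
    exact hder.deriv
  rw [h1, h2, hsym]




-- generic decay facts
lemma tendsto_decay_atTop {C : ℝ} : Tendsto (fun x : ℝ => C / (1 + x ^ 2)) atTop (𝓝 0) := by
  apply Tendsto.div_atTop (tendsto_const_nhds)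
  exact tendsto_atTop_add_const_left _ 1 (tendsto_pow_atTop two_ne_zero)

lemma tendsto_decay_atBot {C : ℝ} : Tendsto (fun x : ℝ => C / (1 + x ^ 2)) atBot (𝓝 0) := by
  apply Tendsto.div_atTop (tendsto_const_nhds)
  apply tendsto_atTop_add_const_left _ 1
  have : (fun x : ℝ => x ^ 2) = fun x : ℝ => |x| ^ 2 := by funext x; rw [_root_.sq_abs]
  rw [this]
  exact (tendsto_pow_atTop two_ne_zero).comp tendsto_abs_atBot_atTop

lemma tendsto_zero_of_decay {E : Type*} [NormedAddCommGroup E] {f : ℝ → E} {C : ℝ}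
    (h : ∀ x, ‖f x‖ ≤ C / (1 + x ^ 2)) :
    Tendsto f atTop (𝓝 0) ∧ Tendsto f atBot (𝓝 0) :=
  ⟨squeeze_zero_norm h tendsto_decay_atTop, squeeze_zero_norm h tendsto_decay_atBot⟩

lemma integrable_decay {C : ℝ} : Integrable (fun x : ℝ => C / (1 + x ^ 2)) := by
  have := integrable_inv_one_add_sq.const_mul C
  simpa [div_eq_mul_inv] using this

lemma integrable_of_decay {E : Type*} [NormedAddCommGroup E] {f : ℝ → E} {C : ℝ}
    (hf : Continuous f) (h : ∀ x, ‖f x‖ ≤ C / (1 + x ^ 2)) : Integrable f :=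
  Integrable.mono' integrable_decay hf.aestronglyMeasurable (Eventually.of_forall h)

/-- FTC: integral of a derivative over ℝ vanishes. -/
lemma integral_deriv_zero {h h' : ℝ → ℝ} (hd : ∀ x, HasDerivAt h (h' x) x)
    (hi : Integrable h') (htop : Tendsto h atTop (𝓝 0)) (hbot : Tendsto h atBot (𝓝 0)) :
    ∫ x, h' x = 0 := by
  have t1 := integral_Ioi_of_hasDerivAt_of_tendsto' (a := 0) (f := h) (f' := h')
    (fun x _ => hd x) hi.integrableOn htop
  have t2 := integral_Iic_of_hasDerivAt_of_tendsto' (a := 0) (f := h) (f' := h')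
    (fun x _ => hd x) hi.integrableOn hbot
  have := intervalIntegral.integral_Iic_add_Ioi (b := (0:ℝ)) (f := h') hi.integrableOn hi.integrableOn
  rw [t1, t2] at this
  linarith [this.symm]

/-- constancy from vanishing derivative -/
lemma const_of_hasDerivAt_zero {f : ℝ → ℝ} (h : ∀ t, HasDerivAt f 0 t) (t : ℝ) : f t = f 0 :=
  is_const_of_deriv_eq_zero (fun x => (h x).differentiableAt) (fun x => (h x).deriv) t 0

-- derivative of ‖f‖² for complex-valued f
lemma norm_sq_complex (z : ℂ) : ‖z‖ ^ 2 = z.re ^ 2 + z.im ^ 2 := by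
  rw [← Complex.normSq_eq_norm_sq, Complex.normSq_apply]; ring

lemma hasDerivAt_norm_sq {f : ℝ → ℂ} {f' : ℂ} {x : ℝ} (hf : HasDerivAt f f' x) :
    HasDerivAt (fun y => ‖f y‖ ^ 2) (2 * ((starRingEnd ℂ) (f x) * f').re) x := by
  have hre : HasDerivAt (fun y => (f y).re) f'.re x :=
    (Complex.reCLM.hasFDerivAt.comp_hasDerivAt x hf)
  have him : HasDerivAt (fun y => (f y).im) f'.im x :=
    (Complex.imCLM.hasFDerivAt.comp_hasDerivAt x hf)
  have h := (hre.pow 2).add (him.pow 2)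
  have heq : (fun y => (f y).re ^ 2 + (f y).im ^ 2) = fun y => ‖f y‖ ^ 2 := by
    funext y; rw [norm_sq_complex]
  replace h : HasDerivAt (fun y => (f y).re ^ 2 + (f y).im ^ 2) _ x := h
  rw [heq] at h
  convert h using 1
  simp [Complex.mul_re, Complex.conj_re, Complex.conj_im]
  ring

/-- differentiation under the integral sign, with explicit interval bound -/
lemma hasDerivAt_integral {F F' : ℝ → ℝ → ℝ} {bound : ℝ → ℝ} (t₀ : ℝ)
    (hF' : ∀ t x, |t - t₀| < 1 → HasDerivAt (fun s => F s x) (F' t x) t)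
    (meas : ∀ t, AEStronglyMeasurable (F t) volume)
    (meas' : AEStronglyMeasurable (F' t₀) volume)
    (hint : Integrable (F t₀))
    (bint : Integrable bound)
    (hb : ∀ t x, |t - t₀| < 1 → |F' t x| ≤ bound x) :
    Integrable (F' t₀) ∧ HasDerivAt (fun t => ∫ x, F t x) (∫ x, F' t₀ x) t₀ := by
  have key := hasDerivAt_integral_of_dominated_loc_of_deriv_le (μ := volume)
    (F := F) (F' := F') (x₀ := t₀) (bound := bound) (Metric.ball_mem_nhds t₀ one_pos)
    (Eventually.of_forall meas) hint meas'
    (Eventually.of_forall fun x => fun t ht => hb t x (by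
      rwa [Metric.mem_ball, Real.dist_eq] at ht))
    bint
    (Eventually.of_forall fun x => fun t ht => hF' t x (by
      rwa [Metric.mem_ball, Real.dist_eq] at ht))
  exact key


lemma re_conj_mul_le (a b : ℂ) : |((starRingEnd ℂ) a * b).re| ≤ ‖a‖ * ‖b‖ := by
  calc |((starRingEnd ℂ) a * b).re| ≤ ‖(starRingEnd ℂ) a * b‖ := Complex.abs_re_le_norm _
  _ = ‖a‖ * ‖b‖ := by rw [norm_mul, RCLike.norm_conj]

lemma im_conj_mul_le (a b : ℂ) : |((starRingEnd ℂ) a * b).im| ≤ ‖a‖ * ‖b‖ := by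
  calc |((starRingEnd ℂ) a * b).im| ≤ ‖(starRingEnd ℂ) a * b‖ := Complex.abs_im_le_norm _
  _ = ‖a‖ * ‖b‖ := by rw [norm_mul, RCLike.norm_conj]

lemma decayC {f : ℝ → ℝ → ℂ} (hf : SchwartzLocC f) (j l : ℕ) (T : ℝ) :
    ∃ C : ℝ, 0 ≤ C ∧ ∀ t x : ℝ, |t| ≤ T → ‖pdC^[l] (pdtC^[j] f) t x‖ ≤ C / (1 + x ^ 2) := by
  obtain ⟨C0, hC0⟩ := hf j 0 l T
  obtain ⟨C2, hC2⟩ := hf j 2 l T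
  refine ⟨|C0| + |C2|, by positivity, fun t x ht => ?_⟩
  have h0 := hC0 t x ht
  have h2 := hC2 t x ht
  rw [pow_zero, one_mul] at h0
  rw [_root_.sq_abs] at h2
  have hx : (0:ℝ) < 1 + x ^ 2 := by positivity
  rw [le_div_iff₀ hx]
  have hn : (0:ℝ) ≤ ‖pdC^[l] (pdtC^[j] f) t x‖ := norm_nonneg _
  nlinarith [le_abs_self C0, le_abs_self C2]

lemma decayR {f : ℝ → ℝ → ℝ} (hf : SchwartzLocR f) (j l : ℕ) (T : ℝ) :
    ∃ C : ℝ, 0 ≤ C ∧ ∀ t x : ℝ, |t| ≤ T → |pdR^[l] (pdtR^[j] f) t x| ≤ C / (1 + x ^ 2) := by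
  obtain ⟨C0, hC0⟩ := hf j 0 l T
  obtain ⟨C2, hC2⟩ := hf j 2 l T
  refine ⟨|C0| + |C2|, by positivity, fun t x ht => ?_⟩
  have h0 := hC0 t x ht
  have h2 := hC2 t x ht
  rw [pow_zero, one_mul] at h0
  rw [_root_.sq_abs] at h2
  have hx : (0:ℝ) < 1 + x ^ 2 := by positivity
  rw [le_div_iff₀ hx]
  have hn : (0:ℝ) ≤ |pdR^[l] (pdtR^[j] f) t x| := abs_nonneg _
  nlinarith [le_abs_self C0, le_abs_self C2]

lemma contSliceC {g : ℝ → ℝ → ℂ} (h : ContDiff ℝ (⊤ : ℕ∞) fun p : ℝ × ℝ => g p.1 p.2) (t : ℝ) :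
    Continuous fun x => g t x := h.continuous.comp (Continuous.prodMk_right t)

lemma contSliceR {g : ℝ → ℝ → ℝ} (h : ContDiff ℝ (⊤ : ℕ∞) fun p : ℝ × ℝ => g p.1 p.2) (t : ℝ) :
    Continuous fun x => g t x := h.continuous.comp (Continuous.prodMk_right t)

lemma div_le_of_decay {C x : ℝ} (hC : 0 ≤ C) : C / (1 + x ^ 2) ≤ C := by
  apply div_le_self hC
  nlinarith [sq_nonneg x]


lemma mul_decay_bound {a b A B : ℝ} (x : ℝ) (hA : 0 ≤ A) (ha : |a| ≤ A)
    (hb : |b| ≤ B / (1 + x ^ 2)) : |a * b| ≤ A * B / (1 + x ^ 2) := by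
  rw [abs_mul, mul_div_assoc]
  exact mul_le_mul ha hb (abs_nonneg _) hA

lemma abs_add₅ (a b c d e : ℝ) : |a + b + c + d + e| ≤ |a| + |b| + |c| + |d| + |e| := by
  have h1 := abs_add_le (a + b + c + d) e
  have h2 := abs_add_le (a + b + c) d
  have h3 := abs_add_le (a + b) c
  have h4 := abs_add_le a b
  linarith



lemma sq_decay {r C x : ℝ} (h0 : 0 ≤ C) (hb : |r| ≤ C) (hd : |r| ≤ C / (1 + x ^ 2)) :
    |r ^ 2| ≤ C * C / (1 + x ^ 2) := by
  rw [_root_.abs_of_nonneg (sq_nonneg r), sq, ← abs_mul_self, abs_mul]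
  calc |r| * |r| ≤ C * (C / (1 + x ^ 2)) := mul_le_mul hb hd (abs_nonneg _) h0
    _ = C * C / (1 + x ^ 2) := by ring

lemma norm_sq_decay {z : ℂ} {C x : ℝ} (h0 : 0 ≤ C) (hb : ‖z‖ ≤ C)
    (hd : ‖z‖ ≤ C / (1 + x ^ 2)) : |‖z‖ ^ 2| ≤ C * C / (1 + x ^ 2) :=
  sq_decay h0 (by rwa [abs_norm]) (by rwa [abs_norm])

/-- Cauchy-Schwarz for integrals of nonnegative functions. -/
lemma holder_sq {f g : ℝ → ℝ} (hfc : Continuous f) (hgc : Continuous g)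
    (hf0 : ∀ x, 0 ≤ f x) (hg0 : ∀ x, 0 ≤ g x)
    (hf2 : Integrable (fun x => f x ^ 2)) (hg2 : Integrable (fun x => g x ^ 2)) :
    (∫ x : ℝ, f x * g x) ^ 2 ≤ (∫ x : ℝ, f x ^ 2) * (∫ x : ℝ, g x ^ 2) := by
  have hpq : Real.HolderConjugate 2 2 := Real.HolderConjugate.two_two
  have hfm : MemLp f (ENNReal.ofReal 2) := by
    rw [ENNReal.ofReal_ofNat]
    exact (memLp_two_iff_integrable_sq hfc.aestronglyMeasurable).2 hf2
  have hgm : MemLp g (ENNReal.ofReal 2) := by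
    rw [ENNReal.ofReal_ofNat]
    exact (memLp_two_iff_integrable_sq hgc.aestronglyMeasurable).2 hg2
  have key := integral_mul_le_Lp_mul_Lq_of_nonneg hpq (Eventually.of_forall hf0)
    (Eventually.of_forall hg0) hfm hgm
  have hrpow : ∀ h : ℝ → ℝ, (fun x => h x ^ (2:ℝ)) = fun x => h x ^ 2 := fun h =>
    funext fun x => by
      rw [show (2:ℝ) = ((2:ℕ):ℝ) by norm_num, Real.rpow_natCast]
  rw [hrpow f, hrpow g] at key
  have hX0 : 0 ≤ ∫ x : ℝ, f x ^ 2 := integral_nonneg fun x => sq_nonneg _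
  have hY0 : 0 ≤ ∫ x : ℝ, g x ^ 2 := integral_nonneg fun x => sq_nonneg _
  have hI0 : 0 ≤ ∫ x : ℝ, f x * g x :=
    integral_nonneg fun x => mul_nonneg (hf0 x) (hg0 x)
  have hsq : ∀ Z : ℝ, 0 ≤ Z → (Z ^ ((1:ℝ)/2)) ^ 2 = Z := fun Z hZ => by
    rw [← Real.rpow_natCast (Z ^ ((1:ℝ)/2)) 2, ← Real.rpow_mul hZ]; norm_num
  calc (∫ x : ℝ, f x * g x) ^ 2
      ≤ ((∫ x : ℝ, f x ^ 2) ^ ((1:ℝ)/2) * (∫ x : ℝ, g x ^ 2) ^ ((1:ℝ)/2)) ^ 2 :=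
        pow_le_pow_left₀ hI0 key 2
    _ = ((∫ x : ℝ, f x ^ 2) ^ ((1:ℝ)/2)) ^ 2 * ((∫ x : ℝ, g x ^ 2) ^ ((1:ℝ)/2)) ^ 2 := by
        rw [mul_pow]
    _ = (∫ x : ℝ, f x ^ 2) * (∫ x : ℝ, g x ^ 2) := by
        rw [hsq _ hX0, hsq _ hY0]


end ZakharovAux

namespace ZakharovAux

open Topology

variable {u : ℝ → ℝ → ℂ} {n v : ℝ → ℝ → ℝ}

/-- rearranged Schrödinger equation -/
lemma ut_eq (S : IsZakharovSolution u n v) (t x : ℝ) :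
    pdtC u t x = Complex.I * (pdC (pdC u) t x - (n t x : ℂ) * u t x) := by
  have h := S.eq_u t x
  have h2 : Complex.I * (Complex.I * pdtC u t x + pdC (pdC u) t x)
      = Complex.I * ((n t x : ℂ) * u t x) := by rw [h]
  rw [mul_add, ← mul_assoc, Complex.I_mul_I] at h2
  linear_combination -h2

lemma nt_eq (S : IsZakharovSolution u n v) (t x : ℝ) : pdtR n t x = -pdR v t x := by
  have h := S.eq_n t x; linarith

lemma vt_eq (S : IsZakharovSolution u n v) (t x : ℝ) :
    pdtR v t x = -(pdR n t x + 2 * ((starRingEnd ℂ) (u t x) * pdC u t x).re) := by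
  have h := S.eq_v t x
  have hd : pdR (fun s y => n s y + ‖u s y‖ ^ 2) t x
      = pdR n t x + 2 * ((starRingEnd ℂ) (u t x) * pdC u t x).re := by
    have h1 : HasDerivAt (fun y => n t y) (pdR n t x) x := hasDerivAt_pdR S.smooth_n t x
    have h2 : HasDerivAt (fun y => ‖u t y‖ ^ 2)
        (2 * ((starRingEnd ℂ) (u t x) * pdC u t x).re) x :=
      hasDerivAt_norm_sq (hasDerivAt_pdC S.smooth_u t x)
    have h3 := h1.add h2
    have heq : ((fun y => n t y) + fun y => ‖u t y‖ ^ 2)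
        = fun y => n t y + ‖u t y‖ ^ 2 := by
      funext y; rfl
    rw [heq] at h3
    exact h3.deriv
  rw [hd] at h
  linarith

/-- Conservation of mass. -/
lemma mass_const (S : IsZakharovSolution u n v) (t : ℝ) :
    ∫ x : ℝ, ‖u t x‖ ^ 2 = ∫ x : ℝ, ‖u 0 x‖ ^ 2 := by
  have hsu := S.smooth_u
  have hsux := contDiff_pdC hsu
  have hsuxx := contDiff_pdC hsux
  have hsut := contDiff_pdtC hsu
  have main : ∀ t₀ : ℝ, HasDerivAt (fun s => ∫ x : ℝ, ‖u s x‖ ^ 2) 0 t₀ := by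
    intro t₀
    set T : ℝ := |t₀| + 1 with hT
    obtain ⟨Cu, hCu0, hCu⟩ := decayC S.schwartz_u 0 0 T
    obtain ⟨Cux, hCux0, hCux⟩ := decayC S.schwartz_u 0 1 T
    obtain ⟨Cuxx, hCuxx0, hCuxx⟩ := decayC S.schwartz_u 0 2 T
    obtain ⟨Cut, hCut0, hCut⟩ := decayC S.schwartz_u 1 0 T
    simp only [Function.iterate_zero, Function.iterate_one, Function.iterate_succ,
      Function.comp_apply, id_eq] at hCu hCux hCuxx hCut
    have ht₀ : |t₀| ≤ T := by rw [hT]; linarith [abs_nonneg t₀]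
    set F' : ℝ → ℝ → ℝ := fun s x => 2 * ((starRingEnd ℂ) (u s x) * pdtC u s x).re with hF'def
    have key : Integrable (F' t₀) ∧
        HasDerivAt (fun s => ∫ x : ℝ, ‖u s x‖ ^ 2) (∫ x : ℝ, F' t₀ x) t₀ := by
      apply hasDerivAt_integral (bound := fun x => 2 * Cu * Cut / (1 + x ^ 2)) t₀
      · intro s x _
        exact hasDerivAt_norm_sq (hasDerivAt_pdtC hsu s x)
      · intro s
        exact (((contSliceC hsu s).norm.pow 2)).aestronglyMeasurable
      · exact (continuous_const.mul (Complex.continuous_re.comp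
          ((Complex.continuous_conj.comp (contSliceC hsu t₀)).mul
            (contSliceC hsut t₀)))).aestronglyMeasurable
      · apply integrable_of_decay (C := Cu * Cu) ((contSliceC hsu t₀).norm.pow 2)
        intro x
        have h1 := hCu t₀ x ht₀
        have h2 : ‖u t₀ x‖ ≤ Cu := h1.trans (div_le_of_decay hCu0)
        have hx : (0:ℝ) < 1 + x ^ 2 := by positivity
        show ‖‖u t₀ x‖ ^ 2‖ ≤ Cu * Cu / (1 + x ^ 2)
        rw [norm_pow, norm_norm, le_div_iff₀ hx] at *
        calc ‖u t₀ x‖ ^ 2 * (1 + x ^ 2) = ‖u t₀ x‖ * (‖u t₀ x‖ * (1 + x ^ 2)) := by ring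
          _ ≤ Cu * Cu := by
              apply mul_le_mul h2 _ (by positivity) hCu0
              rw [← le_div_iff₀ hx]; exact hCu t₀ x ht₀
      · exact integrable_decay
      · intro s x hs
        have hsT : |s| ≤ T := by
          have := abs_sub_abs_le_abs_sub s t₀
          rw [hT]; linarith
        have h1 : ‖u s x‖ ≤ Cu := (hCu s x hsT).trans (div_le_of_decay hCu0)
        have h2 := hCut s x hsT
        have hb := re_conj_mul_le (u s x) (pdtC u s x)
        simp only [hF'def]
        calc |2 * ((starRingEnd ℂ) (u s x) * pdtC u s x).re|
            = 2 * |((starRingEnd ℂ) (u s x) * pdtC u s x).re| := by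
              rw [abs_mul, abs_two]
          _ ≤ 2 * (‖u s x‖ * ‖pdtC u s x‖) := by linarith
          _ ≤ 2 * (Cu * (Cut / (1 + x ^ 2))) := by
              apply mul_le_mul_of_nonneg_left _ (by norm_num)
              exact mul_le_mul h1 h2 (norm_nonneg _) hCu0
          _ = 2 * Cu * Cut / (1 + x ^ 2) := by ring
    -- now show the derivative integral vanishes
    set h : ℝ → ℝ := fun y => -2 * ((starRingEnd ℂ) (u t₀ y) * pdC u t₀ y).im with hhdef
    set h' : ℝ → ℝ := fun y => -2 * ((starRingEnd ℂ) (pdC u t₀ y) * pdC u t₀ y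
        + (starRingEnd ℂ) (u t₀ y) * pdC (pdC u) t₀ y).im with hh'def
    have hderiv : ∀ x, HasDerivAt h (h' x) x := by
      intro x
      have h1 : HasDerivAt (fun y => (starRingEnd ℂ) (u t₀ y) * pdC u t₀ y)
          ((starRingEnd ℂ) (pdC u t₀ x) * pdC u t₀ x
            + (starRingEnd ℂ) (u t₀ x) * pdC (pdC u) t₀ x) x := by
        have ha := (hasDerivAt_pdC hsu t₀ x).star
        have hb := hasDerivAt_pdC hsux t₀ x
        have := ha.mul hb
        simpa [RCLike.star_def, Pi.mul_def] using this
      have h2 := Complex.imCLM.hasFDerivAt.comp_hasDerivAt x h1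
      have h3 := h2.const_mul (-2 : ℝ)
      simpa [hhdef, hh'def] using h3
    have heq : ∀ x, F' t₀ x = h' x := by
      intro x
      have hut := ut_eq S t₀ x
      simp only [hF'def, hh'def, hut]
      simp only [Complex.mul_re, Complex.mul_im, Complex.add_re, Complex.add_im,
        Complex.sub_re, Complex.sub_im, Complex.conj_re, Complex.conj_im,
        Complex.I_re, Complex.I_im, Complex.ofReal_re, Complex.ofReal_im]
      ring
    have hint' : Integrable h' := key.1.congr (Eventually.of_forall heq)
    have hby : ∀ y, ‖h y‖ ≤ 2 * Cu * Cux / (1 + y ^ 2) := by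
      intro y
      have h1 : ‖u t₀ y‖ ≤ Cu := (hCu t₀ y ht₀).trans (div_le_of_decay hCu0)
      have h2 := hCux t₀ y ht₀
      have him := im_conj_mul_le (u t₀ y) (pdC u t₀ y)
      simp only [hhdef, Real.norm_eq_abs]
      calc |(-2 : ℝ) * ((starRingEnd ℂ) (u t₀ y) * pdC u t₀ y).im|
          = 2 * |((starRingEnd ℂ) (u t₀ y) * pdC u t₀ y).im| := by
            rw [abs_mul]; norm_num
        _ ≤ 2 * (‖u t₀ y‖ * ‖pdC u t₀ y‖) := by linarith
        _ ≤ 2 * (Cu * (Cux / (1 + y ^ 2))) := by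
            apply mul_le_mul_of_nonneg_left _ (by norm_num)
            exact mul_le_mul h1 h2 (norm_nonneg _) hCu0
        _ = 2 * Cu * Cux / (1 + y ^ 2) := by ring
    obtain ⟨htop, hbot⟩ := tendsto_zero_of_decay hby
    have hzero : ∫ x : ℝ, F' t₀ x = 0 := by
      have hfun : (fun x => F' t₀ x) = h' := funext heq
      calc ∫ x : ℝ, F' t₀ x = ∫ x : ℝ, h' x := by rw [hfun]
        _ = 0 := integral_deriv_zero hderiv hint' htop hbot
    have hkey := key.2
    rw [hzero] at hkey
    exact hkey
  exact const_of_hasDerivAt_zero main t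


/-- Conservation of energy. -/
lemma energy_const (S : IsZakharovSolution u n v) (t : ℝ) :
    ∫ x : ℝ, (‖pdC u t x‖ ^ 2 + (1/2) * ((n t x) ^ 2 + (v t x) ^ 2)
        + n t x * ‖u t x‖ ^ 2)
      = ∫ x : ℝ, (‖pdC u 0 x‖ ^ 2 + (1/2) * ((n 0 x) ^ 2 + (v 0 x) ^ 2)
        + n 0 x * ‖u 0 x‖ ^ 2) := by
  have hsu := S.smooth_u
  have hsux := contDiff_pdC hsu
  have hsuxx := contDiff_pdC hsux
  have hsut := contDiff_pdtC hsu
  have hsutx := contDiff_pdC hsut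
  have hsn := S.smooth_n
  have hsnx := contDiff_pdR hsn
  have hsnt := contDiff_pdtR hsn
  have hsv := S.smooth_v
  have hsvx := contDiff_pdR hsv
  have hsvt := contDiff_pdtR hsv
  have main : ∀ t₀ : ℝ, HasDerivAt (fun s => ∫ x : ℝ,
      (‖pdC u s x‖ ^ 2 + (1/2) * ((n s x) ^ 2 + (v s x) ^ 2) + n s x * ‖u s x‖ ^ 2)) 0 t₀ := by
    intro t₀
    set T : ℝ := |t₀| + 1 with hT
    obtain ⟨Cu, hCu0, hCu⟩ := decayC S.schwartz_u 0 0 T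
    obtain ⟨Cux, hCux0, hCux⟩ := decayC S.schwartz_u 0 1 T
    obtain ⟨Cuxx, hCuxx0, hCuxx⟩ := decayC S.schwartz_u 0 2 T
    obtain ⟨Cut, hCut0, hCut⟩ := decayC S.schwartz_u 1 0 T
    obtain ⟨Cutx, hCutx0, hCutx⟩ := decayC S.schwartz_u 1 1 T
    obtain ⟨Cn, hCn0, hCn⟩ := decayR S.schwartz_n 0 0 T
    obtain ⟨Cnx, hCnx0, hCnx⟩ := decayR S.schwartz_n 0 1 T
    obtain ⟨Cnt, hCnt0, hCnt⟩ := decayR S.schwartz_n 1 0 T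
    obtain ⟨Cv, hCv0, hCv⟩ := decayR S.schwartz_v 0 0 T
    obtain ⟨Cvx, hCvx0, hCvx⟩ := decayR S.schwartz_v 0 1 T
    obtain ⟨Cvt, hCvt0, hCvt⟩ := decayR S.schwartz_v 1 0 T
    simp only [Function.iterate_zero, Function.iterate_one, Function.iterate_succ,
      Function.comp_apply, id_eq] at hCu hCux hCuxx hCut hCutx hCn hCnx hCnt hCv hCvx hCvt
    have ht₀ : |t₀| ≤ T := by rw [hT]; linarith [abs_nonneg t₀]
    -- uniform (non-decaying) bounds
    have bu : ∀ s x : ℝ, |s| ≤ T → ‖u s x‖ ≤ Cu :=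
      fun s x hs => (hCu s x hs).trans (div_le_of_decay hCu0)
    have bux : ∀ s x : ℝ, |s| ≤ T → ‖pdC u s x‖ ≤ Cux :=
      fun s x hs => (hCux s x hs).trans (div_le_of_decay hCux0)
    have bn : ∀ s x : ℝ, |s| ≤ T → |n s x| ≤ Cn :=
      fun s x hs => (hCn s x hs).trans (div_le_of_decay hCn0)
    have bv : ∀ s x : ℝ, |s| ≤ T → |v s x| ≤ Cv :=
      fun s x hs => (hCv s x hs).trans (div_le_of_decay hCv0)
    set G' : ℝ → ℝ → ℝ := fun s x =>
      2 * ((starRingEnd ℂ) (pdC u s x) * pdC (pdtC u) s x).re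
      + n s x * pdtR n s x + v s x * pdtR v s x
      + pdtR n s x * ‖u s x‖ ^ 2
      + 2 * n s x * ((starRingEnd ℂ) (u s x) * pdtC u s x).re with hG'def
    have key : Integrable (G' t₀) ∧
        HasDerivAt (fun s => ∫ x : ℝ,
          (‖pdC u s x‖ ^ 2 + (1/2) * ((n s x) ^ 2 + (v s x) ^ 2) + n s x * ‖u s x‖ ^ 2))
          (∫ x : ℝ, G' t₀ x) t₀ := by
      apply hasDerivAt_integral
        (bound := fun x => (2 * Cux * Cutx + Cn * Cnt + Cv * Cvt + Cnt * (Cu * Cu)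
          + 2 * Cn * (Cu * Cut)) / (1 + x ^ 2)) t₀
      · intro s x _
        have h1 := hasDerivAt_norm_sq (hasDerivAt_pdtC hsux s x)
        have h2 := (((hasDerivAt_pdtR hsn s x).pow 2).add
          ((hasDerivAt_pdtR hsv s x).pow 2)).const_mul (1/2 : ℝ)
        have h3 := (hasDerivAt_pdtR hsn s x).mul (hasDerivAt_norm_sq (hasDerivAt_pdtC hsu s x))
        have h := (h1.add h2).add h3
        refine h.congr_deriv ?_
        rw [hG'def]
        simp only []
        rw [← pd_swap hsu]
        ring
      · intro s
        apply Continuous.aestronglyMeasurable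
        exact (((contSliceC hsux s).norm.pow 2).add
          (continuous_const.mul (((contSliceR hsn s).pow 2).add ((contSliceR hsv s).pow 2)))).add
          ((contSliceR hsn s).mul ((contSliceC hsu s).norm.pow 2))
      · apply Continuous.aestronglyMeasurable
        rw [hG'def]
        refine ((((continuous_const.mul (Complex.continuous_re.comp ((Complex.continuous_conj.comp
          (contSliceC hsux t₀)).mul (contSliceC hsutx t₀)))).add
          ((contSliceR hsn t₀).mul (contSliceR hsnt t₀))).add
          ((contSliceR hsv t₀).mul (contSliceR hsvt t₀))).add
          ((contSliceR hsnt t₀).mul ((contSliceC hsu t₀).norm.pow 2))).add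
          ((continuous_const.mul (contSliceR hsn t₀)).mul
            (Complex.continuous_re.comp ((Complex.continuous_conj.comp
              (contSliceC hsu t₀)).mul (contSliceC hsut t₀))))
      · apply integrable_of_decay
          (C := Cux * Cux + (1/2) * (Cn * Cn + Cv * Cv) + Cn * (Cu * Cu))
        · exact (((contSliceC hsux t₀).norm.pow 2).add
            (continuous_const.mul (((contSliceR hsn t₀).pow 2).add ((contSliceR hsv t₀).pow 2)))).add
            ((contSliceR hsn t₀).mul ((contSliceC hsu t₀).norm.pow 2))
        · intro x
          have e1 : |‖pdC u t₀ x‖ ^ 2| ≤ Cux * Cux / (1 + x ^ 2) := by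
            rw [abs_of_nonneg (by positivity), sq]
            calc ‖pdC u t₀ x‖ * ‖pdC u t₀ x‖
                ≤ Cux * (Cux / (1 + x ^ 2)) :=
                  mul_le_mul (bux t₀ x ht₀) (hCux t₀ x ht₀) (norm_nonneg _) hCux0
              _ = Cux * Cux / (1 + x ^ 2) := by ring
          have e2 : |(n t₀ x) ^ 2| ≤ Cn * Cn / (1 + x ^ 2) := by
            rw [abs_of_nonneg (by positivity), sq, ← abs_mul_self, abs_mul]
            calc |n t₀ x| * |n t₀ x|
                ≤ Cn * (Cn / (1 + x ^ 2)) :=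
                  mul_le_mul (bn t₀ x ht₀) (hCn t₀ x ht₀) (abs_nonneg _) hCn0
              _ = Cn * Cn / (1 + x ^ 2) := by ring
          have e3 : |(v t₀ x) ^ 2| ≤ Cv * Cv / (1 + x ^ 2) := by
            rw [abs_of_nonneg (by positivity), sq, ← abs_mul_self, abs_mul]
            calc |v t₀ x| * |v t₀ x|
                ≤ Cv * (Cv / (1 + x ^ 2)) :=
                  mul_le_mul (bv t₀ x ht₀) (hCv t₀ x ht₀) (abs_nonneg _) hCv0
              _ = Cv * Cv / (1 + x ^ 2) := by ring
          have e4 : |n t₀ x * ‖u t₀ x‖ ^ 2| ≤ Cu * Cu * Cn / (1 + x ^ 2) := by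
            have h1 : |‖u t₀ x‖ ^ 2| ≤ Cu * Cu := by
              rw [abs_of_nonneg (by positivity), sq]
              exact mul_le_mul (bu t₀ x ht₀) (bu t₀ x ht₀) (norm_nonneg _) hCu0
            have h2 := mul_decay_bound (a := ‖u t₀ x‖ ^ 2) (b := n t₀ x) x
              (by positivity) h1 (hCn t₀ x ht₀)
            calc |n t₀ x * ‖u t₀ x‖ ^ 2| = |‖u t₀ x‖ ^ 2 * n t₀ x| := by rw [mul_comm]
              _ ≤ Cu * Cu * Cn / (1 + x ^ 2) := h2
          have tri := abs_add_le ((‖pdC u t₀ x‖ : ℝ) ^ 2 + (1/2) * ((n t₀ x) ^ 2 + (v t₀ x) ^ 2))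
            (n t₀ x * ‖u t₀ x‖ ^ 2)
          have tri2 := abs_add_le ((‖pdC u t₀ x‖ : ℝ) ^ 2) ((1/2) * ((n t₀ x) ^ 2 + (v t₀ x) ^ 2))
          have tri3 := abs_add_le ((n t₀ x) ^ 2) ((v t₀ x) ^ 2)
          have habs2 : |(1/2 : ℝ) * ((n t₀ x) ^ 2 + (v t₀ x) ^ 2)|
              = (1/2) * |(n t₀ x) ^ 2 + (v t₀ x) ^ 2| := by
            rw [abs_mul]; norm_num
          rw [Real.norm_eq_abs]
          have expand : (Cux * Cux + (1/2) * (Cn * Cn + Cv * Cv) + Cn * (Cu * Cu)) / (1 + x ^ 2)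
              = Cux * Cux / (1 + x ^ 2) + (1/2) * (Cn * Cn / (1 + x ^ 2) + Cv * Cv / (1 + x ^ 2))
                + Cu * Cu * Cn / (1 + x ^ 2) := by ring
          rw [expand]
          linarith
      · exact integrable_decay
      · intro s x hs
        have hsT : |s| ≤ T := by
          have := abs_sub_abs_le_abs_sub s t₀
          rw [hT]; linarith
        have e1 : |2 * ((starRingEnd ℂ) (pdC u s x) * pdC (pdtC u) s x).re|
            ≤ 2 * Cux * Cutx / (1 + x ^ 2) := by
          rw [abs_mul, abs_two]
          calc 2 * |((starRingEnd ℂ) (pdC u s x) * pdC (pdtC u) s x).re|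
              ≤ 2 * (‖pdC u s x‖ * ‖pdC (pdtC u) s x‖) := by
                have := re_conj_mul_le (pdC u s x) (pdC (pdtC u) s x); linarith
            _ ≤ 2 * (Cux * (Cutx / (1 + x ^ 2))) := by
                have := mul_le_mul (bux s x hsT) (hCutx s x hsT) (norm_nonneg _) hCux0
                linarith
            _ = 2 * Cux * Cutx / (1 + x ^ 2) := by ring
        have e2 : |n s x * pdtR n s x| ≤ Cn * Cnt / (1 + x ^ 2) :=
          mul_decay_bound x hCn0 (bn s x hsT) (hCnt s x hsT)
        have e3 : |v s x * pdtR v s x| ≤ Cv * Cvt / (1 + x ^ 2) :=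
          mul_decay_bound x hCv0 (bv s x hsT) (hCvt s x hsT)
        have e4 : |pdtR n s x * ‖u s x‖ ^ 2| ≤ Cu * Cu * Cnt / (1 + x ^ 2) := by
          have h1 : |‖u s x‖ ^ 2| ≤ Cu * Cu := by
            rw [abs_of_nonneg (by positivity), sq]
            exact mul_le_mul (bu s x hsT) (bu s x hsT) (norm_nonneg _) hCu0
          have h2 := mul_decay_bound (a := ‖u s x‖ ^ 2) (b := pdtR n s x) x
            (by positivity) h1 (hCnt s x hsT)
          calc |pdtR n s x * ‖u s x‖ ^ 2| = |‖u s x‖ ^ 2 * pdtR n s x| := by rw [mul_comm]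
            _ ≤ Cu * Cu * Cnt / (1 + x ^ 2) := h2
        have e5 : |2 * n s x * ((starRingEnd ℂ) (u s x) * pdtC u s x).re|
            ≤ 2 * Cn * (Cu * Cut) / (1 + x ^ 2) := by
          have hre := re_conj_mul_le (u s x) (pdtC u s x)
          have hprod : |((starRingEnd ℂ) (u s x) * pdtC u s x).re| ≤ Cu * Cut / (1 + x ^ 2) := by
            calc |((starRingEnd ℂ) (u s x) * pdtC u s x).re|
                ≤ ‖u s x‖ * ‖pdtC u s x‖ := hre
              _ ≤ Cu * (Cut / (1 + x ^ 2)) :=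
                  mul_le_mul (bu s x hsT) (hCut s x hsT) (norm_nonneg _) hCu0
              _ = Cu * Cut / (1 + x ^ 2) := by ring
          calc |2 * n s x * ((starRingEnd ℂ) (u s x) * pdtC u s x).re|
              = 2 * |n s x| * |((starRingEnd ℂ) (u s x) * pdtC u s x).re| := by
                rw [abs_mul, abs_mul, abs_two]
            _ ≤ 2 * Cn * (Cu * Cut / (1 + x ^ 2)) := by
                apply mul_le_mul _ hprod (abs_nonneg _) (by positivity)
                have := bn s x hsT; linarith
            _ = 2 * Cn * (Cu * Cut) / (1 + x ^ 2) := by ring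
        rw [hG'def]
        simp only []
        have tri := abs_add₅ (2 * ((starRingEnd ℂ) (pdC u s x) * pdC (pdtC u) s x).re)
          (n s x * pdtR n s x) (v s x * pdtR v s x) (pdtR n s x * ‖u s x‖ ^ 2)
          (2 * n s x * ((starRingEnd ℂ) (u s x) * pdtC u s x).re)
        have expand : (2 * Cux * Cutx + Cn * Cnt + Cv * Cvt + Cnt * (Cu * Cu)
            + 2 * Cn * (Cu * Cut)) / (1 + x ^ 2)
            = 2 * Cux * Cutx / (1 + x ^ 2) + Cn * Cnt / (1 + x ^ 2) + Cv * Cvt / (1 + x ^ 2)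
              + Cu * Cu * Cnt / (1 + x ^ 2) + 2 * Cn * (Cu * Cut) / (1 + x ^ 2) := by ring
        rw [expand]
        linarith
    -- the flux function H and its derivative
    set H : ℝ → ℝ := fun y => 2 * ((starRingEnd ℂ) (pdC u t₀ y) * pdtC u t₀ y).re
      - n t₀ y * v t₀ y - v t₀ y * ‖u t₀ y‖ ^ 2 with hHdef
    set H' : ℝ → ℝ := fun y =>
      2 * ((starRingEnd ℂ) (pdC (pdC u) t₀ y) * pdtC u t₀ y
        + (starRingEnd ℂ) (pdC u t₀ y) * pdC (pdtC u) t₀ y).re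
      - (pdR n t₀ y * v t₀ y + n t₀ y * pdR v t₀ y)
      - (pdR v t₀ y * ‖u t₀ y‖ ^ 2 + v t₀ y
          * (2 * ((starRingEnd ℂ) (u t₀ y) * pdC u t₀ y).re)) with hH'def
    have hderiv : ∀ x, HasDerivAt H (H' x) x := by
      intro x
      have h1 : HasDerivAt (fun y => (starRingEnd ℂ) (pdC u t₀ y) * pdtC u t₀ y)
          ((starRingEnd ℂ) (pdC (pdC u) t₀ x) * pdtC u t₀ x
            + (starRingEnd ℂ) (pdC u t₀ x) * pdC (pdtC u) t₀ x) x := by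
        have ha := (hasDerivAt_pdC hsux t₀ x).star
        have hb := hasDerivAt_pdC hsut t₀ x
        have := ha.mul (hasDerivAt_pdC hsut t₀ x)
        simpa [RCLike.star_def, Pi.mul_def] using this
      have h1' := (Complex.reCLM.hasFDerivAt.comp_hasDerivAt x h1).const_mul (2 : ℝ)
      have h2 := (hasDerivAt_pdR hsn t₀ x).mul (hasDerivAt_pdR hsv t₀ x)
      have h3 := (hasDerivAt_pdR hsv t₀ x).mul (hasDerivAt_norm_sq (hasDerivAt_pdC hsu t₀ x))
      have h := (h1'.sub h2).sub h3
      exact h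
    have heq : ∀ x, G' t₀ x = H' x := by
      intro x
      have hut := ut_eq S t₀ x
      have hnt := nt_eq S t₀ x
      have hvt := vt_eq S t₀ x
      rw [hG'def, hH'def]
      simp only [hut, hnt, hvt]
      simp only [Complex.mul_re, Complex.mul_im, Complex.add_re, Complex.add_im,
        Complex.sub_re, Complex.sub_im, Complex.conj_re, Complex.conj_im,
        Complex.I_re, Complex.I_im, Complex.ofReal_re, Complex.ofReal_im]
      ring
    have hint' : Integrable H' := key.1.congr (Eventually.of_forall heq)
    have hby : ∀ y, ‖H y‖ ≤ (2 * Cux * Cut + Cn * Cv + Cv * (Cu * Cu)) / (1 + y ^ 2) := by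
      intro y
      have e1 : |2 * ((starRingEnd ℂ) (pdC u t₀ y) * pdtC u t₀ y).re|
          ≤ 2 * Cux * Cut / (1 + y ^ 2) := by
        rw [abs_mul, abs_two]
        calc 2 * |((starRingEnd ℂ) (pdC u t₀ y) * pdtC u t₀ y).re|
            ≤ 2 * (‖pdC u t₀ y‖ * ‖pdtC u t₀ y‖) := by
              have := re_conj_mul_le (pdC u t₀ y) (pdtC u t₀ y); linarith
          _ ≤ 2 * (Cux * (Cut / (1 + y ^ 2))) := by
              have := mul_le_mul (bux t₀ y ht₀) (hCut t₀ y ht₀) (norm_nonneg _) hCux0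
              linarith
          _ = 2 * Cux * Cut / (1 + y ^ 2) := by ring
      have e2 : |n t₀ y * v t₀ y| ≤ Cn * Cv / (1 + y ^ 2) :=
        mul_decay_bound y hCn0 (bn t₀ y ht₀) (hCv t₀ y ht₀)
      have e3 : |v t₀ y * ‖u t₀ y‖ ^ 2| ≤ Cu * Cu * Cv / (1 + y ^ 2) := by
        have h1 : |‖u t₀ y‖ ^ 2| ≤ Cu * Cu := by
          rw [abs_of_nonneg (by positivity), sq]
          exact mul_le_mul (bu t₀ y ht₀) (bu t₀ y ht₀) (norm_nonneg _) hCu0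
        have h2 := mul_decay_bound (a := ‖u t₀ y‖ ^ 2) (b := v t₀ y) y
          (by positivity) h1 (hCv t₀ y ht₀)
        calc |v t₀ y * ‖u t₀ y‖ ^ 2| = |‖u t₀ y‖ ^ 2 * v t₀ y| := by rw [mul_comm]
          _ ≤ Cu * Cu * Cv / (1 + y ^ 2) := h2
      rw [hHdef, Real.norm_eq_abs]
      simp only []
      have tri1 := abs_sub (2 * ((starRingEnd ℂ) (pdC u t₀ y) * pdtC u t₀ y).re
        - n t₀ y * v t₀ y) (v t₀ y * ‖u t₀ y‖ ^ 2)
      have tri2 := abs_sub (2 * ((starRingEnd ℂ) (pdC u t₀ y) * pdtC u t₀ y).re)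
        (n t₀ y * v t₀ y)
      have expand : (2 * Cux * Cut + Cn * Cv + Cv * (Cu * Cu)) / (1 + y ^ 2)
          = 2 * Cux * Cut / (1 + y ^ 2) + Cn * Cv / (1 + y ^ 2)
            + Cu * Cu * Cv / (1 + y ^ 2) := by ring
      rw [expand]
      linarith
    obtain ⟨htop, hbot⟩ := tendsto_zero_of_decay hby
    have hzero : ∫ x : ℝ, G' t₀ x = 0 := by
      have hfun : (fun x => G' t₀ x) = H' := funext heq
      calc ∫ x : ℝ, G' t₀ x = ∫ x : ℝ, H' x := by rw [hfun]
        _ = 0 := integral_deriv_zero hderiv hint' htop hbot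
    have hkey := key.2
    rw [hzero] at hkey
    exact hkey
  exact const_of_hasDerivAt_zero main t




set_option maxHeartbeats 1000000 in
lemma apriori (S : IsZakharovSolution u n v) (t : ℝ) :
    (∫ x : ℝ, (‖pdC u t x‖ ^ 2 + ‖u t x‖ ^ 2 + (v t x) ^ 2 + (n t x) ^ 2))
      ≤ 4 * (∫ x : ℝ, (‖pdC u 0 x‖ ^ 2 + (1/2) * ((n 0 x) ^ 2 + (v 0 x) ^ 2)
            + n 0 x * ‖u 0 x‖ ^ 2))
        + 8 * (∫ x : ℝ, ‖u 0 x‖ ^ 2) ^ 3 + (∫ x : ℝ, ‖u 0 x‖ ^ 2) := by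
  have hsu := S.smooth_u
  have hsux := contDiff_pdC hsu
  have hsn := S.smooth_n
  have hsv := S.smooth_v
  obtain ⟨Cu, hCu0, hCu⟩ := decayC S.schwartz_u 0 0 |t|
  obtain ⟨Cux, hCux0, hCux⟩ := decayC S.schwartz_u 0 1 |t|
  obtain ⟨Cn, hCn0, hCn⟩ := decayR S.schwartz_n 0 0 |t|
  obtain ⟨Cv, hCv0, hCv⟩ := decayR S.schwartz_v 0 0 |t|
  simp only [Function.iterate_zero, Function.iterate_one, id_eq] at hCu hCux hCn hCv
  have ht : |t| ≤ |t| := le_refl _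
  have bu : ∀ x, ‖u t x‖ ≤ Cu := fun x => (hCu t x ht).trans (div_le_of_decay hCu0)
  have bux : ∀ x, ‖pdC u t x‖ ≤ Cux := fun x => (hCux t x ht).trans (div_le_of_decay hCux0)
  have bn : ∀ x, |n t x| ≤ Cn := fun x => (hCn t x ht).trans (div_le_of_decay hCn0)
  have bv : ∀ x, |v t x| ≤ Cv := fun x => (hCv t x ht).trans (div_le_of_decay hCv0)
  have cu := contSliceC hsu t
  have cux := contSliceC hsux t
  have cn := contSliceR hsn t
  have cv := contSliceR hsv t
  -- integrability of all relevant quantities at time t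
  have iA : Integrable (fun x => ‖pdC u t x‖ ^ 2) := by
    apply integrable_of_decay (C := Cux * Cux) (cux.norm.pow 2)
    intro x
    simpa [Real.norm_eq_abs] using norm_sq_decay hCux0 (bux x) (hCux t x ht)
  have iM : Integrable (fun x => ‖u t x‖ ^ 2) := by
    apply integrable_of_decay (C := Cu * Cu) (cu.norm.pow 2)
    intro x
    simpa [Real.norm_eq_abs] using norm_sq_decay hCu0 (bu x) (hCu t x ht)
  have iB : Integrable (fun x => (n t x) ^ 2) := by
    apply integrable_of_decay (C := Cn * Cn) (cn.pow 2)
    intro x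
    simpa [Real.norm_eq_abs] using sq_decay hCn0 (bn x) (hCn t x ht)
  have iC : Integrable (fun x => (v t x) ^ 2) := by
    apply integrable_of_decay (C := Cv * Cv) (cv.pow 2)
    intro x
    simpa [Real.norm_eq_abs] using sq_decay hCv0 (bv x) (hCv t x ht)
  have busq : ∀ x : ℝ, |‖u t x‖ ^ 2| ≤ Cu * Cu := by
    intro x
    rw [abs_of_nonneg (by positivity), sq]
    exact mul_le_mul (bu x) (bu x) (norm_nonneg _) hCu0
  have iD : Integrable (fun x => n t x * ‖u t x‖ ^ 2) := by
    apply integrable_of_decay (C := Cu * Cu * Cn) (cn.mul (cu.norm.pow 2))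
    intro x
    rw [Real.norm_eq_abs]
    calc |n t x * ‖u t x‖ ^ 2| = |‖u t x‖ ^ 2 * n t x| := by rw [mul_comm]
      _ ≤ Cu * Cu * Cn / (1 + x ^ 2) :=
          mul_decay_bound x (by positivity) (busq x) (hCn t x ht)
  have iQ : Integrable (fun x => ‖u t x‖ ^ 4) := by
    apply integrable_of_decay (C := (Cu * Cu) * (Cu * Cu)) (cu.norm.pow 4)
    intro x
    have h2 := norm_sq_decay hCu0 (bu x) (hCu t x ht)
    have := sq_decay (r := ‖u t x‖ ^ 2) (by positivity) (busq x) h2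
    calc ‖(‖u t x‖ : ℝ) ^ 4‖ = |(‖u t x‖ ^ 2) ^ 2| := by
          rw [Real.norm_eq_abs]; ring_nf
      _ ≤ (Cu * Cu) * (Cu * Cu) / (1 + x ^ 2) := this
  have iP : Integrable (fun x => ‖u t x‖ * ‖pdC u t x‖) := by
    apply integrable_of_decay (C := Cu * Cux) (cu.norm.mul cux.norm)
    intro x
    show ‖‖u t x‖ * ‖pdC u t x‖‖ ≤ Cu * Cux / (1 + x ^ 2)
    rw [Real.norm_eq_abs, abs_of_nonneg (by positivity)]
    calc ‖u t x‖ * ‖pdC u t x‖ ≤ Cu * (Cux / (1 + x ^ 2)) :=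
          mul_le_mul (bu x) (hCux t x ht) (norm_nonneg _) hCu0
      _ = Cu * Cux / (1 + x ^ 2) := by ring
  -- names for the integrals
  set A := ∫ x : ℝ, ‖pdC u t x‖ ^ 2 with hAdef
  set M := ∫ x : ℝ, ‖u t x‖ ^ 2 with hMdef
  set B := ∫ x : ℝ, (n t x) ^ 2 with hBdef
  set Cc := ∫ x : ℝ, (v t x) ^ 2 with hCcdef
  set D := ∫ x : ℝ, n t x * ‖u t x‖ ^ 2 with hDdef
  set Q := ∫ x : ℝ, ‖u t x‖ ^ 4 with hQdef
  set P := ∫ x : ℝ, ‖u t x‖ * ‖pdC u t x‖ with hPdef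
  have hA0 : 0 ≤ A := integral_nonneg fun x => by positivity
  have hM0 : 0 ≤ M := integral_nonneg fun x => by positivity
  have hB0 : 0 ≤ B := integral_nonneg fun x => by positivity
  have hC0 : 0 ≤ Cc := integral_nonneg fun x => by positivity
  have hQ0 : 0 ≤ Q := integral_nonneg fun x => by positivity
  have hP0 : 0 ≤ P := integral_nonneg fun x => by positivity
  -- decomposition of the two integrals at time t
  have hLHS : ∫ x : ℝ, (‖pdC u t x‖ ^ 2 + ‖u t x‖ ^ 2 + (v t x) ^ 2 + (n t x) ^ 2)
      = A + M + Cc + B := by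
    have e1 := integral_add ((iA.add iM).add iC) iB
    have e2 := integral_add (iA.add iM) iC
    have e3 := integral_add iA iM
    simp only [Pi.add_apply] at e1 e2 e3
    rw [e1, e2, e3]
  have hEt : ∫ x : ℝ, (‖pdC u t x‖ ^ 2 + (1/2) * ((n t x) ^ 2 + (v t x) ^ 2)
      + n t x * ‖u t x‖ ^ 2) = A + (1/2) * (B + Cc) + D := by
    have e1 := integral_add (iA.add ((iB.add iC).const_mul (1/2))) iD
    have e2 := integral_add iA ((iB.add iC).const_mul (1/2))
    have e4 := integral_add iB iC
    simp only [Pi.add_apply] at e1 e2 e4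
    rw [e1, e2, integral_const_mul, e4]
  -- conservation laws
  have hE0 : A + (1/2) * (B + Cc) + D
      = ∫ x : ℝ, (‖pdC u 0 x‖ ^ 2 + (1/2) * ((n 0 x) ^ 2 + (v 0 x) ^ 2)
          + n 0 x * ‖u 0 x‖ ^ 2) := by
    rw [← hEt]; exact energy_const S t
  have hM0' : M = ∫ x : ℝ, ‖u 0 x‖ ^ 2 := mass_const S t
  -- pointwise bound by the Gagliardo-Nirenberg trick
  have hsup : ∀ x0 : ℝ, ‖u t x0‖ ^ 2 ≤ 2 * P := by
    intro x0
    have hg : ∀ y : ℝ, HasDerivAt (fun y => ‖u t y‖ ^ 2)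
        (2 * ((starRingEnd ℂ) (u t y) * pdC u t y).re) y := fun y =>
      hasDerivAt_norm_sq (hasDerivAt_pdC hsu t y)
    have ig' : Integrable (fun y => 2 * ((starRingEnd ℂ) (u t y) * pdC u t y).re) := by
      apply integrable_of_decay (C := 2 * (Cu * Cux))
        (continuous_const.mul (Complex.continuous_re.comp
          ((Complex.continuous_conj.comp cu).mul cux)))
      intro y
      show ‖2 * ((starRingEnd ℂ) (u t y) * pdC u t y).re‖ ≤ 2 * (Cu * Cux) / (1 + y ^ 2)
      rw [Real.norm_eq_abs, abs_mul, abs_two]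
      calc 2 * |((starRingEnd ℂ) (u t y) * pdC u t y).re|
          ≤ 2 * (‖u t y‖ * ‖pdC u t y‖) := by
            have := re_conj_mul_le (u t y) (pdC u t y); linarith
        _ ≤ 2 * (Cu * (Cux / (1 + y ^ 2))) := by
            have := mul_le_mul (bu y) (hCux t y ht) (norm_nonneg _) hCu0
            linarith
        _ = 2 * (Cu * Cux) / (1 + y ^ 2) := by ring
    have hgb : Tendsto (fun y => ‖u t y‖ ^ 2) atBot (𝓝 0) := by
      refine (tendsto_zero_of_decay (C := Cu * Cu) ?_).2
      intro y
      simpa [Real.norm_eq_abs] using norm_sq_decay hCu0 (bu y) (hCu t y ht)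
    have hInt := integral_Iic_of_hasDerivAt_of_tendsto' (a := x0)
      (fun y _ => hg y) ig'.integrableOn hgb
    have iP2 : Integrable (fun y => 2 * (‖u t y‖ * ‖pdC u t y‖)) := iP.const_mul 2
    have step1 : ∫ y in Iic x0, 2 * ((starRingEnd ℂ) (u t y) * pdC u t y).re
        ≤ ∫ y in Iic x0, 2 * (‖u t y‖ * ‖pdC u t y‖) := by
      apply setIntegral_mono ig'.integrableOn iP2.integrableOn
      intro y
      have h1 := re_conj_mul_le (u t y) (pdC u t y)
      have h2 := le_abs_self (((starRingEnd ℂ) (u t y) * pdC u t y).re)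
      simp only []
      linarith
    have step2 : ∫ y in Iic x0, 2 * (‖u t y‖ * ‖pdC u t y‖)
        ≤ ∫ y : ℝ, 2 * (‖u t y‖ * ‖pdC u t y‖) :=
      setIntegral_le_integral iP2 (Eventually.of_forall fun y => by positivity)
    have hPP : ∫ y : ℝ, 2 * (‖u t y‖ * ‖pdC u t y‖) = 2 * P := integral_const_mul 2 _
    rw [hPP] at step2
    rw [sub_zero] at hInt
    linarith
  -- Cauchy-Schwarz estimates
  have hP2 : P ^ 2 ≤ M * A := by
    have := holder_sq (f := fun x => ‖u t x‖) (g := fun x => ‖pdC u t x‖)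
      cu.norm cux.norm (fun x => norm_nonneg _) (fun x => norm_nonneg _) iM iA
    exact this
  have hD2 : D ^ 2 ≤ B * Q := by
    have hR : |D| ≤ ∫ x : ℝ, |n t x| * ‖u t x‖ ^ 2 := by
      have h1 : |D| ≤ ∫ x : ℝ, |n t x * ‖u t x‖ ^ 2| := by
        rw [hDdef]
        exact norm_integral_le_integral_norm (fun x => n t x * ‖u t x‖ ^ 2)
      have h2 : ∫ x : ℝ, |n t x * ‖u t x‖ ^ 2| = ∫ x : ℝ, |n t x| * ‖u t x‖ ^ 2 := by
        congr 1; funext x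
        rw [abs_mul, _root_.abs_of_nonneg (by positivity : (0:ℝ) ≤ ‖u t x‖ ^ 2)]
      rw [h2] at h1
      exact h1
    have hH : (∫ x : ℝ, |n t x| * ‖u t x‖ ^ 2) ^ 2 ≤ B * Q := by
      have h1 : Integrable (fun x => |n t x| ^ 2) :=
        iB.congr (Eventually.of_forall fun x => (sq_abs (n t x)).symm)
      have h2 : Integrable (fun x => (‖u t x‖ ^ 2) ^ 2) :=
        iQ.congr (Eventually.of_forall fun x => by ring)
      have key := holder_sq (f := fun x => |n t x|) (g := fun x => ‖u t x‖ ^ 2)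
        cn.abs (cu.norm.pow 2) (fun x => abs_nonneg _) (fun x => by positivity) h1 h2
      have e1 : ∫ x : ℝ, |n t x| ^ 2 = B := by
        rw [hBdef]; congr 1; funext x; rw [sq_abs]
      have e2 : ∫ x : ℝ, (‖u t x‖ ^ 2) ^ 2 = Q := by
        rw [hQdef]; congr 1; funext x; ring
      rw [e1, e2] at key
      exact key
    calc D ^ 2 = |D| ^ 2 := (sq_abs D).symm
      _ ≤ (∫ x : ℝ, |n t x| * ‖u t x‖ ^ 2) ^ 2 := by
          apply pow_le_pow_left₀ (abs_nonneg _) hR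
      _ ≤ B * Q := hH
  have hQPM : Q ≤ (2 * P) * M := by
    have h1 : ∀ x : ℝ, ‖u t x‖ ^ 4 ≤ (2 * P) * ‖u t x‖ ^ 2 := by
      intro x
      calc ‖u t x‖ ^ 4 = ‖u t x‖ ^ 2 * ‖u t x‖ ^ 2 := by ring
        _ ≤ (2 * P) * ‖u t x‖ ^ 2 :=
            mul_le_mul_of_nonneg_right (hsup x) (by positivity)
    calc Q ≤ ∫ x : ℝ, (2 * P) * ‖u t x‖ ^ 2 :=
          integral_mono iQ (iM.const_mul _) h1
      _ = (2 * P) * M := integral_const_mul _ _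
  -- algebraic conclusion
  rw [hLHS, ← hE0, ← hM0']
  have hs0 : 0 ≤ 2 * M ^ 3 + A / 2 := by nlinarith [pow_nonneg hM0 3]
  have h2P0 : 0 ≤ 2 * P * M := by positivity
  have h1 : (2 * P * M) ^ 2 ≤ (2 * M ^ 3 + A / 2) ^ 2 := by
    nlinarith [mul_le_mul_of_nonneg_right hP2 (show (0:ℝ) ≤ 4 * M ^ 2 by positivity),
      sq_nonneg (2 * M ^ 3 - A / 2)]
  have s1 : 2 * P * M ≤ 2 * M ^ 3 + A / 2 :=
    (pow_le_pow_iff_left₀ h2P0 hs0 two_ne_zero).1 h1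
  have s2 : D ^ 2 ≤ B * (2 * M ^ 3 + A / 2) := by
    calc D ^ 2 ≤ B * Q := hD2
      _ ≤ B * ((2 * P) * M) := mul_le_mul_of_nonneg_left hQPM hB0
      _ ≤ B * (2 * M ^ 3 + A / 2) := by
          apply mul_le_mul_of_nonneg_left _ hB0
          linarith
  have hDlow : -(B / 4 + (2 * M ^ 3 + A / 2)) ≤ D := by
    nlinarith [s2, sq_nonneg (D + (B / 4 + (2 * M ^ 3 + A / 2))),
      sq_nonneg (B / 4 - (2 * M ^ 3 + A / 2)), hB0, hs0]
  linarith



end ZakharovAux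

/-- uniform-in-time bound of the energy norm for solutions of the
Zakharov system, with a positive constant `K = F (E_s(0)) (M_s(0))` depending only
on the initial energy and the initial mass. -/
theorem zakharov_energy_norm_bound :
    ∃ F : ℝ → ℝ → ℝ, ∀ (u : ℝ → ℝ → ℂ) (n v : ℝ → ℝ → ℝ),
      IsZakharovSolution u n v →
      0 < F (∫ x : ℝ, (‖pdC u 0 x‖ ^ 2 + (1/2) * ((n 0 x) ^ 2 + (v 0 x) ^ 2)
              + n 0 x * ‖u 0 x‖ ^ 2))
            (∫ x : ℝ, ‖u 0 x‖ ^ 2) ∧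
      ∀ t ≥ (0:ℝ),
        (∫ x : ℝ, (‖pdC u t x‖ ^ 2 + ‖u t x‖ ^ 2 + (v t x) ^ 2 + (n t x) ^ 2))
          ≤ F (∫ x : ℝ, (‖pdC u 0 x‖ ^ 2 + (1/2) * ((n 0 x) ^ 2 + (v 0 x) ^ 2)
                + n 0 x * ‖u 0 x‖ ^ 2))
              (∫ x : ℝ, ‖u 0 x‖ ^ 2) := by
  refine ⟨fun E M => 4 * E + 8 * M ^ 3 + M + 1, fun u n v S => ⟨?_, fun t _ => ?_⟩⟩
  · have h0 := ZakharovAux.apriori S 0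
    have hnn : 0 ≤ ∫ x : ℝ, (‖pdC u 0 x‖ ^ 2 + ‖u 0 x‖ ^ 2 + (v 0 x) ^ 2 + (n 0 x) ^ 2) :=
      integral_nonneg fun x => by positivity
    linarith
  · have h := ZakharovAux.apriori S t
    linarith
end
end

section
/- Let (u,n,v) be a classical solution of the reduced Zakharov system (ZSb) and let φ ∈ C^∞(ℝ) be a real function which is bounded together with its first three derivatives. Define I(t) = Im ∫_ℝ φ(x) u(t,x) conj(∂ₓu(t,x)) dx − ∫_ℝ φ(x) v(t,x) n(t,x) dx. Then for every t: −dI/dt(t) = 2∫_ℝ φ'(x) |∂ₓu(t,x)|² dx − ½∫_ℝ φ'''(x) |u(t,x)|² dx + ∫_ℝ φ'(x) n(t,x) |u(t,x)|² dx + ½∫_ℝ φ'(x) n(t,x)² dx + ½∫_ℝ φ'(x) v(t,x)² dx. -/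
open MeasureTheory Filter Real Set Topology
open scoped ContDiff

noncomputable section

namespace ZV
variable {E : Type*} [NormedAddCommGroup E] [NormedSpace ℝ E]

def pd (f : ℝ → ℝ → E) : ℝ → ℝ → E := fun t x => deriv (fun y => f t y) x
def pdt (f : ℝ → ℝ → E) : ℝ → ℝ → E := fun t x => deriv (fun s => f s x) t

lemma pdC_eq : pdC = @pd ℂ _ _ := rfl
lemma pdtC_eq : pdtC = @pdt ℂ _ _ := rfl
lemma pdR_eq : pdR = @pd ℝ _ _ := rfl
lemma pdtR_eq : pdtR = @pdt ℝ _ _ := rfl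

def Sm (f : ℝ → ℝ → E) : Prop := ContDiff ℝ (⊤ : ℕ∞) fun p : ℝ × ℝ => f p.1 p.2

lemma hasDerivAt_lineX (t x : ℝ) : HasDerivAt (fun y : ℝ => (t, y)) ((0:ℝ), (1:ℝ)) x :=
  (hasDerivAt_const x t).prodMk (hasDerivAt_id x)

lemma hasDerivAt_lineT (t x : ℝ) : HasDerivAt (fun s : ℝ => (s, x)) ((1:ℝ), (0:ℝ)) t :=
  (hasDerivAt_id t).prodMk (hasDerivAt_const t x)

lemma Sm.hasDerivAt_fdX {f : ℝ → ℝ → E} (hf : Sm f) (t x : ℝ) :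
    HasDerivAt (fun y => f t y)
      (fderiv ℝ (fun p : ℝ × ℝ => f p.1 p.2) (t, x) (0, 1)) x := by
  have h := ((hf.differentiable (by simp) (t, x)).hasFDerivAt).comp_hasDerivAt x
    (hasDerivAt_lineX t x)
  exact h

lemma Sm.pd_eq {f : ℝ → ℝ → E} (hf : Sm f) (t x : ℝ) :
    pd f t x = fderiv ℝ (fun p : ℝ × ℝ => f p.1 p.2) (t, x) (0, 1) :=
  (hf.hasDerivAt_fdX t x).deriv

lemma Sm.hasDerivAt_pd {f : ℝ → ℝ → E} (hf : Sm f) (t x : ℝ) :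
    HasDerivAt (fun y => f t y) (pd f t x) x := by
  rw [hf.pd_eq]; exact hf.hasDerivAt_fdX t x

lemma Sm.hasDerivAt_fdT {f : ℝ → ℝ → E} (hf : Sm f) (t x : ℝ) :
    HasDerivAt (fun s => f s x)
      (fderiv ℝ (fun p : ℝ × ℝ => f p.1 p.2) (t, x) (1, 0)) t := by
  have h := ((hf.differentiable (by simp) (t, x)).hasFDerivAt).comp_hasDerivAt t
    (hasDerivAt_lineT t x)
  exact h

lemma Sm.pdt_eq {f : ℝ → ℝ → E} (hf : Sm f) (t x : ℝ) :
    pdt f t x = fderiv ℝ (fun p : ℝ × ℝ => f p.1 p.2) (t, x) (1, 0) :=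
  (hf.hasDerivAt_fdT t x).deriv

lemma Sm.hasDerivAt_pdt {f : ℝ → ℝ → E} (hf : Sm f) (t x : ℝ) :
    HasDerivAt (fun s => f s x) (pdt f t x) t := by
  rw [hf.pdt_eq]; exact hf.hasDerivAt_fdT t x

lemma Sm.sm_pd {f : ℝ → ℝ → E} (hf : Sm f) : Sm (pd f) := by
  have h : ContDiff ℝ (⊤ : ℕ∞) fun p : ℝ × ℝ =>
      fderiv ℝ (fun q : ℝ × ℝ => f q.1 q.2) p ((0:ℝ), (1:ℝ)) :=
    (hf.fderiv_right (by simp)).clm_apply contDiff_const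
  have e : (fun p : ℝ × ℝ => pd f p.1 p.2) = fun p : ℝ × ℝ =>
      fderiv ℝ (fun q : ℝ × ℝ => f q.1 q.2) p ((0:ℝ), (1:ℝ)) := by
    funext p; simpa using hf.pd_eq p.1 p.2
  rw [Sm, e]; exact h

lemma Sm.sm_pdt {f : ℝ → ℝ → E} (hf : Sm f) : Sm (pdt f) := by
  have h : ContDiff ℝ (⊤ : ℕ∞) fun p : ℝ × ℝ =>
      fderiv ℝ (fun q : ℝ × ℝ => f q.1 q.2) p ((1:ℝ), (0:ℝ)) :=
    (hf.fderiv_right (by simp)).clm_apply contDiff_const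
  have e : (fun p : ℝ × ℝ => pdt f p.1 p.2) = fun p : ℝ × ℝ =>
      fderiv ℝ (fun q : ℝ × ℝ => f q.1 q.2) p ((1:ℝ), (0:ℝ)) := by
    funext p; simpa using hf.pdt_eq p.1 p.2
  rw [Sm, e]; exact h

lemma Sm.contX {f : ℝ → ℝ → E} (hf : Sm f) (t : ℝ) : Continuous fun x => f t x := by
  have : ContDiff ℝ (⊤ : ℕ∞) fun x : ℝ => f t x := hf.comp (contDiff_const.prodMk contDiff_id)
  exact this.continuous

/-- Clairaut -/
lemma Sm.pd_pdt_comm {f : ℝ → ℝ → E} (hf : Sm f) (t x : ℝ) :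
    pd (pdt f) t x = pdt (pd f) t x := by
  set F := fun p : ℝ × ℝ => f p.1 p.2 with hF
  have hdF : Differentiable ℝ (fderiv ℝ F) :=
    (hf.fderiv_right (by simp) : ContDiff ℝ (⊤ : ℕ∞) (fderiv ℝ F)).differentiable (by simp)
  have hsymm := second_derivative_symmetric
    (f' := fderiv ℝ F) (f'' := fderiv ℝ (fderiv ℝ F) (t, x))
    (fun y => (hf.differentiable (by simp) y).hasFDerivAt)
    (hdF (t, x)).hasFDerivAt
  have h1 : pd (pdt f) t x = fderiv ℝ (fun p : ℝ × ℝ => pdt f p.1 p.2) (t, x) (0, 1) :=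
    hf.sm_pdt.pd_eq t x
  have h2 : pdt (pd f) t x = fderiv ℝ (fun p : ℝ × ℝ => pd f p.1 p.2) (t, x) (1, 0) :=
    hf.sm_pd.pdt_eq t x
  have e1 : (fun p : ℝ × ℝ => pdt f p.1 p.2) = fun p => fderiv ℝ F p ((1:ℝ), (0:ℝ)) := by
    funext p; simpa using hf.pdt_eq p.1 p.2
  have e2 : (fun p : ℝ × ℝ => pd f p.1 p.2) = fun p => fderiv ℝ F p ((0:ℝ), (1:ℝ)) := by
    funext p; simpa using hf.pd_eq p.1 p.2
  have k1 : ∀ (w v : ℝ × ℝ), fderiv ℝ (fun p => fderiv ℝ F p w) (t, x) v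
      = fderiv ℝ (fderiv ℝ F) (t, x) v w := by
    intro w v
    have hc : HasFDerivAt (fun p => fderiv ℝ F p w)
        ((ContinuousLinearMap.apply ℝ E w).comp (fderiv ℝ (fderiv ℝ F) (t, x))) (t, x) :=
      (ContinuousLinearMap.apply ℝ E w).hasFDerivAt.comp _ (hdF (t, x)).hasFDerivAt
    rw [hc.fderiv]; rfl
  rw [h1, h2, e1, e2, k1, k1, hsymm]

/- ## decay helpers -/

lemma div_bound {x a C : ℝ} (h : (1 + x ^ 2) * a ≤ C) (ha : 0 ≤ a) :
    a ≤ C * (1 + x ^ 2)⁻¹ := by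
  have hx : (0:ℝ) < 1 + x ^ 2 := by positivity
  rw [show C * (1 + x ^ 2)⁻¹ = C / (1 + x ^ 2) by ring, le_div_iff₀ hx]
  nlinarith

lemma norm_le_of_decay {g : ℝ → E} {C : ℝ} (h : ∀ x, (1 + x ^ 2) * ‖g x‖ ≤ C) (x : ℝ) :
    ‖g x‖ ≤ C * (1 + x ^ 2)⁻¹ := div_bound (h x) (norm_nonneg _)

lemma prod_bound {x C1 C2 a b : ℝ} (ha : (1 + x ^ 2) * a ≤ C1) (hb : b ≤ C2)
    (ha0 : 0 ≤ a) (hb0 : 0 ≤ b) : a * b ≤ C1 * C2 * (1 + x ^ 2)⁻¹ := by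
  have hx : (0:ℝ) < 1 + x ^ 2 := by positivity
  have h1 : a ≤ C1 * (1 + x ^ 2)⁻¹ := div_bound ha ha0
  have h2 : C2 * (C1 * (1 + x ^ 2)⁻¹) = C1 * C2 * (1 + x ^ 2)⁻¹ := by ring
  nlinarith [mul_le_mul h1 hb hb0 (le_trans (by positivity) h1)]

lemma integrable_of_decay {g : ℝ → E} (hg : Continuous g) (C : ℝ)
    (h : ∀ x, (1 + x ^ 2) * ‖g x‖ ≤ C) : Integrable g := by
  refine (integrable_inv_one_add_sq.const_mul C).mono' hg.aestronglyMeasurable ?_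
  exact Eventually.of_forall fun x => norm_le_of_decay h x

lemma tendsto_one_add_sq_atTop : Tendsto (fun x : ℝ => 1 + x ^ 2) atTop atTop :=
  tendsto_atTop_add_const_left _ 1 (tendsto_pow_atTop two_ne_zero)

lemma tendsto_one_add_sq_atBot : Tendsto (fun x : ℝ => 1 + x ^ 2) atBot atTop := by
  refine tendsto_atTop_add_const_left _ 1 ?_
  have : (fun x : ℝ => x ^ 2) = (fun y : ℝ => y ^ 2) ∘ fun x : ℝ => |x| := by
    funext x; simp [sq_abs]
  rw [this]
  exact (tendsto_pow_atTop two_ne_zero).comp tendsto_abs_atBot_atTop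

lemma tendsto_zero_of_decay {g : ℝ → E} (C : ℝ)
    (h : ∀ x, (1 + x ^ 2) * ‖g x‖ ≤ C) :
    Tendsto g atTop (𝓝 0) ∧ Tendsto g atBot (𝓝 0) := by
  constructor
  · refine squeeze_zero_norm (norm_le_of_decay h) ?_
    simpa using (tendsto_inv_atTop_zero.comp tendsto_one_add_sq_atTop).const_mul C
  · refine squeeze_zero_norm (norm_le_of_decay h) ?_
    simpa using (tendsto_inv_atTop_zero.comp tendsto_one_add_sq_atBot).const_mul C

lemma integral_deriv_eq_zero (g g' : ℝ → ℝ) (hd : ∀ x, HasDerivAt g (g' x) x)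
    (hint : Integrable g') (htop : Tendsto g atTop (𝓝 0))
    (hbot : Tendsto g atBot (𝓝 0)) : ∫ x, g' x = 0 := by
  have h1 := integral_Ioi_of_hasDerivAt_of_tendsto' (a := 0) (fun x _ => hd x)
    hint.integrableOn htop
  have h2 := integral_Iic_of_hasDerivAt_of_tendsto' (a := 0) (fun x _ => hd x)
    hint.integrableOn hbot
  rw [← intervalIntegral.integral_Iic_add_Ioi (b := (0:ℝ)) hint.integrableOn
    hint.integrableOn, h1, h2]
  ring

/- ## Schwartz bound extraction -/

lemma boundC {f : ℝ → ℝ → ℂ} (hf : SchwartzLocC f) (j l : ℕ) (T : ℝ) :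
    ∃ C : ℝ, 0 ≤ C ∧ ∀ s x : ℝ, |s| ≤ T →
      (1 + x ^ 2) * ‖pdC^[l] (pdtC^[j] f) s x‖ ≤ C := by
  obtain ⟨C0, h0⟩ := hf j 0 l T
  obtain ⟨C2, h2⟩ := hf j 2 l T
  refine ⟨max (C0 + C2) 0, le_max_right _ _, fun s x hs => ?_⟩
  have a0 := h0 s x hs
  have a2 := h2 s x hs
  rw [pow_zero, one_mul] at a0
  rw [sq_abs] at a2
  refine le_trans ?_ (le_max_left _ _)
  nlinarith [norm_nonneg (pdC^[l] (pdtC^[j] f) s x)]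

lemma boundR {f : ℝ → ℝ → ℝ} (hf : SchwartzLocR f) (j l : ℕ) (T : ℝ) :
    ∃ C : ℝ, 0 ≤ C ∧ ∀ s x : ℝ, |s| ≤ T →
      (1 + x ^ 2) * |pdR^[l] (pdtR^[j] f) s x| ≤ C := by
  obtain ⟨C0, h0⟩ := hf j 0 l T
  obtain ⟨C2, h2⟩ := hf j 2 l T
  refine ⟨max (C0 + C2) 0, le_max_right _ _, fun s x hs => ?_⟩
  have a0 := h0 s x hs
  have a2 := h2 s x hs
  rw [pow_zero, one_mul] at a0
  rw [sq_abs] at a2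
  refine le_trans ?_ (le_max_left _ _)
  nlinarith [abs_nonneg (pdR^[l] (pdtR^[j] f) s x)]

/- iterate unfoldings -/
lemma itC0 (f : ℝ → ℝ → ℂ) : pdC^[0] (pdtC^[0] f) = f := rfl
lemma itC1 (f : ℝ → ℝ → ℂ) : pdC^[1] (pdtC^[0] f) = pdC f := rfl
lemma itC2 (f : ℝ → ℝ → ℂ) : pdC^[2] (pdtC^[0] f) = pdC (pdC f) := by
  simp [Function.iterate_succ_apply', Function.iterate_zero_apply]
lemma itC3 (f : ℝ → ℝ → ℂ) : pdC^[3] (pdtC^[0] f) = pdC (pdC (pdC f)) := by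
  simp [Function.iterate_succ_apply', Function.iterate_zero_apply]
lemma itCt (f : ℝ → ℝ → ℂ) : pdC^[0] (pdtC^[1] f) = pdtC f := rfl
lemma itCtx (f : ℝ → ℝ → ℂ) : pdC^[1] (pdtC^[1] f) = pdC (pdtC f) := rfl
lemma itR0 (f : ℝ → ℝ → ℝ) : pdR^[0] (pdtR^[0] f) = f := rfl
lemma itR1 (f : ℝ → ℝ → ℝ) : pdR^[1] (pdtR^[0] f) = pdR f := rfl
lemma itRt (f : ℝ → ℝ → ℝ) : pdR^[0] (pdtR^[1] f) = pdtR f := rfl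

/- derivative lifts -/
lemma _root_.HasDerivAt.conjC {f : ℝ → ℂ} {f' : ℂ} {x : ℝ} (h : HasDerivAt f f' x) :
    HasDerivAt (fun y => (starRingEnd ℂ) (f y)) ((starRingEnd ℂ) f') x := by
  exact (Complex.conjCLE.hasFDerivAt.comp_hasDerivAt x h)

lemma _root_.HasDerivAt.imC {f : ℝ → ℂ} {f' : ℂ} {x : ℝ} (h : HasDerivAt f f' x) :
    HasDerivAt (fun y => (f y).im) f'.im x := by
  exact (Complex.imCLM.hasFDerivAt.comp_hasDerivAt x h)

lemma _root_.HasDerivAt.reC {f : ℝ → ℂ} {f' : ℂ} {x : ℝ} (h : HasDerivAt f f' x) :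
    HasDerivAt (fun y => (f y).re) f'.re x := by
  exact (Complex.reCLM.hasFDerivAt.comp_hasDerivAt x h)

lemma _root_.HasDerivAt.ofRealC {f : ℝ → ℝ} {f' x : ℝ} (h : HasDerivAt f f' x) :
    HasDerivAt (fun y => ((f y : ℝ) : ℂ)) (f' : ℂ) x := by
  exact (Complex.ofRealCLM.hasFDerivAt.comp_hasDerivAt x h)

end ZV
-- wrappers to test (will append to aux)
namespace ZW
open ZV
variable {f : ℝ → ℝ → ℂ} {g : ℝ → ℝ → ℝ}

lemma smC_pd (hf : ContDiff ℝ (⊤ : ℕ∞) fun p : ℝ × ℝ => f p.1 p.2) :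
    ContDiff ℝ (⊤ : ℕ∞) fun p : ℝ × ℝ => pdC f p.1 p.2 := ZV.Sm.sm_pd hf
lemma smC_pdt (hf : ContDiff ℝ (⊤ : ℕ∞) fun p : ℝ × ℝ => f p.1 p.2) :
    ContDiff ℝ (⊤ : ℕ∞) fun p : ℝ × ℝ => pdtC f p.1 p.2 := ZV.Sm.sm_pdt hf
lemma smR_pd (hg : ContDiff ℝ (⊤ : ℕ∞) fun p : ℝ × ℝ => g p.1 p.2) :
    ContDiff ℝ (⊤ : ℕ∞) fun p : ℝ × ℝ => pdR g p.1 p.2 := ZV.Sm.sm_pd hg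
lemma smR_pdt (hg : ContDiff ℝ (⊤ : ℕ∞) fun p : ℝ × ℝ => g p.1 p.2) :
    ContDiff ℝ (⊤ : ℕ∞) fun p : ℝ × ℝ => pdtR g p.1 p.2 := ZV.Sm.sm_pdt hg

lemma hdXC (hf : ContDiff ℝ (⊤ : ℕ∞) fun p : ℝ × ℝ => f p.1 p.2) (t x : ℝ) :
    HasDerivAt (fun y => f t y) (pdC f t x) x := ZV.Sm.hasDerivAt_pd hf t x
lemma hdTC (hf : ContDiff ℝ (⊤ : ℕ∞) fun p : ℝ × ℝ => f p.1 p.2) (t x : ℝ) :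
    HasDerivAt (fun s => f s x) (pdtC f t x) t := ZV.Sm.hasDerivAt_pdt hf t x
lemma hdXR (hg : ContDiff ℝ (⊤ : ℕ∞) fun p : ℝ × ℝ => g p.1 p.2) (t x : ℝ) :
    HasDerivAt (fun y => g t y) (pdR g t x) x := ZV.Sm.hasDerivAt_pd hg t x
lemma hdTR (hg : ContDiff ℝ (⊤ : ℕ∞) fun p : ℝ × ℝ => g p.1 p.2) (t x : ℝ) :
    HasDerivAt (fun s => g s x) (pdtR g t x) t := ZV.Sm.hasDerivAt_pdt hg t x

lemma contXC (hf : ContDiff ℝ (⊤ : ℕ∞) fun p : ℝ × ℝ => f p.1 p.2) (t : ℝ) :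
    Continuous fun x => f t x := ZV.Sm.contX hf t
lemma contXR (hg : ContDiff ℝ (⊤ : ℕ∞) fun p : ℝ × ℝ => g p.1 p.2) (t : ℝ) :
    Continuous fun x => g t x := ZV.Sm.contX hg t

lemma clairC (hf : ContDiff ℝ (⊤ : ℕ∞) fun p : ℝ × ℝ => f p.1 p.2) (t x : ℝ) :
    pdtC (pdC f) t x = pdC (pdtC f) t x := (ZV.Sm.pd_pdt_comm hf t x).symm

lemma plain_of_weighted {x a C : ℝ} (h : (1 + x ^ 2) * a ≤ C) (ha : 0 ≤ a) : a ≤ C := by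
  nlinarith [sq_nonneg x]

lemma wmul2 {x a1 a2 C1 C2 : ℝ} (h1 : (1 + x ^ 2) * a1 ≤ C1) (h2 : (1 + x ^ 2) * a2 ≤ C2)
    (n1 : 0 ≤ a1) (n2 : 0 ≤ a2) : (1 + x ^ 2) * (a1 * a2) ≤ C1 * C2 := by
  have hx : (0:ℝ) < 1 + x ^ 2 := by positivity
  have ha2 : a2 ≤ C2 := plain_of_weighted h2 n2
  have hC1 : 0 ≤ C1 := le_trans (by positivity) h1
  calc (1 + x ^ 2) * (a1 * a2) = ((1 + x ^ 2) * a1) * a2 := by ring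
    _ ≤ C1 * a2 := mul_le_mul_of_nonneg_right h1 n2
    _ ≤ C1 * C2 := mul_le_mul_of_nonneg_left ha2 hC1

lemma wmul3 {x a1 a2 a3 C1 C2 C3 : ℝ} (h1 : (1 + x ^ 2) * a1 ≤ C1)
    (h2 : (1 + x ^ 2) * a2 ≤ C2) (h3 : (1 + x ^ 2) * a3 ≤ C3)
    (n1 : 0 ≤ a1) (n2 : 0 ≤ a2) (n3 : 0 ≤ a3) :
    (1 + x ^ 2) * (a1 * a2 * a3) ≤ C1 * C2 * C3 :=
  wmul2 (wmul2 h1 h2 n1 n2) h3 (mul_nonneg n1 n2) n3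

lemma wmulp {x p P b B : ℝ} (hp : p ≤ P) (h0p : 0 ≤ p) (hb : (1 + x ^ 2) * b ≤ B)
    (hb0 : 0 ≤ b) : (1 + x ^ 2) * (p * b) ≤ P * B := by
  have hB : 0 ≤ B := le_trans (by positivity) hb
  have hb' : (1 + x ^ 2) * b ≤ B := hb
  calc (1 + x ^ 2) * (p * b) = p * ((1 + x ^ 2) * b) := by ring
    _ ≤ P * B := mul_le_mul hp hb' (by positivity) (le_trans h0p hp)

lemma abs_sub_le (a b : ℝ) : |a - b| ≤ |a| + |b| := by
  rw [sub_eq_add_neg]; simpa using abs_add_le a (-b)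

lemma im_le (z : ℂ) : |z.im| ≤ ‖z‖ := by
  exact Complex.abs_im_le_norm z

lemma re_le (z : ℂ) : |z.re| ≤ ‖z‖ := by
  exact Complex.abs_re_le_norm z

lemma wadd {x a b C D : ℝ} (h1 : (1 + x ^ 2) * a ≤ C) (h2 : (1 + x ^ 2) * b ≤ D) :
    (1 + x ^ 2) * (a + b) ≤ C + D := by
  have := mul_add (1 + x ^ 2) a b; linarith

lemma wmono {x a b C : ℝ} (hab : a ≤ b) (h : (1 + x ^ 2) * b ≤ C) :
    (1 + x ^ 2) * a ≤ C :=
  le_trans (mul_le_mul_of_nonneg_left hab (by positivity)) h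

end ZW
/-- virial identity for the Zakharov system:
for `I(t) = Im ∫ φ u ∂ₓū − ∫ φ v n` one has
`-I'(t) = 2∫φ'|∂ₓu|² − ½∫φ'''|u|² + ∫φ' n |u|² + ½∫φ' n² + ½∫φ' v²`. -/
theorem zakharov_virial_identity
    (u : ℝ → ℝ → ℂ) (n v : ℝ → ℝ → ℝ)
    (hsol : IsZakharovSolution u n v)
    (φ : ℝ → ℝ) (hφ : ContDiff ℝ (⊤ : ℕ∞) φ)
    (hφbdd : ∀ k ≤ 3, ∃ C : ℝ, ∀ x : ℝ, |iteratedDeriv k φ x| ≤ C) :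
    ∀ t : ℝ, HasDerivAt
      (fun s => (∫ x : ℝ, (φ x : ℂ) * (u s x * (starRingEnd ℂ) (pdC u s x))).im
        - ∫ x : ℝ, φ x * (v s x * n s x))
      (-((2 * ∫ x : ℝ, deriv φ x * ‖pdC u t x‖ ^ 2)
        - (1/2) * (∫ x : ℝ, deriv (deriv (deriv φ)) x * ‖u t x‖ ^ 2)
        + (∫ x : ℝ, deriv φ x * (n t x * ‖u t x‖ ^ 2))
        + (1/2) * (∫ x : ℝ, deriv φ x * (n t x) ^ 2)
        + (1/2) * (∫ x : ℝ, deriv φ x * (v t x) ^ 2))) t := by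
  intro t
  obtain ⟨hsu, hsn, hsv, hschu, hschn, hschv, hequ, heqn, heqv⟩ := hsol
  -- smoothness of all relevant functions
  have s_ux := ZW.smC_pd hsu
  have s_uxx := ZW.smC_pd s_ux
  have s_uxxx := ZW.smC_pd s_uxx
  have s_ut := ZW.smC_pdt hsu
  have s_uxt := ZW.smC_pdt s_ux
  have s_nx := ZW.smR_pd hsn
  have s_nt := ZW.smR_pdt hsn
  have s_vx := ZW.smR_pd hsv
  have s_vt := ZW.smR_pdt hsv
  -- φ bounds
  obtain ⟨P0, hP0⟩ := hφbdd 0 (by norm_num)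
  obtain ⟨P1, hP1⟩ := hφbdd 1 (by norm_num)
  obtain ⟨P2, hP2⟩ := hφbdd 2 (by norm_num)
  obtain ⟨P3, hP3⟩ := hφbdd 3 (by norm_num)
  have e2 : iteratedDeriv 2 φ = deriv (deriv φ) := by
    rw [show (2:ℕ) = 1 + 1 from rfl, iteratedDeriv_succ, iteratedDeriv_one]
  have e3 : iteratedDeriv 3 φ = deriv (deriv (deriv φ)) := by
    rw [show (3:ℕ) = 2 + 1 from rfl, iteratedDeriv_succ, e2]
  have hP0' : ∀ x, |φ x| ≤ P0 := fun x => by simpa [iteratedDeriv_zero] using hP0 x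
  have hP1' : ∀ x, |deriv φ x| ≤ P1 := fun x => by simpa [iteratedDeriv_one] using hP1 x
  have hP2' : ∀ x, |deriv (deriv φ) x| ≤ P2 := fun x => by rw [← e2]; exact hP2 x
  have hP3' : ∀ x, |deriv (deriv (deriv φ)) x| ≤ P3 := fun x => by rw [← e3]; exact hP3 x
  have hφ' : ContDiff ℝ ∞ φ := hφ.of_le (by simp)
  have hφ1 : ContDiff ℝ ∞ (deriv φ) := (contDiff_infty_iff_deriv.mp hφ').2
  have hφ2 : ContDiff ℝ ∞ (deriv (deriv φ)) := (contDiff_infty_iff_deriv.mp hφ1).2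
  have hφ3 : ContDiff ℝ ∞ (deriv (deriv (deriv φ))) := (contDiff_infty_iff_deriv.mp hφ2).2
  have hdφ : Differentiable ℝ φ := (contDiff_infty_iff_deriv.mp hφ').1
  have hdφ1 : Differentiable ℝ (deriv φ) := (contDiff_infty_iff_deriv.mp hφ1).1
  have hdφ2 : Differentiable ℝ (deriv (deriv φ)) := (contDiff_infty_iff_deriv.mp hφ2).1
  -- Schwartz bounds on the time strip [-T, T]
  set T : ℝ := |t| + 1 with hTdef
  have htT : |t| ≤ T := by simp only [hTdef]; linarith
  obtain ⟨Bu, Bu0, hBu⟩ := ZV.boundC hschu 0 0 T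
  simp only [ZV.itC0] at hBu
  obtain ⟨Bux, Bux0, hBux⟩ := ZV.boundC hschu 0 1 T
  simp only [ZV.itC1] at hBux
  obtain ⟨Buxx, Buxx0, hBuxx⟩ := ZV.boundC hschu 0 2 T
  simp only [ZV.itC2] at hBuxx
  obtain ⟨But, But0, hBut⟩ := ZV.boundC hschu 1 0 T
  simp only [ZV.itCt] at hBut
  obtain ⟨Butx, Butx0, hButx⟩ := ZV.boundC hschu 1 1 T
  simp only [ZV.itCtx] at hButx
  obtain ⟨Bn, Bn0, hBn⟩ := ZV.boundR hschn 0 0 T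
  simp only [ZV.itR0] at hBn
  obtain ⟨Bnt, Bnt0, hBnt⟩ := ZV.boundR hschn 1 0 T
  simp only [ZV.itRt] at hBnt
  obtain ⟨Bv, Bv0, hBv⟩ := ZV.boundR hschv 0 0 T
  simp only [ZV.itR0] at hBv
  obtain ⟨Bvt, Bvt0, hBvt⟩ := ZV.boundR hschv 1 0 T
  simp only [ZV.itRt] at hBvt
  -- the integrand and its time derivative
  set F : ℝ → ℝ → ℝ := fun s x =>
    ((φ x : ℂ) * (u s x * (starRingEnd ℂ) (pdC u s x))).im - φ x * (v s x * n s x)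
    with hFdef
  set F' : ℝ → ℝ → ℝ := fun s x =>
    ((φ x : ℂ) * (pdtC u s x * (starRingEnd ℂ) (pdC u s x)
      + u s x * (starRingEnd ℂ) (pdtC (pdC u) s x))).im
    - φ x * (pdtR v s x * n s x + v s x * pdtR n s x)
    with hF'def
  -- integrability of the complex integrand at every time
  have hint_cplx : ∀ s : ℝ,
      Integrable (fun x => (φ x : ℂ) * (u s x * (starRingEnd ℂ) (pdC u s x))) := by
    intro s
    obtain ⟨Au, _, hAu⟩ := ZV.boundC hschu 0 0 |s|
    simp only [ZV.itC0] at hAu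
    obtain ⟨Aux, _, hAux⟩ := ZV.boundC hschu 0 1 |s|
    simp only [ZV.itC1] at hAux
    refine ZV.integrable_of_decay ?_ (P0 * (Au * Aux)) ?_
    · exact (Complex.continuous_ofReal.comp hφ.continuous).mul
        ((ZW.contXC hsu s).mul (Complex.continuous_conj.comp (ZW.contXC s_ux s)))
    · intro x
      rw [norm_mul, norm_mul, Complex.norm_real, RCLike.norm_conj, Real.norm_eq_abs]
      exact ZW.wmulp (hP0' x) (abs_nonneg _)
        (ZW.wmul2 (hAu s x le_rfl) (hAux s x le_rfl) (norm_nonneg _) (norm_nonneg _))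
        (by positivity)
  have hint_vn : ∀ s : ℝ, Integrable (fun x => φ x * (v s x * n s x)) := by
    intro s
    obtain ⟨Av, _, hAv⟩ := ZV.boundR hschv 0 0 |s|
    simp only [ZV.itR0] at hAv
    obtain ⟨An, _, hAn⟩ := ZV.boundR hschn 0 0 |s|
    simp only [ZV.itR0] at hAn
    refine ZV.integrable_of_decay ?_ (P0 * (Av * An)) ?_
    · exact hφ.continuous.mul ((ZW.contXR hsv s).mul (ZW.contXR hsn s))
    · intro x
      rw [Real.norm_eq_abs, abs_mul, abs_mul]
      exact ZW.wmulp (hP0' x) (abs_nonneg _)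
        (ZW.wmul2 (hAv s x le_rfl) (hAn s x le_rfl) (abs_nonneg _) (abs_nonneg _))
        (by positivity)
  -- rewriting the function of s as a single integral
  have hfun_eq : (fun s => (∫ x : ℝ, (φ x : ℂ) * (u s x * (starRingEnd ℂ) (pdC u s x))).im
        - ∫ x : ℝ, φ x * (v s x * n s x)) = fun s => ∫ x : ℝ, F s x := by
    funext s
    have h1 := hint_cplx s
    have h2 := hint_vn s
    have him : (∫ x : ℝ, (φ x : ℂ) * (u s x * (starRingEnd ℂ) (pdC u s x))).im
        = ∫ x : ℝ, ((φ x : ℂ) * (u s x * (starRingEnd ℂ) (pdC u s x))).im := by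
      simpa using (Complex.imCLM.integral_comp_comm h1).symm
    rw [him]
    exact (integral_sub (Complex.imCLM.integrable_comp h1) h2).symm
  -- continuity of F and F'
  have contF : ∀ s, Continuous (F s) := by
    intro s
    apply Continuous.sub
    · exact Complex.continuous_im.comp ((Complex.continuous_ofReal.comp hφ.continuous).mul
        ((ZW.contXC hsu s).mul (Complex.continuous_conj.comp (ZW.contXC s_ux s))))
    · exact hφ.continuous.mul ((ZW.contXR hsv s).mul (ZW.contXR hsn s))
  have contF' : Continuous (F' t) := by
    apply Continuous.sub
    · refine Complex.continuous_im.comp ((Complex.continuous_ofReal.comp hφ.continuous).mul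
        (Continuous.add ?_ ?_))
      · exact (ZW.contXC s_ut t).mul (Complex.continuous_conj.comp (ZW.contXC s_ux t))
      · exact (ZW.contXC hsu t).mul (Complex.continuous_conj.comp (ZW.contXC s_uxt t))
    · exact hφ.continuous.mul (((ZW.contXR s_vt t).mul (ZW.contXR hsn t)).add
        ((ZW.contXR hsv t).mul (ZW.contXR s_nt t)))
  -- the uniform bound on F'
  set B0 : ℝ := P0 * (But * Bux + Bu * Butx) + P0 * (Bvt * Bn + Bv * Bnt) with hB0def
  have hFb : ∀ x : ℝ, ∀ s ∈ Metric.ball t 1, ‖F' s x‖ ≤ B0 * (1 + x ^ 2)⁻¹ := by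
    intro x s hs
    have hsT : |s| ≤ T := by
      have h1 : dist s t < 1 := Metric.mem_ball.mp hs
      rw [Real.dist_eq] at h1
      have h2 : |s| - |t| ≤ |s - t| := abs_sub_abs_le_abs_sub s t
      simp only [hTdef]; linarith
    have tri : |F' s x| ≤ |φ x| * (‖pdtC u s x‖ * ‖pdC u s x‖
        + ‖u s x‖ * ‖pdC (pdtC u) s x‖)
        + |φ x| * (|pdtR v s x| * |n s x| + |v s x| * |pdtR n s x|) := by
      simp only [hF'def]
      rw [ZW.clairC hsu s x]
      refine (ZW.abs_sub_le _ _).trans (add_le_add ?_ ?_)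
      · refine (ZW.im_le _).trans ?_
        rw [norm_mul, Complex.norm_real, Real.norm_eq_abs]
        refine mul_le_mul_of_nonneg_left ?_ (abs_nonneg _)
        refine (norm_add_le _ _).trans ?_
        rw [norm_mul, norm_mul, RCLike.norm_conj, RCLike.norm_conj]
      · rw [abs_mul]
        refine mul_le_mul_of_nonneg_left ?_ (abs_nonneg _)
        refine (abs_add_le _ _).trans ?_
        rw [abs_mul, abs_mul]
    have wt : (1 + x ^ 2) * |F' s x| ≤ B0 := by
      refine ZW.wmono tri ?_
      refine ZW.wadd ?_ ?_
      · refine ZW.wmulp (hP0' x) (abs_nonneg _) ?_ (by positivity)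
        exact ZW.wadd
          (ZW.wmul2 (hBut s x hsT) (hBux s x hsT) (norm_nonneg _) (norm_nonneg _))
          (ZW.wmul2 (hBu s x hsT) (hButx s x hsT) (norm_nonneg _) (norm_nonneg _))
      · refine ZW.wmulp (hP0' x) (abs_nonneg _) ?_ (by positivity)
        exact ZW.wadd
          (ZW.wmul2 (hBvt s x hsT) (hBn s x hsT) (abs_nonneg _) (abs_nonneg _))
          (ZW.wmul2 (hBv s x hsT) (hBnt s x hsT) (abs_nonneg _) (abs_nonneg _))
    rw [Real.norm_eq_abs]
    exact ZV.div_bound wt (abs_nonneg _)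
  -- integrability of F t
  have hF_int : Integrable (F t) :=
    (Complex.imCLM.integrable_comp (hint_cplx t)).sub (hint_vn t)
  -- differentiation in time, pointwise
  have h_diff : ∀ x s : ℝ, HasDerivAt (fun s' => F s' x) (F' s x) s := by
    intro x s
    have hU := ZW.hdTC hsu s x
    have hUx := ZW.hdTC s_ux s x
    have hN := ZW.hdTR hsn s x
    have hV := ZW.hdTR hsv s x
    exact (((hU.mul hUx.conjC).const_mul ((φ x : ℂ))).imC).sub ((hV.mul hN).const_mul (φ x))
  -- differentiate under the integral sign
  have key := hasDerivAt_integral_of_dominated_loc_of_deriv_le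
    (F := F) (F' := F') (x₀ := t) (bound := fun x => B0 * (1 + x ^ 2)⁻¹)
    (Metric.ball_mem_nhds t one_pos)
    (Eventually.of_forall fun s => (contF s).aestronglyMeasurable)
    hF_int
    contF'.aestronglyMeasurable
    (Eventually.of_forall fun x => fun s hs => hFb x s hs)
    (integrable_inv_one_add_sq.const_mul B0)
    (Eventually.of_forall fun x => fun s _ => h_diff x s)
  -- rewrite time derivatives using the PDE
  have A1 : ∀ y : ℝ, pdtC u t y
      = Complex.I * pdC (pdC u) t y - Complex.I * ((n t y : ℂ) * u t y) := by
    intro y; linear_combination (-Complex.I) * hequ t y + pdtC u t y * Complex.I_sq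
  have A2 : pdtC (pdC u) t = fun x => Complex.I * pdC (pdC (pdC u)) t x
        - Complex.I * ((pdR n t x : ℂ) * u t x + (n t x : ℂ) * pdC u t x) := by
    funext x
    rw [ZW.clairC hsu t x]
    show deriv (fun y => pdtC u t y) x = _
    rw [funext A1]
    exact (((ZW.hdXC s_uxx t x).const_mul Complex.I).sub
      (((ZW.hdXR hsn t x).ofRealC.mul (ZW.hdXC hsu t x)).const_mul Complex.I)).deriv
  have A3 : ∀ x : ℝ, pdtR n t x = -pdR v t x := fun x => by linarith [heqn t x]
  have A4 : ∀ x : ℝ, pdtR v t x = -(pdR n t x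
      + (pdC u t x * (starRingEnd ℂ) (u t x) + u t x * (starRingEnd ℂ) (pdC u t x)).re) := by
    intro x
    have hW : HasDerivAt (fun y => ‖u t y‖ ^ 2)
        ((pdC u t x * (starRingEnd ℂ) (u t x) + u t x * (starRingEnd ℂ) (pdC u t x)).re) x := by
      have hfun : (fun y => ‖u t y‖ ^ 2)
          = fun y => (u t y * (starRingEnd ℂ) (u t y)).re := by
        funext y; rw [Complex.sq_norm, Complex.mul_conj, Complex.ofReal_re]
      rw [hfun]
      exact ((ZW.hdXC hsu t x).mul (ZW.hdXC hsu t x).conjC).reC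
    have e : pdR (fun s y => n s y + ‖u s y‖ ^ 2) t x
        = pdR n t x + (pdC u t x * (starRingEnd ℂ) (u t x)
          + u t x * (starRingEnd ℂ) (pdC u t x)).re := by
      show deriv (fun y => n t y + ‖u t y‖ ^ 2) x = _
      exact ((ZW.hdXR hsn t x).add hW).deriv
    have h5 := heqv t x
    rw [e] at h5
    linarith
  -- the boundary term G and the density H
  set H : ℝ → ℝ := fun x =>
    2 * (deriv φ x * ‖pdC u t x‖ ^ 2)
    - (1/2) * (deriv (deriv (deriv φ)) x * ‖u t x‖ ^ 2)
    + deriv φ x * (n t x * ‖u t x‖ ^ 2)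
    + (1/2) * (deriv φ x * (n t x) ^ 2)
    + (1/2) * (deriv φ x * (v t x) ^ 2) with hHdef
  set G : ℝ → ℝ := fun x =>
    φ x * (((((pdC u t x * (starRingEnd ℂ) (pdC u t x)).re
      - (u t x * (starRingEnd ℂ) (pdC (pdC u) t x)).re)
      + n t x * (u t x * (starRingEnd ℂ) (u t x)).re)
      + (1/2) * (n t x * n t x))
      + (1/2) * (v t x * v t x))
    + (1/2) * (deriv φ x * (pdC u t x * (starRingEnd ℂ) (u t x)
        + u t x * (starRingEnd ℂ) (pdC u t x)).re
      - deriv (deriv φ) x * (u t x * (starRingEnd ℂ) (u t x)).re) with hGdef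
  have hGt : ∀ x, HasDerivAt G (F' t x + H x) x := by
    intro x
    have d0 : HasDerivAt φ (deriv φ x) x := (hdφ x).hasDerivAt
    have d1 : HasDerivAt (deriv φ) (deriv (deriv φ) x) x := (hdφ1 x).hasDerivAt
    have d2 : HasDerivAt (deriv (deriv φ)) (deriv (deriv (deriv φ)) x) x := (hdφ2 x).hasDerivAt
    have u0 := ZW.hdXC hsu t x
    have u1 := ZW.hdXC s_ux t x
    have u2 := ZW.hdXC s_uxx t x
    have n0 := ZW.hdXR hsn t x
    have v0 := ZW.hdXR hsv t x
    have hb := (d0.mul (((((u1.mul u1.conjC).reC.sub (u0.mul u2.conjC).reC).add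
        (n0.mul (u0.mul u0.conjC).reC)).add ((n0.mul n0).const_mul (1/2))).add
        ((v0.mul v0).const_mul (1/2)))).add
      (((d1.mul ((u1.mul u0.conjC).add (u0.mul u1.conjC)).reC).sub
        (d2.mul (u0.mul u0.conjC).reC)).const_mul (1/2))
    rw [hGdef]
    refine hb.congr_deriv ?_
    simp only [hF'def, hHdef, A2]
    rw [A1 x, A3 x, A4 x]
    simp only [Pi.mul_apply, Pi.add_apply, Pi.sub_apply, Complex.sq_norm, Complex.normSq_apply, map_sub, map_add,
      map_mul, Complex.mul_re, Complex.mul_im, Complex.add_re, Complex.add_im, Complex.sub_re,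
      Complex.sub_im, Complex.I_re, Complex.I_im, Complex.conj_re, Complex.conj_im,
      Complex.ofReal_re, Complex.ofReal_im]
    ring
  -- decay of G
  set CG : ℝ := P0 * ((((Bux * Bux + Bu * Buxx) + Bn * (Bu * Bu)) + (1/2) * (Bn * Bn))
      + (1/2) * (Bv * Bv))
    + (1/2) * (P1 * (Bux * Bu + Bu * Bux) + P2 * (Bu * Bu)) with hCGdef
  have hGb : ∀ x, (1 + x ^ 2) * ‖G x‖ ≤ CG := by
    intro x
    rw [Real.norm_eq_abs]
    have r1 : |(pdC u t x * (starRingEnd ℂ) (pdC u t x)).re| ≤ ‖pdC u t x‖ * ‖pdC u t x‖ :=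
      (ZW.re_le _).trans_eq (by rw [norm_mul, RCLike.norm_conj])
    have r2 : |(u t x * (starRingEnd ℂ) (pdC (pdC u) t x)).re|
        ≤ ‖u t x‖ * ‖pdC (pdC u) t x‖ :=
      (ZW.re_le _).trans_eq (by rw [norm_mul, RCLike.norm_conj])
    have r3 : |(u t x * (starRingEnd ℂ) (u t x)).re| ≤ ‖u t x‖ * ‖u t x‖ :=
      (ZW.re_le _).trans_eq (by rw [norm_mul, RCLike.norm_conj])
    have r4 : |(pdC u t x * (starRingEnd ℂ) (u t x)
        + u t x * (starRingEnd ℂ) (pdC u t x)).re|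
        ≤ ‖pdC u t x‖ * ‖u t x‖ + ‖u t x‖ * ‖pdC u t x‖ :=
      (ZW.re_le _).trans ((norm_add_le _ _).trans_eq
        (by rw [norm_mul, norm_mul, RCLike.norm_conj, RCLike.norm_conj]))
    have tri : |G x| ≤ |φ x| * (((( ‖pdC u t x‖ * ‖pdC u t x‖ + ‖u t x‖ * ‖pdC (pdC u) t x‖)
          + |n t x| * (‖u t x‖ * ‖u t x‖)) + (1/2) * (|n t x| * |n t x|))
          + (1/2) * (|v t x| * |v t x|))
        + (1/2) * (|deriv φ x| * (‖pdC u t x‖ * ‖u t x‖ + ‖u t x‖ * ‖pdC u t x‖)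
          + |deriv (deriv φ) x| * (‖u t x‖ * ‖u t x‖)) := by
      simp only [hGdef]
      refine (abs_add_le _ _).trans (add_le_add ?_ ?_)
      · rw [abs_mul]
        refine mul_le_mul_of_nonneg_left ?_ (abs_nonneg _)
        refine (abs_add_le _ _).trans (add_le_add ?_ ?_)
        · refine (abs_add_le _ _).trans (add_le_add ?_ ?_)
          · refine (abs_add_le _ _).trans (add_le_add ?_ ?_)
            · exact (ZW.abs_sub_le _ _).trans (add_le_add r1 r2)
            · rw [abs_mul]
              exact mul_le_mul_of_nonneg_left r3 (abs_nonneg _)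
          · rw [abs_mul, abs_mul, show |(1/2 : ℝ)| = 1/2 from by norm_num]
        · rw [abs_mul, abs_mul, show |(1/2 : ℝ)| = 1/2 from by norm_num]
      · rw [abs_mul, show |(1/2 : ℝ)| = 1/2 by norm_num]
        refine mul_le_mul_of_nonneg_left ?_ (by norm_num)
        refine (ZW.abs_sub_le _ _).trans (add_le_add ?_ ?_)
        · rw [abs_mul]
          exact mul_le_mul_of_nonneg_left r4 (abs_nonneg _)
        · rw [abs_mul]
          exact mul_le_mul_of_nonneg_left r3 (abs_nonneg _)
    refine ZW.wmono tri ?_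
    rw [hCGdef]
    refine ZW.wadd ?_ ?_
    · refine ZW.wmulp (hP0' x) (abs_nonneg _) ?_ (by positivity)
      refine ZW.wadd (ZW.wadd (ZW.wadd ?_ ?_) ?_) ?_
      · exact ZW.wadd
          (ZW.wmul2 (hBux t x htT) (hBux t x htT) (norm_nonneg _) (norm_nonneg _))
          (ZW.wmul2 (hBu t x htT) (hBuxx t x htT) (norm_nonneg _) (norm_nonneg _))
      · exact ZW.wmul2 (hBn t x htT)
          (ZW.wmul2 (hBu t x htT) (hBu t x htT) (norm_nonneg _) (norm_nonneg _))
          (abs_nonneg _) (by positivity)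
      · exact ZW.wmulp le_rfl (by norm_num)
          (ZW.wmul2 (hBn t x htT) (hBn t x htT) (abs_nonneg _) (abs_nonneg _)) (by positivity)
      · exact ZW.wmulp le_rfl (by norm_num)
          (ZW.wmul2 (hBv t x htT) (hBv t x htT) (abs_nonneg _) (abs_nonneg _)) (by positivity)
    · refine ZW.wmulp le_rfl (by norm_num) ?_ (by positivity)
      refine ZW.wadd ?_ ?_
      · refine ZW.wmulp (hP1' x) (abs_nonneg _) ?_ (by positivity)
        exact ZW.wadd
          (ZW.wmul2 (hBux t x htT) (hBu t x htT) (norm_nonneg _) (norm_nonneg _))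
          (ZW.wmul2 (hBu t x htT) (hBux t x htT) (norm_nonneg _) (norm_nonneg _))
      · exact ZW.wmulp (hP2' x) (abs_nonneg _)
          (ZW.wmul2 (hBu t x htT) (hBu t x htT) (norm_nonneg _) (norm_nonneg _)) (by positivity)
  obtain ⟨htop, hbot⟩ := ZV.tendsto_zero_of_decay CG hGb
  -- integrability of the five density pieces
  have ih1 : Integrable (fun x => deriv φ x * ‖pdC u t x‖ ^ 2) := by
    refine ZV.integrable_of_decay (hφ1.continuous.mul ((ZW.contXC s_ux t).norm.pow 2))
      (P1 * (Bux * Bux)) fun x => ?_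
    rw [Real.norm_eq_abs, abs_mul, abs_of_nonneg (pow_nonneg (norm_nonneg _) 2), pow_two ‖pdC u t x‖]
    exact ZW.wmulp (hP1' x) (abs_nonneg _)
      (ZW.wmul2 (hBux t x htT) (hBux t x htT) (norm_nonneg _) (norm_nonneg _)) (by positivity)
  have ih2 : Integrable (fun x => deriv (deriv (deriv φ)) x * ‖u t x‖ ^ 2) := by
    refine ZV.integrable_of_decay (hφ3.continuous.mul ((ZW.contXC hsu t).norm.pow 2))
      (P3 * (Bu * Bu)) fun x => ?_
    rw [Real.norm_eq_abs, abs_mul, abs_of_nonneg (pow_nonneg (norm_nonneg _) 2), pow_two ‖u t x‖]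
    exact ZW.wmulp (hP3' x) (abs_nonneg _)
      (ZW.wmul2 (hBu t x htT) (hBu t x htT) (norm_nonneg _) (norm_nonneg _)) (by positivity)
  have ih3 : Integrable (fun x => deriv φ x * (n t x * ‖u t x‖ ^ 2)) := by
    refine ZV.integrable_of_decay
      (hφ1.continuous.mul ((ZW.contXR hsn t).mul ((ZW.contXC hsu t).norm.pow 2)))
      (P1 * (Bn * (Bu * Bu))) fun x => ?_
    rw [Real.norm_eq_abs, abs_mul, abs_mul, abs_of_nonneg (pow_nonneg (norm_nonneg _) 2),
      pow_two ‖u t x‖]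
    refine ZW.wmulp (hP1' x) (abs_nonneg _) ?_ (by positivity)
    exact ZW.wmul2 (hBn t x htT)
      (ZW.wmul2 (hBu t x htT) (hBu t x htT) (norm_nonneg _) (norm_nonneg _))
      (abs_nonneg _) (by positivity)
  have ih4 : Integrable (fun x => deriv φ x * (n t x) ^ 2) := by
    refine ZV.integrable_of_decay (hφ1.continuous.mul ((ZW.contXR hsn t).pow 2))
      (P1 * (Bn * Bn)) fun x => ?_
    rw [Real.norm_eq_abs, abs_mul, pow_two (n t x), abs_mul]
    exact ZW.wmulp (hP1' x) (abs_nonneg _)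
      (ZW.wmul2 (hBn t x htT) (hBn t x htT) (abs_nonneg _) (abs_nonneg _)) (by positivity)
  have ih5 : Integrable (fun x => deriv φ x * (v t x) ^ 2) := by
    refine ZV.integrable_of_decay (hφ1.continuous.mul ((ZW.contXR hsv t).pow 2))
      (P1 * (Bv * Bv)) fun x => ?_
    rw [Real.norm_eq_abs, abs_mul, pow_two (v t x), abs_mul]
    exact ZW.wmulp (hP1' x) (abs_nonneg _)
      (ZW.wmul2 (hBv t x htT) (hBv t x htT) (abs_nonneg _) (abs_nonneg _)) (by positivity)
  have intH : Integrable H := by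
    simp only [hHdef]
    exact ((((ih1.const_mul 2).sub (ih2.const_mul (1/2))).add ih3).add
      (ih4.const_mul (1/2))).add (ih5.const_mul (1/2))
  -- conclude
  have hzero : ∫ x : ℝ, (F' t x + H x) = 0 :=
    ZV.integral_deriv_eq_zero G _ hGt (key.1.add intH) htop hbot
  have hsplit : ∫ x : ℝ, (F' t x + H x) = (∫ x : ℝ, F' t x) + ∫ x : ℝ, H x :=
    integral_add key.1 intH
  have hHval : ∫ x : ℝ, H x = (2 * ∫ x : ℝ, deriv φ x * ‖pdC u t x‖ ^ 2)
      - (1/2) * (∫ x : ℝ, deriv (deriv (deriv φ)) x * ‖u t x‖ ^ 2)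
      + (∫ x : ℝ, deriv φ x * (n t x * ‖u t x‖ ^ 2))
      + (1/2) * (∫ x : ℝ, deriv φ x * (n t x) ^ 2)
      + (1/2) * (∫ x : ℝ, deriv φ x * (v t x) ^ 2) := by
    simp only [hHdef]
    rw [integral_add (f := fun x => 2 * (deriv φ x * ‖pdC u t x‖ ^ 2)
        - (1/2) * (deriv (deriv (deriv φ)) x * ‖u t x‖ ^ 2)
        + deriv φ x * (n t x * ‖u t x‖ ^ 2) + (1/2) * (deriv φ x * (n t x) ^ 2))
      (g := fun x => (1/2) * (deriv φ x * (v t x) ^ 2))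
      (hf := by exact (((ih1.const_mul 2).sub (ih2.const_mul (1/2))).add ih3).add (ih4.const_mul (1/2)))
      (hg := by exact ih5.const_mul (1/2))]
    rw [integral_add (f := fun x => 2 * (deriv φ x * ‖pdC u t x‖ ^ 2)
        - (1/2) * (deriv (deriv (deriv φ)) x * ‖u t x‖ ^ 2)
        + deriv φ x * (n t x * ‖u t x‖ ^ 2))
      (g := fun x => (1/2) * (deriv φ x * (n t x) ^ 2))
      (hf := by exact ((ih1.const_mul 2).sub (ih2.const_mul (1/2))).add ih3)
      (hg := by exact ih4.const_mul (1/2))]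
    rw [integral_add (f := fun x => 2 * (deriv φ x * ‖pdC u t x‖ ^ 2)
        - (1/2) * (deriv (deriv (deriv φ)) x * ‖u t x‖ ^ 2))
      (g := fun x => deriv φ x * (n t x * ‖u t x‖ ^ 2))
      (hf := by exact (ih1.const_mul 2).sub (ih2.const_mul (1/2))) (hg := by exact ih3)]
    rw [integral_sub (f := fun x => 2 * (deriv φ x * ‖pdC u t x‖ ^ 2))
      (g := fun x => (1/2) * (deriv (deriv (deriv φ)) x * ‖u t x‖ ^ 2))
      (hf := by exact ih1.const_mul 2) (hg := by exact ih2.const_mul (1/2))]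
    rw [integral_const_mul, integral_const_mul, integral_const_mul, integral_const_mul]
  have hfin : ∫ x : ℝ, F' t x = -((2 * ∫ x : ℝ, deriv φ x * ‖pdC u t x‖ ^ 2)
      - (1/2) * (∫ x : ℝ, deriv (deriv (deriv φ)) x * ‖u t x‖ ^ 2)
      + (∫ x : ℝ, deriv φ x * (n t x * ‖u t x‖ ^ 2))
      + (1/2) * (∫ x : ℝ, deriv φ x * (n t x) ^ 2)
      + (1/2) * (∫ x : ℝ, deriv φ x * (v t x) ^ 2)) := by
    rw [← hHval]
    linarith [hzero, hsplit]
  rw [hfun_eq, ← hfin]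
  exact key.2
end
end

section
/- Let λ > 0 and let ζ : ℝ → ℝ be a continuously differentiable odd function with ζ and ζ' square integrable on ℝ. Then 2∫_ℝ ζ'(x)² dx − (1/λ²)∫_ℝ sech²(x/λ) ζ(x)² dx ≥ (3/2)∫_ℝ ζ'(x)² dx; equivalently, (1/λ²)∫_ℝ sech²(x/λ) ζ(x)² dx ≤ ½∫_ℝ ζ'(x)² dx. -/
/-!
Both integrands are even, so it suffices to show `∫₀^∞ sech²(x/λ) ζ² ≤ (λ²/2) ∫₀^∞ ζ'²` when
`ζ 0 = 0`. This is a weighted Hardy inequality. With the weight `ρ = cosh²(·/λ)`, Cauchy–Schwarz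
gives `ζ(x)² ≤ (∫₀^x ρ⁻¹)(∫₀^x ρ ζ'²) = λ tanh(x/λ) ∫₀^x ρ ζ'²`. After exchanging the order of
integration, `ρ(t) ζ'(t)²` is weighted by `∫_t^∞ λ sech²(x/λ) tanh(x/λ) dx = (λ²/2) / ρ(t)`.
-/

open MeasureTheory Real Set Filter
open scoped ENNReal Topology

theorem sq_intervalIntegral_le_integral_inv_mul_integral_mul {f ρ : ℝ → ℝ} {a b : ℝ}
    (hab : a ≤ b) (hf : Continuous f) (hρ : Continuous ρ) (hρ_pos : ∀ x, 0 < ρ x) :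
    (∫ t in a..b, f t) ^ 2 ≤ (∫ t in a..b, (ρ t)⁻¹) * ∫ t in a..b, ρ t * f t ^ 2 := by
  have hρinv : Continuous fun t => (ρ t)⁻¹ := hρ.inv₀ fun t => (hρ_pos t).ne'
  -- `s ↦ ∫ ρ⁻¹ (1 + s ρ f)²` is a nonnegative quadratic polynomial, so its discriminant is `≤ 0`.
  have hquad : ∀ s : ℝ, 0 ≤ (∫ t in a..b, ρ t * f t ^ 2) * (s * s) + 2 * (∫ t in a..b, f t) * s
      + ∫ t in a..b, (ρ t)⁻¹ := by
    intro s
    have hexpand : ∀ t, (ρ t)⁻¹ * (1 + s * ρ t * f t) ^ 2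
        = ρ t * f t ^ 2 * (s * s) + 2 * f t * s + (ρ t)⁻¹ := by
      intro t
      field_simp [(hρ_pos t).ne']
      ring
    calc 0 ≤ ∫ t in a..b, (ρ t)⁻¹ * (1 + s * ρ t * f t) ^ 2 :=
          intervalIntegral.integral_nonneg hab fun t _ =>
            mul_nonneg (inv_nonneg.2 (hρ_pos t).le) (sq_nonneg _)
      _ = _ := by
          simp_rw [hexpand]
          rw [intervalIntegral.integral_add, intervalIntegral.integral_add,
            intervalIntegral.integral_mul_const, intervalIntegral.integral_mul_const,
            intervalIntegral.integral_const_mul]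
          all_goals exact Continuous.intervalIntegrable (by fun_prop) _ _
  have hdiscrim := discrim_le_zero hquad
  rw [discrim] at hdiscrim
  linarith

theorem sq_le_integral_inv_mul_integral_mul_deriv_sq {ζ ρ : ℝ → ℝ} {a x : ℝ}
    (hζ : ContDiff ℝ 1 ζ) (hζa : ζ a = 0) (hρ : Continuous ρ) (hρ_pos : ∀ x, 0 < ρ x)
    (hax : a ≤ x) :
    ζ x ^ 2 ≤ (∫ t in a..x, (ρ t)⁻¹) * ∫ t in a..x, ρ t * deriv ζ t ^ 2 := by
  have hftc : ∫ t in a..x, deriv ζ t = ζ x := by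
    rw [intervalIntegral.integral_deriv_eq_sub (fun t _ => (hζ.differentiable one_ne_zero) t)
      ((hζ.continuous_deriv le_rfl).intervalIntegrable a x), hζa, sub_zero]
  rw [← hftc]
  exact sq_intervalIntegral_le_integral_inv_mul_integral_mul hax (hζ.continuous_deriv le_rfl) hρ
    hρ_pos

theorem lintegral_Ioi_mul_lintegral_Ioc {μ : Measure ℝ} [SFinite μ] {F G : ℝ → ℝ≥0∞}
    (hF : Measurable F) (hG : Measurable G) (a : ℝ) :
    ∫⁻ x in Ioi a, F x * ∫⁻ t in Ioc a x, G t ∂μ ∂μ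
      = ∫⁻ t in Ioi a, G t * ∫⁻ x in Ici t, F x ∂μ ∂μ := by
  let H : ℝ → ℝ → ℝ≥0∞ := fun x t =>
    {p : ℝ × ℝ | p.2 ≤ p.1}.indicator (fun p => F p.1 * G p.2) (x, t)
  have hH : Measurable (Function.uncurry H) :=
    ((hF.comp measurable_fst).mul (hG.comp measurable_snd)).indicator
      (measurableSet_le measurable_snd measurable_fst)
  have hleft (x : ℝ) : F x * ∫⁻ t in Ioc a x, G t ∂μ = ∫⁻ t in Ioi a, H x t ∂μ := by
    have : H x = (Iic x).indicator fun t => F x * G t := rfl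
    rw [this, lintegral_indicator measurableSet_Iic, Measure.restrict_restrict measurableSet_Iic,
      Iic_inter_Ioi, lintegral_const_mul _ hG]
  have hright (t : ℝ) (ht : t ∈ Ioi a) :
      G t * ∫⁻ x in Ici t, F x ∂μ = ∫⁻ x in Ioi a, H x t ∂μ := by
    have : (fun x => H x t) = (Ici t).indicator fun x => G t * F x := by
      ext x; simp only [H, indicator, mem_ofPred_eq, mem_Ici, mul_comm]
    rw [this, lintegral_indicator measurableSet_Ici, Measure.restrict_restrict measurableSet_Ici,
      inter_eq_left.2 (Ici_subset_Ioi.2 ht), lintegral_const_mul _ hF]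
  rw [setLIntegral_congr_fun measurableSet_Ioi hright]
  simp_rw [hleft]
  exact lintegral_lintegral_swap hH.aemeasurable

theorem integral_Ioi_mul_sq_le_mul_integral_Ioi_deriv_sq {ζ V ρ : ℝ → ℝ} {K : ℝ}
    (hζ : ContDiff ℝ 1 ζ) (hζ0 : ζ 0 = 0)
    (hV : Measurable V) (hV_nonneg : ∀ x, 0 ≤ V x) (hρ : Continuous ρ) (hρ_pos : ∀ x, 0 < ρ x)
    (hK : 0 ≤ K)
    (htail : ∀ t > 0, ∫⁻ x in Ioi t, ENNReal.ofReal (V x * ∫ s in 0..x, (ρ s)⁻¹)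
      ≤ ENNReal.ofReal (K / ρ t))
    (hζ' : IntegrableOn (fun x => deriv ζ x ^ 2) (Ioi 0)) :
    ∫ x in Ioi 0, V x * ζ x ^ 2 ≤ K * ∫ x in Ioi 0, deriv ζ x ^ 2 := by
  have hζc : Continuous ζ := hζ.continuous
  have hζ'c : Continuous (deriv ζ) := hζ.continuous_deriv le_rfl
  set R : ℝ → ℝ := fun x => ∫ s in 0..x, (ρ s)⁻¹
  have hR : Continuous R := intervalIntegral.continuous_primitive
    (fun _ _ => (hρ.inv₀ fun t => (hρ_pos t).ne').intervalIntegrable _ _) 0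
  have hpoint : ∀ x ∈ Ioi (0 : ℝ), ENNReal.ofReal (V x * ζ x ^ 2)
      ≤ ENNReal.ofReal (V x * R x) * ∫⁻ t in Ioc 0 x, ENNReal.ofReal (ρ t * deriv ζ t ^ 2) := by
    intro x hx
    have hI : 0 ≤ ∫ t in (0 : ℝ)..x, ρ t * deriv ζ t ^ 2 :=
      intervalIntegral.integral_nonneg hx.le fun t _ => by have := hρ_pos t; positivity
    rw [← ofReal_integral_eq_lintegral_ofReal (by fun_prop : Continuous _).integrableOn_Ioc
        (ae_of_all _ fun t => by have := hρ_pos t; positivity),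
      ← intervalIntegral.integral_of_le hx.le, ← ENNReal.ofReal_mul' hI, mul_assoc]
    gcongr
    · exact hV_nonneg x
    · exact sq_le_integral_inv_mul_integral_mul_deriv_sq hζ hζ0 hρ hρ_pos hx.le
  have hlintegral : ∫⁻ x in Ioi 0, ENNReal.ofReal (V x * ζ x ^ 2)
      ≤ ENNReal.ofReal (K * ∫ x in Ioi 0, deriv ζ x ^ 2) :=
    calc _ ≤ ∫⁻ x in Ioi 0, ENNReal.ofReal (V x * R x)
            * ∫⁻ t in Ioc 0 x, ENNReal.ofReal (ρ t * deriv ζ t ^ 2) :=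
          setLIntegral_mono' measurableSet_Ioi hpoint
      _ = ∫⁻ t in Ioi 0, ENNReal.ofReal (ρ t * deriv ζ t ^ 2)
            * ∫⁻ x in Ici t, ENNReal.ofReal (V x * R x) :=
          lintegral_Ioi_mul_lintegral_Ioc (by fun_prop) (by fun_prop) 0
      _ ≤ ∫⁻ t in Ioi 0, ENNReal.ofReal (ρ t * deriv ζ t ^ 2) * ENNReal.ofReal (K / ρ t) := by
          refine setLIntegral_mono' measurableSet_Ioi fun t ht => ?_
          rw [setLIntegral_congr Ioi_ae_eq_Ici.symm]
          gcongr
          exact htail t ht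
      _ = ∫⁻ t in Ioi 0, ENNReal.ofReal (K * deriv ζ t ^ 2) := by
          refine setLIntegral_congr_fun measurableSet_Ioi fun t _ => ?_
          rw [← ENNReal.ofReal_mul (by have := hρ_pos t; positivity)]
          field_simp [(hρ_pos t).ne']
      _ = ENNReal.ofReal (K * ∫ x in Ioi 0, deriv ζ x ^ 2) := by
          rw [← integral_const_mul, ofReal_integral_eq_lintegral_ofReal (hζ'.const_mul K)
            (ae_of_all _ fun t => by positivity)]
  rw [integral_eq_lintegral_of_nonneg_ae (ae_of_all _ fun x => by have := hV_nonneg x; positivity)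
    (by fun_prop : Measurable fun x => V x * ζ x ^ 2).aestronglyMeasurable]
  exact ENNReal.toReal_le_of_le_ofReal
    (mul_nonneg hK (integral_nonneg fun x => sq_nonneg _)) hlintegral

theorem deriv_neg_eq_of_odd {𝕜 F : Type*} [NontriviallyNormedField 𝕜] [NormedAddCommGroup F]
    [NormedSpace 𝕜 F] {f : 𝕜 → F} (hf : ∀ x, f (-x) = -f x) (x : 𝕜) :
    deriv f (-x) = deriv f x := by
  have h := deriv_comp_neg (f := f) (x := x)
  rw [funext hf, deriv.fun_neg] at h
  exact neg_inj.1 h.symm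

theorem integral_eq_two_mul_integral_Ioi_of_even {f : ℝ → ℝ} (hf : ∀ x, f (-x) = f x) :
    ∫ x, f x = 2 * ∫ x in Ioi 0, f x := by
  rw [← integral_comp_abs]
  congr 1 with x
  rcases abs_choice x with h | h <;> rw [h]
  exact (hf x).symm

namespace Real

theorem tendsto_cosh_atTop : Tendsto cosh atTop atTop := by
  refine tendsto_atTop_mono (fun x => ?_) (tendsto_exp_atTop.atTop_div_const two_pos)
  rw [cosh_eq]
  linarith [exp_pos (-x)]

theorem hasDerivAt_mul_tanh_div {lam : ℝ} (hlam : lam ≠ 0) (x : ℝ) :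
    HasDerivAt (fun y => lam * tanh (y / lam)) (cosh (x / lam) ^ 2)⁻¹ x := by
  have hdiv : HasDerivAt (fun y => y / lam) lam⁻¹ x := by
    simpa using (hasDerivAt_id' x).div_const lam
  have h := (((hasDerivAt_sinh _).comp x hdiv).fun_div ((hasDerivAt_cosh _).comp x hdiv)
    (cosh_pos _).ne').const_mul lam
  simp only [Function.comp_def, ← tanh_eq_sinh_div_cosh] at h
  refine h.congr_deriv ?_
  have := cosh_pos (x / lam)
  field_simp
  linear_combination cosh_sq_sub_sinh_sq (x / lam)

theorem intervalIntegral_inv_cosh_div_sq {lam : ℝ} (hlam : lam ≠ 0) (x : ℝ) :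
    ∫ s in 0..x, (cosh (s / lam) ^ 2)⁻¹ = lam * tanh (x / lam) := by
  rw [intervalIntegral.integral_eq_sub_of_hasDerivAt (fun y _ => hasDerivAt_mul_tanh_div hlam y)
    (Continuous.intervalIntegrable
      ((by fun_prop : Continuous fun s => cosh (s / lam) ^ 2).inv₀ fun s => by positivity) _ _)]
  simp

theorem hasDerivAt_inv_cosh_div_sq {lam : ℝ} (hlam : lam ≠ 0) (x : ℝ) :
    HasDerivAt (fun y => -(lam ^ 2 / 2) * (cosh (y / lam))⁻¹ ^ 2)
      ((cosh (x / lam))⁻¹ ^ 2 * (lam * tanh (x / lam))) x := by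
  have hdiv : HasDerivAt (fun y => y / lam) lam⁻¹ x := by
    simpa using (hasDerivAt_id' x).div_const lam
  have h := ((((hasDerivAt_cosh _).comp x hdiv).fun_inv (cosh_pos _).ne').fun_pow 2).const_mul
    (-(lam ^ 2 / 2))
  simp only [Function.comp_def] at h
  refine h.congr_deriv ?_
  have := cosh_pos (x / lam)
  rw [tanh_eq_sinh_div_cosh]
  norm_num
  field_simp

theorem lintegral_Ioi_inv_cosh_div_sq_mul_tanh {lam : ℝ} (hlam : 0 < lam) {t : ℝ} (ht : 0 ≤ t) :
    ∫⁻ x in Ioi t, ENNReal.ofReal ((cosh (x / lam))⁻¹ ^ 2 * (lam * tanh (x / lam)))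
      = ENNReal.ofReal (lam ^ 2 / 2 / cosh (t / lam) ^ 2) := by
  have hderiv : ∀ x ∈ Ici t, HasDerivAt (fun y => -(lam ^ 2 / 2) * (cosh (y / lam))⁻¹ ^ 2)
      ((cosh (x / lam))⁻¹ ^ 2 * (lam * tanh (x / lam))) x :=
    fun x _ => hasDerivAt_inv_cosh_div_sq hlam.ne' x
  have hnonneg : ∀ x ∈ Ioi t, 0 ≤ (cosh (x / lam))⁻¹ ^ 2 * (lam * tanh (x / lam)) := by
    intro x hx
    have : 0 ≤ tanh (x / lam) := by
      rw [tanh_eq_sinh_div_cosh]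
      exact div_nonneg (sinh_nonneg_iff.2 (div_nonneg (ht.trans hx.out.le) hlam.le))
        (cosh_pos _).le
    positivity
  have hlim : Tendsto (fun y => -(lam ^ 2 / 2) * (cosh (y / lam))⁻¹ ^ 2) atTop (𝓝 0) := by
    have := ((tendsto_pow_atTop two_ne_zero).comp
      (tendsto_cosh_atTop.comp (tendsto_id.atTop_div_const hlam))).inv_tendsto_atTop
    simpa using this.const_mul (-(lam ^ 2 / 2))
  rw [← ofReal_integral_eq_lintegral_ofReal (integrableOn_Ioi_deriv_of_nonneg' hderiv hnonneg hlim)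
    ((ae_restrict_iff' measurableSet_Ioi).2 (ae_of_all _ hnonneg)),
    integral_Ioi_of_hasDerivAt_of_nonneg' hderiv hnonneg hlim]
  congr 1
  field_simp
  ring

end Real

theorem integral_Ioi_inv_cosh_div_sq_mul_sq_le {lam : ℝ} (hlam : 0 < lam) {ζ : ℝ → ℝ}
    (hζ : ContDiff ℝ 1 ζ) (hζ0 : ζ 0 = 0)
    (hζ' : IntegrableOn (fun x => deriv ζ x ^ 2) (Ioi 0)) :
    ∫ x in Ioi 0, (cosh (x / lam))⁻¹ ^ 2 * ζ x ^ 2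
      ≤ lam ^ 2 / 2 * ∫ x in Ioi 0, deriv ζ x ^ 2 := by
  refine integral_Ioi_mul_sq_le_mul_integral_Ioi_deriv_sq hζ hζ0 (by fun_prop)
    (fun x => by positivity)
    (by fun_prop : Continuous fun x => cosh (x / lam) ^ 2) (fun x => by positivity)
    (by positivity) (fun t ht => ?_) hζ'
  simp_rw [intervalIntegral_inv_cosh_div_sq hlam.ne']
  exact (lintegral_Ioi_inv_cosh_div_sq_mul_tanh hlam ht.le).le

theorem coercivity_of_bilinear_form_general
    (lam : ℝ) (hlam : 0 < lam) (ζ : ℝ → ℝ)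
    (hC1 : ContDiff ℝ 1 ζ)
    (hodd : ∀ x : ℝ, ζ (-x) = -ζ x)
    (hL2' : Integrable fun x : ℝ => deriv ζ x ^ 2) :
    ((2 * ∫ x : ℝ, deriv ζ x ^ 2)
      - (1 / lam ^ 2) * (∫ x : ℝ, ((Real.cosh (x / lam))⁻¹) ^ 2 * ζ x ^ 2)
      ≥ (3 / 2) * ∫ x : ℝ, deriv ζ x ^ 2) ∧
    ((1 / lam ^ 2) * (∫ x : ℝ, ((Real.cosh (x / lam))⁻¹) ^ 2 * ζ x ^ 2)
      ≤ (1 / 2) * ∫ x : ℝ, deriv ζ x ^ 2) := by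
  have hζ0 : ζ 0 = 0 := self_eq_neg.1 (by simpa using hodd 0)
  have hpot : ∫ x, (cosh (x / lam))⁻¹ ^ 2 * ζ x ^ 2
      = 2 * ∫ x in Ioi 0, (cosh (x / lam))⁻¹ ^ 2 * ζ x ^ 2 :=
    integral_eq_two_mul_integral_Ioi_of_even fun x => by rw [neg_div, cosh_neg, hodd, neg_sq]
  have hkin : ∫ x, deriv ζ x ^ 2 = 2 * ∫ x in Ioi 0, deriv ζ x ^ 2 :=
    integral_eq_two_mul_integral_Ioi_of_even fun x => by rw [deriv_neg_eq_of_odd hodd]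
  have hhalf := integral_Ioi_inv_cosh_div_sq_mul_sq_le hlam hC1 hζ0 hL2'.integrableOn
  have hbound : 1 / lam ^ 2 * ∫ x, (cosh (x / lam))⁻¹ ^ 2 * ζ x ^ 2
      ≤ 1 / 2 * ∫ x, deriv ζ x ^ 2 := by
    rw [hpot, hkin, div_mul_eq_mul_div, one_mul, div_le_iff₀ (by positivity)]
    linarith
  exact ⟨by linarith, hbound⟩

/-- coercivity of the bilinear form
`𝓑(ζ) = 2∫ζ'² − (1/λ²)∫sech²(x/λ)ζ²` on odd functions:
`𝓑(ζ) ≥ (3/2)∫ζ'²`, equivalently `(1/λ²)∫sech²(x/λ)ζ² ≤ ½∫ζ'²`. -/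
theorem coercivity_of_bilinear_form
    (lam : ℝ) (hlam : 0 < lam) (ζ : ℝ → ℝ)
    (hC1 : ContDiff ℝ 1 ζ)
    (hodd : ∀ x : ℝ, ζ (-x) = -ζ x)
    (hL2 : Integrable fun x : ℝ => ζ x ^ 2)
    (hL2' : Integrable fun x : ℝ => deriv ζ x ^ 2) :
    ((2 * ∫ x : ℝ, deriv ζ x ^ 2)
      - (1 / lam ^ 2) * (∫ x : ℝ, ((Real.cosh (x / lam))⁻¹) ^ 2 * ζ x ^ 2)
      ≥ (3 / 2) * ∫ x : ℝ, deriv ζ x ^ 2) ∧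
    ((1 / lam ^ 2) * (∫ x : ℝ, ((Real.cosh (x / lam))⁻¹) ^ 2 * ζ x ^ 2)
      ≤ (1 / 2) * ∫ x : ℝ, deriv ζ x ^ 2) :=
  coercivity_of_bilinear_form_general lam hlam ζ hC1 hodd hL2'
end
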